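/- arXiv:2604.20907 — 7 statements merged into one kernel-verified Lean document; each statement's English description precedes it below -/
import Mathlib

section
/- Let p be a symmetric probability tensor of order q satisfying the constant-degree condition with degree d, and let Q = DΠ be the associated signal matrix. Then for every vector v ∈ ℝ^r one has ⟨v, Q v⟩_π ≥ −(d/(q−1))·‖v‖_π². -/
open Matrix Finset

/-- For a symmetric probability tensor `p` of order `q ≥ 2` satisfying the
constant-degree condition with degree `d`, the signal matrix `Q = D Π` satisfies
`⟨v, Q v⟩_π ≥ -(d/(q-1)) ‖v‖_π²` for every `v : ℝ^r`. -/
theorem statement0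
    (r : ℕ) (hr : 1 ≤ r)
    (π : Fin r → ℝ) (hπpos : ∀ i, 0 < π i) (hπsum : ∑ i, π i = 1)
    (q : ℕ) (hq : 2 ≤ q)
    (p : (Fin q → Fin r) → ℝ)
    (hp_nonneg : ∀ g, 0 ≤ p g)
    (hp_symm : ∀ (g : Fin q → Fin r) (s : Equiv.Perm (Fin q)), p (g ∘ s) = p g)
    (d : ℝ) (hd : 0 ≤ d)
    (hdeg : ∀ i : Fin r,
      (∑ g : Fin q → Fin r,
        if g ⟨0, by omega⟩ = i then
          p g * ∏ ℓ ∈ Finset.univ.erase (⟨0, by omega⟩ : Fin q), π (g ℓ)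
        else 0) = d)
    (D : Matrix (Fin r) (Fin r) ℝ)
    (hD : ∀ i j, D i j =
      ∑ g : Fin q → Fin r,
        if g ⟨0, by omega⟩ = i ∧ g ⟨1, by omega⟩ = j then
          p g *
            ∏ ℓ ∈ (Finset.univ.erase (⟨0, by omega⟩ : Fin q)).erase (⟨1, by omega⟩ : Fin q),
              π (g ℓ)
        else 0)
    (Q : Matrix (Fin r) (Fin r) ℝ) (hQ : Q = D * Matrix.diagonal π)
    (v : Fin r → ℝ) :
    ∑ a, π a * v a * Q.mulVec v a ≥ -(d / ((q : ℝ) - 1)) * ∑ a, π a * v a * v a := by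
  have hq0 : 0 < q := by omega
  have hq1' : 1 < q := by omega
  have hq1 : (0:ℝ) < (q:ℝ) - 1 := by
    have : (2:ℝ) ≤ (q:ℝ) := by exact_mod_cast hq
    linarith
  set z0 : Fin q := ⟨0, hq0⟩ with hz0
  set z1 : Fin q := ⟨1, hq1'⟩ with hz1
  have hne01 : z0 ≠ z1 := by simp [hz0, hz1, Fin.ext_iff]
  have hdeg' : ∀ i : Fin r,
      (∑ g : Fin q → Fin r,
        if g z0 = i then p g * ∏ ℓ ∈ Finset.univ.erase z0, π (g ℓ) else 0) = d := hdeg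
  have hD' : ∀ a b, D a b =
      ∑ g : Fin q → Fin r,
        if g z0 = a ∧ g z1 = b then
          p g * ∏ ℓ ∈ (Finset.univ.erase z0).erase z1, π (g ℓ)
        else 0 := hD
  set E : Fin q → Fin q → ℝ := fun j k =>
    ∑ g : Fin q → Fin r, p g * (∏ ℓ, π (g ℓ)) * (v (g j) * v (g k)) with hE
  -- symmetry of E under permutations
  have key : ∀ (s : Equiv.Perm (Fin q)) (j k : Fin q), E (s j) (s k) = E j k := by
    intro s j k
    simp only [hE]
    rw [← Equiv.sum_comp (Equiv.arrowCongr s.symm (Equiv.refl (Fin r)))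
        (fun g => p g * (∏ ℓ, π (g ℓ)) * (v (g j) * v (g k)))]
    apply Finset.sum_congr rfl
    intro g _
    have hg : (Equiv.arrowCongr s.symm (Equiv.refl (Fin r))) g = g ∘ s := by
      funext ℓ; simp [Equiv.arrowCongr]
    rw [hg]
    have h1 : p (g ∘ s) = p g := hp_symm g s
    have h2 : (∏ ℓ, π ((g ∘ s) ℓ)) = ∏ ℓ, π (g ℓ) :=
      Equiv.prod_comp s (fun ℓ => π (g ℓ))
    simp only [Function.comp] at h1 h2 ⊢
    rw [h1, h2]
  have hdiag : ∀ j, E j j = E z0 z0 := by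
    intro j
    have h := key (Equiv.swap z0 j) z0 z0
    rwa [Equiv.swap_apply_left] at h
  have hoff : ∀ j k, j ≠ k → E j k = E z0 z1 := by
    intro j k hjk
    set s1 : Equiv.Perm (Fin q) := Equiv.swap z0 j with hs1
    have hz0k : z0 ≠ s1.symm k := by
      intro hcontra
      apply hjk
      have h := congrArg s1 hcontra
      rw [Equiv.apply_symm_apply] at h
      rw [hs1, Equiv.swap_apply_left] at h
      exact h
    have h := key ((Equiv.swap z1 (s1.symm k)).trans s1) z0 z1
    have h0 : ((Equiv.swap z1 (s1.symm k)).trans s1) z0 = j := by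
      rw [Equiv.trans_apply, Equiv.swap_apply_of_ne_of_ne hne01 hz0k, hs1,
        Equiv.swap_apply_left]
    have h1 : ((Equiv.swap z1 (s1.symm k)).trans s1) z1 = k := by
      rw [Equiv.trans_apply, Equiv.swap_apply_left, Equiv.apply_symm_apply]
    rw [h0, h1] at h
    exact h
  -- value of the diagonal term
  have hT : E z0 z0 = d * ∑ a, π a * v a * v a := by
    have step1 : E z0 z0 = ∑ i : Fin r, ∑ g : Fin q → Fin r,
        if g z0 = i then
          π i * v i * v i * (p g * ∏ ℓ ∈ Finset.univ.erase z0, π (g ℓ))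
        else 0 := by
      rw [hE, Finset.sum_comm]
      apply Finset.sum_congr rfl
      intro g _
      rw [Finset.sum_ite_eq Finset.univ (g z0)
        (fun i => π i * v i * v i * (p g * ∏ ℓ ∈ Finset.univ.erase z0, π (g ℓ)))]
      simp only [Finset.mem_univ, if_true]
      rw [← Finset.mul_prod_erase Finset.univ (fun ℓ => π (g ℓ)) (Finset.mem_univ z0)]
      ring
    rw [step1]
    have step2 : ∀ i : Fin r,
        (∑ g : Fin q → Fin r,
          if g z0 = i then
            π i * v i * v i * (p g * ∏ ℓ ∈ Finset.univ.erase z0, π (g ℓ))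
          else 0) = π i * v i * v i * d := by
      intro i
      rw [← hdeg' i, Finset.mul_sum]
      apply Finset.sum_congr rfl
      intro g _
      split <;> ring
    rw [Finset.sum_congr rfl (fun i _ => step2 i)]
    rw [Finset.mul_sum]
    apply Finset.sum_congr rfl
    intro a _
    ring
  -- the quadratic form equals the off-diagonal term
  have hmv : ∀ a, Q.mulVec v a = ∑ b, D a b * (π b * v b) := by
    intro a
    rw [hQ]
    simp [Matrix.mulVec, dotProduct, Matrix.mul_apply, Matrix.diagonal, mul_assoc,
      Finset.sum_ite_eq]
  have hLHS : ∑ a, π a * v a * Q.mulVec v a = E z0 z1 := by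
    have step1 : ∀ a, π a * v a * Q.mulVec v a
        = ∑ g : Fin q → Fin r, ∑ b : Fin r,
            if g z0 = a ∧ g z1 = b then
              π a * v a *
                (p g * (∏ ℓ ∈ (Finset.univ.erase z0).erase z1, π (g ℓ)) * (π b * v b))
            else 0 := by
      intro a
      rw [hmv a, Finset.mul_sum, Finset.sum_comm]
      apply Finset.sum_congr rfl
      intro b _
      rw [hD' a b, Finset.sum_mul, Finset.mul_sum]
      apply Finset.sum_congr rfl
      intro g _
      split <;> ring
    rw [Finset.sum_congr rfl (fun a _ => step1 a), Finset.sum_comm, hE]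
    apply Finset.sum_congr rfl
    intro g _
    simp only [ite_and]
    rw [Finset.sum_comm]
    simp only [Finset.sum_ite_eq, Finset.mem_univ, if_true]
    have hz1mem : z1 ∈ Finset.univ.erase z0 :=
      Finset.mem_erase.2 ⟨Ne.symm hne01, Finset.mem_univ z1⟩
    rw [← Finset.mul_prod_erase Finset.univ (fun ℓ => π (g ℓ)) (Finset.mem_univ z0),
      ← Finset.mul_prod_erase (Finset.univ.erase z0) (fun ℓ => π (g ℓ)) hz1mem]
    ring
  -- positivity of the square expansion
  have hpos : (0:ℝ) ≤ ∑ g : Fin q → Fin r,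
      p g * (∏ ℓ, π (g ℓ)) * (∑ j, v (g j))^2 := by
    apply Finset.sum_nonneg
    intro g _
    exact mul_nonneg
      (mul_nonneg (hp_nonneg g) (Finset.prod_nonneg fun ℓ _ => (hπpos (g ℓ)).le))
      (sq_nonneg _)
  have hexpand : (∑ g : Fin q → Fin r, p g * (∏ ℓ, π (g ℓ)) * (∑ j, v (g j))^2)
      = ∑ j : Fin q, ∑ k : Fin q, E j k := by
    have step : ∀ g : Fin q → Fin r,
        p g * (∏ ℓ, π (g ℓ)) * (∑ j, v (g j))^2
        = ∑ j : Fin q, ∑ k : Fin q, p g * (∏ ℓ, π (g ℓ)) * (v (g j) * v (g k)) := by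
      intro g
      rw [sq, Finset.sum_mul_sum, Finset.mul_sum]
      apply Finset.sum_congr rfl
      intro j _
      rw [Finset.mul_sum]
    rw [Finset.sum_congr rfl (fun g _ => step g), Finset.sum_comm, hE]
    apply Finset.sum_congr rfl
    intro j _
    rw [Finset.sum_comm]
  have hsum : (∑ j : Fin q, ∑ k : Fin q, E j k)
      = (q:ℝ) * (E z0 z0 + ((q:ℝ) - 1) * E z0 z1) := by
    have hrow : ∀ j : Fin q, (∑ k : Fin q, E j k)
        = E z0 z0 + ((q:ℝ) - 1) * E z0 z1 := by
      intro j
      have hterm : ∀ k : Fin q, E j k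
          = (if k = j then E z0 z0 - E z0 z1 else 0) + E z0 z1 := by
        intro k
        by_cases h : k = j
        · subst h
          simp [hdiag k]
        · simp [h, hoff j k (fun hc => h hc.symm)]
      rw [Finset.sum_congr rfl (fun k _ => hterm k), Finset.sum_add_distrib,
        Finset.sum_ite_eq' Finset.univ j (fun _ => E z0 z0 - E z0 z1),
        Finset.sum_const, Finset.card_univ, Fintype.card_fin, nsmul_eq_mul]
      simp only [Finset.mem_univ, if_true]
      ring
    rw [Finset.sum_congr rfl (fun j _ => hrow j), Finset.sum_const, Finset.card_univ,
      Fintype.card_fin, nsmul_eq_mul]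
  have hqR : (0:ℝ) < (q:ℝ) := by exact_mod_cast hq0
  have h1 : (0:ℝ) ≤ (q:ℝ) * (E z0 z0 + ((q:ℝ) - 1) * E z0 z1) := by
    rw [← hsum, ← hexpand]; exact hpos
  have h2 : (0:ℝ) ≤ E z0 z0 + ((q:ℝ) - 1) * E z0 z1 := by
    by_contra hcon
    push_neg at hcon
    nlinarith
  rw [hT] at h2
  rw [ge_iff_le, hLHS]
  have heq : -(d / ((q:ℝ) - 1)) * (∑ a, π a * v a * v a)
      = (-(d * ∑ a, π a * v a * v a)) / ((q:ℝ) - 1) := by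
    ring
  rw [heq, div_le_iff₀ hq1]
  nlinarith
end

section
/- For every integer k ≥ 0, the parity-time symmetry D_w B^k J = J (Bᵀ)^k D_w holds, where Bᵀ denotes the transpose of B. -/
open Matrix Finset

/-- The type of oriented hyperedges `x → e` of a non-uniform hypergraph whose layer-`k`
hyperedge set is `E k` (hyperedges carry their layer label). -/
abbrev OEdge (n K : ℕ) (E : Fin K → Finset (Finset (Fin n))) : Type :=
  {pair : Fin n × Σ k : Fin K, {e : Finset (Fin n) // e ∈ E k} // pair.1 ∈ pair.2.2.1}

/-- The weighted non-backtracking matrix `B`. -/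
noncomputable def Bmat (n K : ℕ) (w : Fin K → ℝ) (E : Fin K → Finset (Finset (Fin n))) :
    Matrix (OEdge n K E) (OEdge n K E) ℝ := fun xe yf =>
  if yf.1.1 ∈ xe.1.2.2.1 ∧ yf.1.1 ≠ xe.1.1 ∧ yf.1.2 ≠ xe.1.2 then w yf.1.2.1 else 0

/-- The edge-reversal operator `J`. -/
noncomputable def Jmat (n K : ℕ) (E : Fin K → Finset (Finset (Fin n))) :
    Matrix (OEdge n K E) (OEdge n K E) ℝ := fun xe yf =>
  if xe.1.2 = yf.1.2 ∧ xe.1.1 ≠ yf.1.1 then 1 else 0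

/-- The layer-`k` edge-reversal operator `J_k`. -/
noncomputable def Jlayer (n K : ℕ) (E : Fin K → Finset (Finset (Fin n))) (k : Fin K) :
    Matrix (OEdge n K E) (OEdge n K E) ℝ := fun xe yf =>
  if xe.1.2 = yf.1.2 ∧ xe.1.1 ≠ yf.1.1 ∧ xe.1.2.1 = k then 1 else 0

/-- The layer-`k` diagonal indicator matrix `I_k`. -/
noncomputable def Ilayer (n K : ℕ) (E : Fin K → Finset (Finset (Fin n))) (k : Fin K) :
    Matrix (OEdge n K E) (OEdge n K E) ℝ := fun xe yf =>
  if xe = yf ∧ xe.1.2.1 = k then 1 else 0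

/-- The layer-`k` start matrix `S_k`. -/
noncomputable def Smat (n K : ℕ) (E : Fin K → Finset (Finset (Fin n))) (k : Fin K) :
    Matrix (Fin n) (OEdge n K E) ℝ := fun x ye =>
  if x = ye.1.1 ∧ ye.1.2.1 = k then 1 else 0

/-- The layer-`k` terminal matrix `T_k`. -/
noncomputable def Tmat (n K : ℕ) (E : Fin K → Finset (Finset (Fin n))) (k : Fin K) :
    Matrix (Fin n) (OEdge n K E) ℝ := fun x ye =>
  if x ∈ ye.1.2.2.1 ∧ x ≠ ye.1.1 ∧ ye.1.2.1 = k then 1 else 0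

/-- The layer-`k` adjacency matrix `A_k`. -/
noncomputable def Amat (n K : ℕ) (E : Fin K → Finset (Finset (Fin n))) (k : Fin K) :
    Matrix (Fin n) (Fin n) ℝ := fun x y =>
  ((((E k).filter (fun e => x ∈ e ∧ y ∈ e ∧ x ≠ y)).card : ℕ) : ℝ)

/-- The layer-`k` degree matrix `D_k`. -/
noncomputable def Dmat (n K : ℕ) (E : Fin K → Finset (Finset (Fin n))) (k : Fin K) :
    Matrix (Fin n) (Fin n) ℝ :=
  Matrix.diagonal (fun x => ((((E k).filter (fun e => x ∈ e)).card : ℕ) : ℝ))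

/-- The reduced non-backtracking matrix `B̃` of size `2Kn`, with `(k,ℓ)` block
`w_ℓ [[0, D_k - δ_{kℓ}I], [-(q_ℓ-1)δ_{kℓ}I, A_k - (q_ℓ-2)δ_{kℓ}I]]`. -/
noncomputable def tildeB (n K : ℕ) (q : Fin K → ℕ) (w : Fin K → ℝ)
    (E : Fin K → Finset (Finset (Fin n))) :
    Matrix (Fin K × Fin 2 × Fin n) (Fin K × Fin 2 × Fin n) ℝ := fun kax lby =>
  w lby.1 *
    (if kax.2.1 = 0 then
      (if lby.2.1 = 0 then 0
       else Dmat n K E kax.1 kax.2.2 lby.2.2 -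
         (if kax.1 = lby.1 ∧ kax.2.2 = lby.2.2 then 1 else 0))
     else
      (if lby.2.1 = 0 then
         -(((q lby.1 : ℝ) - 1)) * (if kax.1 = lby.1 ∧ kax.2.2 = lby.2.2 then 1 else 0)
       else Amat n K E kax.1 kax.2.2 lby.2.2 -
         ((q lby.1 : ℝ) - 2) * (if kax.1 = lby.1 ∧ kax.2.2 = lby.2.2 then 1 else 0)))

section AuxPT

-- auxiliary defs
noncomputable def Bcirc (n K : ℕ) (E : Fin K → Finset (Finset (Fin n))) :
    Matrix (OEdge n K E) (OEdge n K E) ℝ := fun xe yf =>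
  if yf.1.1 ∈ xe.1.2.2.1 ∧ yf.1.1 ≠ xe.1.1 ∧ yf.1.2 ≠ xe.1.2 then 1 else 0

noncomputable def Wdiag (n K : ℕ) (w : Fin K → ℝ) (E : Fin K → Finset (Finset (Fin n))) :
    Matrix (OEdge n K E) (OEdge n K E) ℝ :=
  Matrix.diagonal (fun xe : OEdge n K E => w xe.1.2.1)

variable {n K : ℕ} {w : Fin K → ℝ} {E : Fin K → Finset (Finset (Fin n))}

lemma B_eq (w : Fin K → ℝ) : Bmat n K w E = Bcirc n K E * Wdiag n K w E := by
  ext xe yf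
  rw [Wdiag, Matrix.mul_diagonal]
  simp only [Bmat, Bcirc]
  split_ifs <;> simp

lemma W_transpose : (Wdiag n K w E)ᵀ = Wdiag n K w E := Matrix.diagonal_transpose _

lemma Jmat_transpose : (Jmat n K E)ᵀ = Jmat n K E := by
  ext xe yf
  simp only [Matrix.transpose_apply, Jmat]
  congr 1
  rw [eq_iff_iff]
  constructor <;> rintro ⟨h1, h2⟩ <;> exact ⟨h1.symm, h2.symm⟩

lemma WJ_comm : Wdiag n K w E * Jmat n K E = Jmat n K E * Wdiag n K w E := by
  ext xe yf
  rw [Wdiag, Matrix.diagonal_mul, Matrix.mul_diagonal]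
  by_cases h : xe.1.2 = yf.1.2 ∧ xe.1.1 ≠ yf.1.1
  · rw [Jmat, if_pos h, h.1]; ring
  · rw [Jmat, if_neg h]; ring

def oEquiv (n K : ℕ) (E : Fin K → Finset (Finset (Fin n))) :
    (Σ σ : (Σ k : Fin K, {e : Finset (Fin n) // e ∈ E k}), {z : Fin n // z ∈ σ.2.1}) ≃
      OEdge n K E where
  toFun s := ⟨(s.2.1, s.1), s.2.2⟩
  invFun p := ⟨p.1.2, ⟨p.1.1, p.2⟩⟩
  left_inv s := rfl
  right_inv p := rfl

lemma subtype_sum_attach (s : Finset (Fin n)) [inst : Fintype {z : Fin n // z ∈ s}]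
    (g : {z : Fin n // z ∈ s} → ℝ) :
    ∑ z : {z : Fin n // z ∈ s}, g z = ∑ z ∈ s.attach, g z := by
  rw [Subsingleton.elim inst (FinsetCoe.fintype s)]
  rfl

lemma MS_apply (w : Fin K → ℝ) (xe yf : OEdge n K E) :
    (Wdiag n K w E * Bcirc n K E * (Wdiag n K w E * Jmat n K E)) xe yf =
      w xe.1.2.1 * w yf.1.2.1 *
        (if yf.1.2 ≠ xe.1.2 then
          ((yf.1.2.2.1.filter
              (fun z => z ∈ xe.1.2.2.1 ∧ z ≠ xe.1.1 ∧ z ≠ yf.1.1)).card : ℝ)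
         else 0) := by
  classical
  rw [Matrix.mul_apply, ← Equiv.sum_comp (oEquiv n K E), ← Finset.univ_sigma_univ,
    Finset.sum_sigma]
  rw [Fintype.sum_eq_single yf.1.2 (fun σ hσ => Finset.sum_eq_zero (fun z _ => by
    simp only [oEquiv, Equiv.coe_fn_mk, Wdiag, Matrix.mul_diagonal, Matrix.diagonal_mul,
      Bcirc, Jmat]
    split_ifs <;> simp_all))]
  simp only [oEquiv, Equiv.coe_fn_mk, Wdiag, Matrix.diagonal_mul, Bcirc, Jmat]
  by_cases hef : yf.1.2 = xe.1.2
  · rw [if_neg (not_not_intro hef), mul_zero]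
    apply Finset.sum_eq_zero
    intro z _
    rw [if_neg (fun hc => hc.2.2 hef)]
    ring
  · rw [if_pos hef]
    have h1 : ((yf : Fin n × Σ k : Fin K, {e // e ∈ E k})).2 ≠
        ((xe : Fin n × Σ k : Fin K, {e // e ∈ E k})).2 := hef
    simp only [ne_eq, h1, not_false_eq_true, and_true, eq_self_iff_true, true_and]
    rw [subtype_sum_attach, Finset.card_filter]
    push_cast
    rw [Finset.mul_sum]
    conv_rhs => rw [← Finset.sum_attach]
    refine Finset.sum_congr rfl fun z hz => ?_
    split_ifs
    all_goals rename_i hA hB hC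
    all_goals try ring
    · exact absurd hB hC.2.2
    · exact absurd ⟨hA.1, hA.2, hB⟩ hC
    · exact absurd ⟨hC.1, hC.2.1⟩ hA
    · exact absurd ⟨hC.1, hC.2.1⟩ hA

lemma S_symm : (Wdiag n K w E * Jmat n K E)ᵀ = Wdiag n K w E * Jmat n K E := by
  rw [Matrix.transpose_mul, Jmat_transpose, W_transpose, ← WJ_comm]

lemma MS_symm (w : Fin K → ℝ) :
    (Wdiag n K w E * Bcirc n K E * (Wdiag n K w E * Jmat n K E))ᵀ =
      Wdiag n K w E * Bcirc n K E * (Wdiag n K w E * Jmat n K E) := by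
  ext xe yf
  rw [Matrix.transpose_apply, MS_apply, MS_apply]
  by_cases h : yf.1.2 = xe.1.2
  · rw [if_neg (not_not_intro h), if_neg (not_not_intro h.symm)]
    ring
  · rw [if_pos h, if_pos (fun hc => h hc.symm)]
    have hfil : (xe.1.2.2.1.filter
        (fun z => z ∈ yf.1.2.2.1 ∧ z ≠ yf.1.1 ∧ z ≠ xe.1.1)).card =
        (yf.1.2.2.1.filter
        (fun z => z ∈ xe.1.2.2.1 ∧ z ≠ xe.1.1 ∧ z ≠ yf.1.1)).card := by
    -- the two filters are equal as finsets
      congr 1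
      ext z
      simp only [Finset.mem_filter]
      tauto
    rw [hfil]
    ring

lemma MS_comm (w : Fin K → ℝ) :
    Wdiag n K w E * Bcirc n K E * (Wdiag n K w E * Jmat n K E) =
      (Wdiag n K w E * Jmat n K E) *
        (Wdiag n K w E * Bcirc n K E)ᵀ := by
  conv_rhs => rw [← S_symm, ← Matrix.transpose_mul, MS_symm]

lemma pow_swap {M : Type*} [Monoid M] (a b : M) (k : ℕ) :
    a * (b * a) ^ k = (a * b) ^ k * a := by
  induction k with
  | zero => simp
  | succ k ih =>
      rw [pow_succ, ← mul_assoc, ih, pow_succ]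
      simp only [mul_assoc]

lemma key_pow (w : Fin K → ℝ) (k : ℕ) :
    (Wdiag n K w E * Bcirc n K E) ^ k * (Wdiag n K w E * Jmat n K E) =
      (Wdiag n K w E * Jmat n K E) * ((Wdiag n K w E * Bcirc n K E)ᵀ) ^ k := by
  induction k with
  | zero => simp
  | succ k ih =>
      rw [pow_succ' (Wdiag n K w E * Bcirc n K E), mul_assoc, ih, ← mul_assoc, MS_comm,
        mul_assoc, ← pow_succ']

theorem statement6' (n K : ℕ) (w : Fin K → ℝ)
    (E : Fin K → Finset (Finset (Fin n))) (k : ℕ) :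
    Matrix.diagonal (fun xe : OEdge n K E => w xe.1.2.1) * (Bmat n K w E) ^ k * Jmat n K E =
      Jmat n K E * ((Bmat n K w E)ᵀ) ^ k *
        Matrix.diagonal (fun xe : OEdge n K E => w xe.1.2.1) := by
  show Wdiag n K w E * (Bmat n K w E) ^ k * Jmat n K E =
    Jmat n K E * ((Bmat n K w E)ᵀ) ^ k * Wdiag n K w E
  rw [B_eq w, Matrix.transpose_mul, W_transpose]
  conv_lhs => rw [pow_swap, mul_assoc]
  conv_rhs => rw [mul_assoc (Jmat n K E), ← pow_swap, ← mul_assoc, ← WJ_comm,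
    show (Bcirc n K E)ᵀ * Wdiag n K w E = (Wdiag n K w E * Bcirc n K E)ᵀ by
      rw [Matrix.transpose_mul, W_transpose]]
  exact key_pow w k

end AuxPT

/-- parity-time symmetry `D_w B^k J = J (Bᵀ)^k D_w` for every `k ≥ 0`. -/
theorem statement6 (n K : ℕ) (hn : 1 ≤ n) (hK : 1 ≤ K)
    (q : Fin K → ℕ) (hq : ∀ k, 2 ≤ q k) (w : Fin K → ℝ)
    (E : Fin K → Finset (Finset (Fin n)))
    (hcard : ∀ k, ∀ e ∈ E k, e.card = q k)
    (k : ℕ) :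
    Matrix.diagonal (fun xe : OEdge n K E => w xe.1.2.1) * (Bmat n K w E) ^ k * Jmat n K E =
      Jmat n K E * ((Bmat n K w E)ᵀ) ^ k *
        Matrix.diagonal (fun xe : OEdge n K E => w xe.1.2.1) :=
  statement6' n K w E k
end

section
/- For every λ ∈ ℂ with Δ_k(λ) := (λ − w^(k))(λ + w^(k)(q^(k)−1)) ≠ 0 for all k ∈ {1,…,K}, the reduced non-backtracking matrix B̃ satisfies det(λ·I_{2Kn} − B̃) = (∏_{k=1}^K Δ_k(λ)^n) · det(H(λ)), where H(λ) = I_n − ∑_{k=1}^K (w^(k)λ/Δ_k(λ))·A_k + ∑_{k=1}^K ((w^(k))²(q^(k)−1)/Δ_k(λ))·D_k is the Bethe–Hessian matrix. -/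
open Matrix Finset

section Aux

/-- The block `Q = δ_{kℓ} w_k I − w_ℓ D_k` of `λI − B̃`, as a `Kn × Kn` matrix. -/
noncomputable def auxQ (n K : ℕ) (w : Fin K → ℝ) (E : Fin K → Finset (Finset (Fin n))) :
    Matrix (Fin K × Fin n) (Fin K × Fin n) ℂ := fun p r =>
  (if p = r then (w p.1 : ℂ) else 0) -
    (w r.1 : ℂ) * ((Dmat n K E p.1).map Complex.ofReal p.2 r.2)

/-- The block `R = δ_{kℓ} w_k (q_k − 1) I` of `λI − B̃`. -/
noncomputable def auxR (n K : ℕ) (q : Fin K → ℕ) (w : Fin K → ℝ) :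
    Matrix (Fin K × Fin n) (Fin K × Fin n) ℂ :=
  Matrix.diagonal fun p => (w p.1 : ℂ) * ((q p.1 : ℂ) - 1)

/-- The block `S = δ_{kℓ}(λ + w_k(q_k−2)) I − w_ℓ A_k` of `λI − B̃`. -/
noncomputable def auxS (n K : ℕ) (q : Fin K → ℕ) (w : Fin K → ℝ)
    (E : Fin K → Finset (Finset (Fin n))) (lam : ℂ) :
    Matrix (Fin K × Fin n) (Fin K × Fin n) ℂ := fun p r =>
  (if p = r then lam + (w p.1 : ℂ) * ((q p.1 : ℂ) - 2) else 0) -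
    (w r.1 : ℂ) * ((Amat n K E p.1).map Complex.ofReal p.2 r.2)

/-- The tall factor `U` of the block rank-one matrix `N = U·V`. -/
noncomputable def auxU (n K : ℕ) (q : Fin K → ℕ) (w : Fin K → ℝ)
    (E : Fin K → Finset (Finset (Fin n))) (lam : ℂ) :
    Matrix (Fin K × Fin n) (Fin n) ℂ := fun p y =>
  ((lam - (w p.1 : ℂ)) * (lam + (w p.1 : ℂ) * ((q p.1 : ℂ) - 1)))⁻¹ *
    (-lam * ((Amat n K E p.1).map Complex.ofReal p.2 y) +
      (w p.1 : ℂ) * ((q p.1 : ℂ) - 1) * ((Dmat n K E p.1).map Complex.ofReal p.2 y))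

/-- The wide factor `V` of the block rank-one matrix `N = U·V`. -/
noncomputable def auxV (n K : ℕ) (w : Fin K → ℝ) :
    Matrix (Fin n) (Fin K × Fin n) ℂ := fun x r => if x = r.2 then (w r.1 : ℂ) else 0

/-- The reindexing equivalence splitting `Fin K × Fin 2 × Fin n` into two blocks. -/
def oeEquiv (n K : ℕ) : (Fin K × Fin n) ⊕ (Fin K × Fin n) ≃ Fin K × Fin 2 × Fin n where
  toFun := Sum.elim (fun p => (p.1, 0, p.2)) (fun p => (p.1, 1, p.2))
  invFun t := if t.2.1 = 0 then Sum.inl (t.1, t.2.2) else Sum.inr (t.1, t.2.2)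
  left_inv := by rintro (⟨k, x⟩ | ⟨k, x⟩) <;> simp
  right_inv := by rintro ⟨k, a, x⟩; fin_cases a <;> simp

/-- Determinant of a block matrix with scalar top-left block. -/
lemma det_fromBlocks_smul_one {m : Type*} [Fintype m] [DecidableEq m]
    (B C D : Matrix m m ℂ) (lam : ℂ) :
    (fromBlocks (lam • (1 : Matrix m m ℂ)) B C D).det = (lam • D - C * B).det := by
  have key : ∀ t : ℂ, t ≠ 0 →
      (fromBlocks (t • (1 : Matrix m m ℂ)) B C D).det = (t • D - C * B).det := by
    intro t ht
    have hmul : (t • (1 : Matrix m m ℂ)) * (t⁻¹ • (1 : Matrix m m ℂ)) = 1 := by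
      rw [Matrix.smul_mul, Matrix.mul_smul, one_mul, smul_smul, mul_inv_cancel₀ ht, one_smul]
    have hmul' : (t⁻¹ • (1 : Matrix m m ℂ)) * (t • (1 : Matrix m m ℂ)) = 1 := by
      rw [Matrix.smul_mul, Matrix.mul_smul, one_mul, smul_smul, inv_mul_cancel₀ ht, one_smul]
    have hinv : Invertible (t • (1 : Matrix m m ℂ)) := ⟨t⁻¹ • 1, hmul', hmul⟩
    have hinvOf : ⅟(t • (1 : Matrix m m ℂ)) = t⁻¹ • 1 := invOf_eq_right_inv hmul
    rw [Matrix.det_fromBlocks₁₁, hinvOf]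
    have h1 : C * (t⁻¹ • (1 : Matrix m m ℂ)) * B = t⁻¹ • (C * B) := by
      rw [Matrix.mul_smul, mul_one, Matrix.smul_mul]
    have h2 : t • D - C * B = t • (D - t⁻¹ • (C * B)) := by
      rw [smul_sub, smul_smul, mul_inv_cancel₀ ht, one_smul]
    rw [h1, h2, Matrix.det_smul, Matrix.det_smul, Matrix.det_one, mul_one]
  rcases eq_or_ne lam 0 with h0 | h0
  · have hf : Continuous fun t : ℂ =>
        (fromBlocks (t • (1 : Matrix m m ℂ)) B C D).det := by
      apply Continuous.matrix_det
      have : (fun t : ℂ => fromBlocks (t • (1 : Matrix m m ℂ)) B C D) =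
          fun t : ℂ => t • fromBlocks (1 : Matrix m m ℂ) 0 0 0 + fromBlocks 0 B C D := by
        funext t
        rw [Matrix.fromBlocks_smul, Matrix.fromBlocks_add]
        simp
      rw [this]
      exact (continuous_id.smul continuous_const).add continuous_const
    have hg : Continuous fun t : ℂ => (t • D - C * B).det := by
      apply Continuous.matrix_det
      exact (continuous_id.smul continuous_const).sub continuous_const
    have hdense : Dense ({(0 : ℂ)}ᶜ) := dense_compl_singleton 0
    have := Continuous.ext_on hdense hf hg (fun t ht => key t ht)
    exact congrFun this lam
  · exact key lam h0

end Aux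

/-- For every `λ ∈ ℂ` with `Δ_k(λ) = (λ-w_k)(λ+w_k(q_k-1)) ≠ 0` for all
`k`, `det(λI_{2Kn} - B̃) = (∏_k Δ_k(λ)^n) · det(H(λ))`, where `H(λ)` is the
Bethe–Hessian matrix. -/
theorem statement10 (n K : ℕ) (hn : 1 ≤ n) (hK : 1 ≤ K)
    (q : Fin K → ℕ) (hq : ∀ k, 2 ≤ q k) (w : Fin K → ℝ)
    (E : Fin K → Finset (Finset (Fin n)))
    (hcard : ∀ k, ∀ e ∈ E k, e.card = q k)
    (lam : ℂ)
    (hΔ : ∀ k, (lam - (w k : ℂ)) * (lam + (w k : ℂ) * ((q k : ℂ) - 1)) ≠ 0) :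
    (lam • (1 : Matrix (Fin K × Fin 2 × Fin n) (Fin K × Fin 2 × Fin n) ℂ) -
        (tildeB n K q w E).map Complex.ofReal).det =
      (∏ k, ((lam - (w k : ℂ)) * (lam + (w k : ℂ) * ((q k : ℂ) - 1))) ^ n) *
        ((1 : Matrix (Fin n) (Fin n) ℂ)
          - ∑ k, ((w k : ℂ) * lam /
              ((lam - (w k : ℂ)) * (lam + (w k : ℂ) * ((q k : ℂ) - 1)))) •
              (Amat n K E k).map Complex.ofReal
          + ∑ k, ((w k : ℂ) ^ 2 * ((q k : ℂ) - 1) /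
              ((lam - (w k : ℂ)) * (lam + (w k : ℂ) * ((q k : ℂ) - 1)))) •
              (Dmat n K E k).map Complex.ofReal).det := by
  classical
  -- Step 1: reindex `λI − B̃` as a 2×2 block matrix.
  have h1 : (lam • (1 : Matrix (Fin K × Fin 2 × Fin n) (Fin K × Fin 2 × Fin n) ℂ) -
        (tildeB n K q w E).map Complex.ofReal).det
      = (fromBlocks (lam • (1 : Matrix (Fin K × Fin n) (Fin K × Fin n) ℂ))
          (auxQ n K w E) (auxR n K q w) (auxS n K q w E lam)).det := by
    rw [← Matrix.det_submatrix_equiv_self (oeEquiv n K)]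
    congr 1
    ext i j
    rcases i with ⟨k, x⟩ | ⟨k, x⟩ <;> rcases j with ⟨l, y⟩ | ⟨l, y⟩ <;>
      simp only [Matrix.submatrix_apply, oeEquiv, Equiv.coe_fn_mk, Sum.elim_inl, Sum.elim_inr,
        Matrix.fromBlocks_apply₁₁, Matrix.fromBlocks_apply₁₂, Matrix.fromBlocks_apply₂₁,
        Matrix.fromBlocks_apply₂₂, Matrix.sub_apply, Matrix.smul_apply, Matrix.one_apply,
        Matrix.map_apply, tildeB, auxQ, auxR, auxS, Matrix.diagonal, Matrix.of_apply,
        Prod.mk.injEq, smul_eq_mul] <;>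
      push_cast <;>
      simp only [show ((0 : Fin 2) = (1 : Fin 2)) = False by simp,
        show ((1 : Fin 2) = (0 : Fin 2)) = False by simp, if_true, if_false,
        eq_self_iff_true, true_and, false_and, and_false, and_true] <;>
      split_ifs with h <;>
      first
        | (obtain ⟨hkl, hxy⟩ := h; subst hkl; subst hxy; push_cast; ring)
        | (push_cast; ring)
  rw [h1, det_fromBlocks_smul_one]
  -- Step 2: factor the Schur-type matrix as `diag(Δ) * (1 + U·V)`.
  have h2 : lam • auxS n K q w E lam - auxR n K q w * auxQ n K w E
      = Matrix.diagonal
          (fun p : Fin K × Fin n =>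
            (lam - (w p.1 : ℂ)) * (lam + (w p.1 : ℂ) * ((q p.1 : ℂ) - 1)))
        * (1 + auxU n K q w E lam * auxV n K w) := by
    ext p r
    have hd := hΔ p.1
    have hUV : (auxU n K q w E lam * auxV n K w) p r
        = auxU n K q w E lam p r.2 * (w r.1 : ℂ) := by
      simp [Matrix.mul_apply, auxV, mul_ite, mul_zero]
    rw [Matrix.diagonal_mul, Matrix.add_apply, hUV, Matrix.sub_apply, Matrix.smul_apply]
    rw [Matrix.mul_apply]
    have hRQ : ∀ s, auxR n K q w p s * auxQ n K w E s r
        = (if p = s then ((w p.1 : ℂ) * ((q p.1 : ℂ) - 1)) * auxQ n K w E s r else 0) := by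
      intro s
      simp [auxR, Matrix.diagonal, ite_mul, zero_mul]
    rw [Finset.sum_congr rfl fun s _ => hRQ s, Finset.sum_ite_eq Finset.univ p
      (fun s => ((w p.1 : ℂ) * ((q p.1 : ℂ) - 1)) * auxQ n K w E s r)]
    simp only [Finset.mem_univ, if_true, auxQ, auxS, auxU, Matrix.one_apply, smul_eq_mul]
    by_cases hpr : p = r
    · subst hpr
      simp only [if_pos rfl]
      field_simp [left_ne_zero_of_mul hd, right_ne_zero_of_mul hd]
      simp only [if_pos trivial]
      ring
    · simp only [if_neg hpr]
      field_simp [left_ne_zero_of_mul hd, right_ne_zero_of_mul hd]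
      ring
  rw [h2, Matrix.det_mul, Matrix.det_diagonal]
  -- Step 3: compute the product of the diagonal determinant.
  have h3 : (∏ p : Fin K × Fin n,
        (lam - (w p.1 : ℂ)) * (lam + (w p.1 : ℂ) * ((q p.1 : ℂ) - 1)))
      = ∏ k, ((lam - (w k : ℂ)) * (lam + (w k : ℂ) * ((q k : ℂ) - 1))) ^ n := by
    rw [Fintype.prod_prod_type]
    exact Finset.prod_congr rfl fun k _ => by
      simp [Finset.prod_const]
  rw [h3, Matrix.det_one_add_mul_comm]
  -- Step 4: identify `1 + V·U` with the Bethe–Hessian.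
  congr 1
  congr 1
  ext x y
  have hVU : (auxV n K w * auxU n K q w E lam) x y
      = ∑ l, (w l : ℂ) * auxU n K q w E lam (l, x) y := by
    rw [Matrix.mul_apply, Fintype.sum_prod_type]
    refine Finset.sum_congr rfl fun l _ => ?_
    simp [auxV, ite_mul, zero_mul]
  rw [Matrix.add_apply, hVU]
  simp only [Matrix.sub_apply, Matrix.add_apply, Matrix.sum_apply, Matrix.smul_apply,
    smul_eq_mul]
  have key : ∀ l : Fin K, (w l : ℂ) * auxU n K q w E lam (l, x) y
      = ((w l : ℂ) ^ 2 * ((q l : ℂ) - 1) /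
            ((lam - (w l : ℂ)) * (lam + (w l : ℂ) * ((q l : ℂ) - 1)))) *
          ((Dmat n K E l).map Complex.ofReal x y)
        - ((w l : ℂ) * lam /
            ((lam - (w l : ℂ)) * (lam + (w l : ℂ) * ((q l : ℂ) - 1)))) *
          ((Amat n K E l).map Complex.ofReal x y) := by
    intro l
    have hd := hΔ l
    simp only [auxU]
    field_simp
    ring
  rw [Finset.sum_congr rfl fun l _ => key l, Finset.sum_sub_distrib]
  ring
end

section
/- For every λ ∈ ℂ with λ ≠ w^(k) and λ ≠ −w^(k)(q^(k)−1) for all k ∈ {1,…,K}, λ is an eigenvalue of the non-backtracking matrix B (regarded as a complex matrix) if and only if λ is an eigenvalue of the reduced non-backtracking matrix B̃. -/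
open Matrix Finset

namespace Aux11

variable {n K : ℕ} {E : Fin K → Finset (Finset (Fin n))}

noncomputable def Vx (E : Fin K → Finset (Finset (Fin n))) (v : OEdge n K E → ℂ)
    (y : Fin n) (f : Σ k : Fin K, {e : Finset (Fin n) // e ∈ E k}) : ℂ :=
  if h : y ∈ f.2.1 then v ⟨(y, f), h⟩ else 0

lemma Vx_apply (v : OEdge n K E → ℂ) (z : OEdge n K E) : Vx E v z.1.1 z.1.2 = v z := by
  rw [Vx, dif_pos z.2]

lemma Vx_zero (v : OEdge n K E → ℂ) (hv : v = 0) (y f) : Vx E v y f = 0 := by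
  subst hv; unfold Vx; split <;> simp

lemma Vx_of_not_mem (v : OEdge n K E → ℂ) {y} {f} (h : y ∉ f.2.1) : Vx E v y f = 0 :=
  dif_neg h

def oEquiv (E : Fin K → Finset (Finset (Fin n))) :
    OEdge n K E ≃ Σ k : Fin K, Σ f : {e : Finset (Fin n) // e ∈ E k}, {x : Fin n // x ∈ f.1} where
  toFun z := ⟨z.1.2.1, z.1.2.2, ⟨z.1.1, z.2⟩⟩
  invFun s := ⟨(s.2.2.1, ⟨s.1, s.2.1⟩), s.2.2.2⟩
  left_inv _ := rfl
  right_inv _ := rfl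

lemma sum_oedge (F : Fin n → (Σ k : Fin K, {e : Finset (Fin n) // e ∈ E k}) → ℂ) :
    ∑ z : OEdge n K E, F z.1.1 z.1.2
      = ∑ ℓ : Fin K, ∑ f : {e : Finset (Fin n) // e ∈ E ℓ}, ∑ y ∈ f.1, F y ⟨ℓ, f⟩ := by
  rw [← (oEquiv E).symm.sum_comp (fun z : OEdge n K E => F z.1.1 z.1.2)]
  rw [← Finset.univ_sigma_univ, Finset.sum_sigma]
  refine Finset.sum_congr rfl fun ℓ _ => ?_
  rw [← Finset.univ_sigma_univ, Finset.sum_sigma]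
  refine Finset.sum_congr rfl fun f _ => ?_
  rw [← Finset.sum_coe_sort (f.1) (fun y => F y ⟨ℓ, f⟩)]
  rfl

/-- Master reorganization: sums over oriented edges of `coefficient × v` become
`∑ y, ∑ σ, c y σ * Vx v y σ`. -/
lemma sum_oedge' (v : OEdge n K E → ℂ)
    (c : Fin n → (Σ k : Fin K, {e : Finset (Fin n) // e ∈ E k}) → ℂ) :
    ∑ z : OEdge n K E, c z.1.1 z.1.2 * v z
      = ∑ y : Fin n, ∑ σ : Σ k : Fin K, {e : Finset (Fin n) // e ∈ E k},
          c y σ * Vx E v y σ := by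
  have h1 : ∑ z : OEdge n K E, c z.1.1 z.1.2 * v z
      = ∑ z : OEdge n K E, c z.1.1 z.1.2 * Vx E v z.1.1 z.1.2 :=
    Finset.sum_congr rfl fun z _ => by rw [Vx_apply]
  rw [h1, sum_oedge (fun y σ => c y σ * Vx E v y σ)]
  have h2 : ∀ ℓ : Fin K, ∀ f : {e : Finset (Fin n) // e ∈ E ℓ},
      ∑ y ∈ f.1, c y ⟨ℓ, f⟩ * Vx E v y ⟨ℓ, f⟩
        = ∑ y : Fin n, c y ⟨ℓ, f⟩ * Vx E v y ⟨ℓ, f⟩ := by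
    intro ℓ f
    refine Finset.sum_subset (Finset.subset_univ _) fun y _ hy => ?_
    rw [Vx_of_not_mem v hy, mul_zero]
  calc ∑ ℓ : Fin K, ∑ f : {e : Finset (Fin n) // e ∈ E ℓ},
        ∑ y ∈ f.1, c y ⟨ℓ, f⟩ * Vx E v y ⟨ℓ, f⟩
      = ∑ ℓ : Fin K, ∑ f : {e : Finset (Fin n) // e ∈ E ℓ},
        ∑ y : Fin n, c y ⟨ℓ, f⟩ * Vx E v y ⟨ℓ, f⟩ := by
        exact Finset.sum_congr rfl fun ℓ _ => Finset.sum_congr rfl fun f _ => h2 ℓ f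
    _ = ∑ σ : Σ k : Fin K, {e : Finset (Fin n) // e ∈ E k},
        ∑ y : Fin n, c y σ * Vx E v y σ := by
        rw [← Finset.univ_sigma_univ, Finset.sum_sigma]
    _ = _ := Finset.sum_comm

noncomputable def sF (v : OEdge n K E → ℂ) (k : Fin K) (x : Fin n) : ℂ :=
  ∑ f : {e : Finset (Fin n) // e ∈ E k}, Vx E v x ⟨k, f⟩

noncomputable def tF (v : OEdge n K E → ℂ) (k : Fin K) (x : Fin n) : ℂ :=
  ∑ f : {e : Finset (Fin n) // e ∈ E k},
    if x ∈ f.1 then ∑ y ∈ f.1.erase x, Vx E v y ⟨k, f⟩ else 0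

noncomputable def NN (E : Fin K → Finset (Finset (Fin n))) (k : Fin K) (g : Fin n → ℂ)
    (x : Fin n) : ℂ :=
  ∑ f : {e : Finset (Fin n) // e ∈ E k}, if x ∈ f.1 then ∑ y ∈ f.1.erase x, g y else 0

noncomputable def dC (E : Fin K → Finset (Finset (Fin n))) (k : Fin K) (x : Fin n) : ℂ :=
  ∑ f : {e : Finset (Fin n) // e ∈ E k}, if x ∈ f.1 then 1 else 0

lemma mulVecB (w : Fin K → ℝ) (v : OEdge n K E → ℂ) (z : OEdge n K E) :
    ((Bmat n K w E).map Complex.ofReal).mulVec v z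
      = (∑ ℓ : Fin K, (w ℓ : ℂ) * ∑ y ∈ z.1.2.2.1.erase z.1.1, sF v ℓ y)
        - (w z.1.2.1 : ℂ) * ∑ y ∈ z.1.2.2.1.erase z.1.1, Vx E v y z.1.2 := by
  set e := z.1.2.2.1 with he
  set x := z.1.1 with hx
  set τ := z.1.2 with hτ
  have key : ((Bmat n K w E).map Complex.ofReal).mulVec v z
      = ∑ y : Fin n, ∑ σ : Σ k : Fin K, {e : Finset (Fin n) // e ∈ E k},
          (if y ∈ e ∧ y ≠ x ∧ σ ≠ τ then (w σ.1 : ℂ) else 0) * Vx E v y σ := by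
    rw [← sum_oedge' v (fun y σ => if y ∈ e ∧ y ≠ x ∧ σ ≠ τ then (w σ.1 : ℂ) else 0)]
    show ∑ z' : OEdge n K E, ((Bmat n K w E).map Complex.ofReal) z z' * v z' = _
    refine Finset.sum_congr rfl fun z' _ => ?_
    congr 1
    simp only [Matrix.map_apply, Bmat]
    split <;> simp
  rw [key]
  have split : ∀ (y : Fin n) (σ : Σ k : Fin K, {e : Finset (Fin n) // e ∈ E k}),
      (if y ∈ e ∧ y ≠ x ∧ σ ≠ τ then (w σ.1 : ℂ) else 0) * Vx E v y σ
        = (if y ∈ e ∧ y ≠ x then (w σ.1 : ℂ) * Vx E v y σ else 0)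
          - (if σ = τ then (if y ∈ e ∧ y ≠ x then (w σ.1 : ℂ) * Vx E v y σ else 0) else 0) := by
    intro y σ
    by_cases h1 : y ∈ e ∧ y ≠ x
    · by_cases h2 : σ = τ <;> simp [h1.1, h1.2, h2]
    · have hc : ¬(y ∈ e ∧ y ≠ x ∧ σ ≠ τ) := fun h => h1 ⟨h.1, h.2.1⟩
      simp [hc, h1]
  simp only [split, Finset.sum_sub_distrib]
  have hmem : ∀ y : Fin n, (y ∈ e ∧ y ≠ x) ↔ y ∈ e.erase x := by
    intro y; rw [Finset.mem_erase]; tauto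
  congr 1
  · -- first term
    have h1 : ∀ y : Fin n,
        ∑ σ : Σ k : Fin K, {e : Finset (Fin n) // e ∈ E k},
          (if y ∈ e ∧ y ≠ x then (w σ.1 : ℂ) * Vx E v y σ else 0)
        = if y ∈ e.erase x then
            ∑ σ : Σ k : Fin K, {e : Finset (Fin n) // e ∈ E k}, (w σ.1 : ℂ) * Vx E v y σ
          else 0 := by
      intro y
      rw [Finset.sum_ite_irrel]
      exact if_congr (hmem y) rfl (by simp)
    simp only [h1]
    rw [Finset.sum_ite_mem, Finset.univ_inter]
    have h2 : ∀ y : Fin n,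
        ∑ σ : Σ k : Fin K, {e : Finset (Fin n) // e ∈ E k}, (w σ.1 : ℂ) * Vx E v y σ
          = ∑ ℓ : Fin K, (w ℓ : ℂ) * sF v ℓ y := by
      intro y
      rw [← Finset.univ_sigma_univ, Finset.sum_sigma]
      exact Finset.sum_congr rfl fun ℓ _ => by rw [sF, Finset.mul_sum]
    simp only [h2]
    rw [Finset.sum_comm]
    exact Finset.sum_congr rfl fun ℓ _ => by rw [Finset.mul_sum]
  · -- second term
    have h1 : ∀ y : Fin n,
        ∑ σ : Σ k : Fin K, {e : Finset (Fin n) // e ∈ E k},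
          (if σ = τ then (if y ∈ e ∧ y ≠ x then (w σ.1 : ℂ) * Vx E v y σ else 0) else 0)
        = if y ∈ e.erase x then (w τ.1 : ℂ) * Vx E v y τ else 0 := by
      intro y
      rw [Finset.sum_ite_eq' Finset.univ τ
        (fun σ => if y ∈ e ∧ y ≠ x then (w σ.1 : ℂ) * Vx E v y σ else 0)]
      simp only [Finset.mem_univ, if_true]
      exact if_congr (hmem y) rfl rfl
    simp only [h1]
    rw [Finset.sum_ite_mem, Finset.univ_inter, Finset.mul_sum]

lemma dd (e : Finset (Fin n)) (x : Fin n) (hx : x ∈ e) (g : Fin n → ℂ) :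
    ∑ y ∈ e.erase x, ∑ z ∈ e.erase y, g z
      = ((e.card : ℂ) - 1) * g x + ((e.card : ℂ) - 2) * ∑ z ∈ e.erase x, g z := by
  have h1 : ∀ y ∈ e.erase x, ∑ z ∈ e.erase y, g z = (∑ z ∈ e, g z) - g y :=
    fun y hy => Finset.sum_erase_eq_sub (Finset.mem_of_mem_erase hy)
  rw [Finset.sum_congr rfl h1, Finset.sum_sub_distrib, Finset.sum_const,
    Finset.card_erase_of_mem hx, nsmul_eq_mul, ← Finset.add_sum_erase e g hx]
  have hc : (1:ℕ) ≤ e.card := Finset.card_pos.mpr ⟨x, hx⟩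
  rw [Nat.cast_sub hc]
  push_cast
  ring

lemma star {w : Fin K → ℝ} {v : OEdge n K E → ℂ} {lam : ℂ}
    (hv : ((Bmat n K w E).map Complex.ofReal).mulVec v = lam • v)
    (k : Fin K) (f : {e : Finset (Fin n) // e ∈ E k}) {x : Fin n} (hx : x ∈ f.1) :
    lam * Vx E v x ⟨k, f⟩
      = (∑ ℓ : Fin K, (w ℓ : ℂ) * ∑ y ∈ f.1.erase x, sF v ℓ y)
        - (w k : ℂ) * ∑ y ∈ f.1.erase x, Vx E v y ⟨k, f⟩ := by
  have h := congrFun hv ⟨(x, ⟨k, f⟩), hx⟩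
  rw [mulVecB, Pi.smul_apply, smul_eq_mul] at h
  have h2 : Vx E v x ⟨k, f⟩ = v ⟨(x, ⟨k, f⟩), hx⟩ := Vx_apply v ⟨(x, ⟨k, f⟩), hx⟩
  rw [h2, ← h]

lemma eOne {w : Fin K → ℝ} {v : OEdge n K E → ℂ} {lam : ℂ}
    (hv : ((Bmat n K w E).map Complex.ofReal).mulVec v = lam • v)
    (k : Fin K) (x : Fin n) :
    lam * sF v k x
      = (∑ ℓ : Fin K, (w ℓ : ℂ) * NN E k (sF v ℓ) x) - (w k : ℂ) * tF v k x := by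
  have h1 : ∀ f : {e : Finset (Fin n) // e ∈ E k},
      lam * Vx E v x ⟨k, f⟩
        = (∑ ℓ : Fin K, (w ℓ : ℂ) *
            (if x ∈ f.1 then ∑ y ∈ f.1.erase x, sF v ℓ y else 0))
          - (w k : ℂ) * (if x ∈ f.1 then ∑ y ∈ f.1.erase x, Vx E v y ⟨k, f⟩ else 0) := by
    intro f
    by_cases hx : x ∈ f.1
    · simp only [if_pos hx]; exact star hv k f hx
    · simp only [if_neg hx, Vx_of_not_mem v (f := ⟨k, f⟩) hx, mul_zero, Finset.sum_const_zero,
        sub_zero]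
  rw [sF, Finset.mul_sum, Finset.sum_congr rfl fun f _ => h1 f, Finset.sum_sub_distrib]
  congr 1
  · rw [Finset.sum_comm]
    refine Finset.sum_congr rfl fun ℓ _ => ?_
    rw [NN, Finset.mul_sum]
  · rw [← Finset.mul_sum, tF]

lemma eTwo {w : Fin K → ℝ} {v : OEdge n K E → ℂ} {lam : ℂ} {qk : ℕ}
    (hv : ((Bmat n K w E).map Complex.ofReal).mulVec v = lam • v)
    (k : Fin K) (hcard : ∀ e ∈ E k, e.card = qk) (x : Fin n) :
    lam * tF v k x
      = (∑ ℓ : Fin K, (w ℓ : ℂ) * (((qk:ℂ) - 1) * (dC E k x * sF v ℓ x)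
          + ((qk:ℂ) - 2) * NN E k (sF v ℓ) x))
        - (w k : ℂ) * (((qk:ℂ) - 1) * sF v k x + ((qk:ℂ) - 2) * tF v k x) := by
  have h1 : ∀ f : {e : Finset (Fin n) // e ∈ E k},
      (if x ∈ f.1 then lam * ∑ y ∈ f.1.erase x, Vx E v y ⟨k, f⟩ else 0)
        = (∑ ℓ : Fin K, (w ℓ : ℂ) *
            (if x ∈ f.1 then ((qk:ℂ)-1) * sF v ℓ x
              + ((qk:ℂ)-2) * ∑ z ∈ f.1.erase x, sF v ℓ z else 0))
          - (w k : ℂ) * (if x ∈ f.1 then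
              ((qk:ℂ)-1) * Vx E v x ⟨k, f⟩
              + ((qk:ℂ)-2) * ∑ z ∈ f.1.erase x, Vx E v z ⟨k, f⟩ else 0) := by
    intro f
    by_cases hx : x ∈ f.1
    · simp only [if_pos hx]
      have hq : (f.1.card : ℂ) = (qk : ℂ) := by rw [hcard f.1 f.2]
      rw [Finset.mul_sum,
        Finset.sum_congr rfl fun y hy => star hv k f (Finset.mem_of_mem_erase hy),
        Finset.sum_sub_distrib]
      congr 1
      · rw [Finset.sum_comm]
        refine Finset.sum_congr rfl fun ℓ _ => ?_
        rw [← Finset.mul_sum, dd f.1 x hx (sF v ℓ), hq]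
      · rw [← Finset.mul_sum, dd f.1 x hx (fun z => Vx E v z ⟨k, f⟩), hq]
    · simp only [if_neg hx, mul_zero, Finset.sum_const_zero, sub_zero]
  have h0 : lam * tF v k x
      = ∑ f : {e : Finset (Fin n) // e ∈ E k},
          (if x ∈ f.1 then lam * ∑ y ∈ f.1.erase x, Vx E v y ⟨k, f⟩ else 0) := by
    rw [tF, Finset.mul_sum]
    exact Finset.sum_congr rfl fun f _ => by split <;> simp
  rw [h0, Finset.sum_congr rfl fun f _ => h1 f, Finset.sum_sub_distrib]
  congr 1
  · rw [Finset.sum_comm]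
    refine Finset.sum_congr rfl fun ℓ _ => ?_
    rw [← Finset.mul_sum]
    congr 1
    have hsplit : ∀ f : {e : Finset (Fin n) // e ∈ E k},
        (if x ∈ f.1 then ((qk:ℂ)-1) * sF v ℓ x
            + ((qk:ℂ)-2) * ∑ z ∈ f.1.erase x, sF v ℓ z else 0)
          = ((qk:ℂ)-1) * (sF v ℓ x * (if x ∈ f.1 then 1 else 0))
            + ((qk:ℂ)-2) * (if x ∈ f.1 then ∑ z ∈ f.1.erase x, sF v ℓ z else 0) := by
      intro f; split <;> simp <;> ring
    rw [Finset.sum_congr rfl fun f _ => hsplit f, Finset.sum_add_distrib,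
      ← Finset.mul_sum, ← Finset.mul_sum, ← Finset.mul_sum]
    rw [NN, dC]
    ring
  · rw [← Finset.mul_sum]
    congr 1
    have hsplit : ∀ f : {e : Finset (Fin n) // e ∈ E k},
        (if x ∈ f.1 then ((qk:ℂ)-1) * Vx E v x ⟨k, f⟩
            + ((qk:ℂ)-2) * ∑ z ∈ f.1.erase x, Vx E v z ⟨k, f⟩ else 0)
          = ((qk:ℂ)-1) * Vx E v x ⟨k, f⟩
            + ((qk:ℂ)-2) * (if x ∈ f.1 then ∑ z ∈ f.1.erase x, Vx E v z ⟨k, f⟩ else 0) := by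
      intro f
      by_cases hx : x ∈ f.1
      · simp [hx]
      · simp [hx, Vx_of_not_mem v (f := ⟨k, f⟩) hx]
    rw [Finset.sum_congr rfl fun f _ => hsplit f, Finset.sum_add_distrib,
      ← Finset.mul_sum, ← Finset.mul_sum]
    rw [sF, tF]

lemma cnt (k : Fin K) (p : Finset (Fin n) → Prop) [DecidablePred p] :
    ∑ f : {e : Finset (Fin n) // e ∈ E k}, (if p f.1 then (1:ℂ) else 0)
      = (((E k).filter p).card : ℂ) := by
  rw [Finset.sum_coe_sort (E k) (fun e => if p e then (1:ℂ) else 0), Finset.sum_boole]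

lemma dC_eq (k : Fin K) (x : Fin n) :
    ((Dmat n K E k x x : ℝ) : ℂ) = dC E k x := by
  rw [dC, cnt k (fun e => x ∈ e)]
  simp [Dmat]

lemma NN_eq (k : Fin K) (x : Fin n) (g : Fin n → ℂ) :
    ∑ y : Fin n, ((Amat n K E k x y : ℝ) : ℂ) * g y = NN E k g x := by
  have h1 : ∀ y : Fin n, ((Amat n K E k x y : ℝ) : ℂ)
      = ∑ f : {e : Finset (Fin n) // e ∈ E k},
          (if x ∈ f.1 ∧ y ∈ f.1 ∧ x ≠ y then (1:ℂ) else 0) := by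
    intro y; rw [cnt k (fun e => x ∈ e ∧ y ∈ e ∧ x ≠ y)]; simp [Amat]
  simp only [h1, Finset.sum_mul]
  rw [Finset.sum_comm, NN]
  refine Finset.sum_congr rfl fun f _ => ?_
  by_cases hx : x ∈ f.1
  · rw [if_pos hx]
    have h2 : ∀ y : Fin n, (if x ∈ f.1 ∧ y ∈ f.1 ∧ x ≠ y then (1:ℂ) else 0) * g y
        = if y ∈ f.1.erase x then g y else 0 := by
      intro y
      by_cases hy : y ∈ f.1.erase x
      · rw [if_pos hy]
        rw [Finset.mem_erase] at hy
        rw [if_pos ⟨hx, hy.2, Ne.symm hy.1⟩, one_mul]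
      · rw [if_neg hy, if_neg, zero_mul]
        rw [Finset.mem_erase] at hy
        rintro ⟨-, hyf, hxy⟩
        exact hy ⟨Ne.symm hxy, hyf⟩
    simp only [h2]
    rw [Finset.sum_ite_mem, Finset.univ_inter]
  · rw [if_neg hx]
    refine Finset.sum_eq_zero fun y _ => ?_
    rw [if_neg (fun h => hx h.1), zero_mul]

lemma mulVecT0 (q : Fin K → ℕ) (w : Fin K → ℝ) (u : Fin K × Fin 2 × Fin n → ℂ)
    (k : Fin K) (x : Fin n) :
    ((tildeB n K q w E).map Complex.ofReal).mulVec u (k, 0, x)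
      = dC E k x * (∑ ℓ : Fin K, (w ℓ : ℂ) * u (ℓ, 1, x)) - (w k : ℂ) * u (k, 1, x) := by
  show ∑ p : Fin K × Fin 2 × Fin n,
      ((tildeB n K q w E).map Complex.ofReal) (k, 0, x) p * u p = _
  have hinner : ∀ ℓ : Fin K,
      ∑ p : Fin 2 × Fin n, ((tildeB n K q w E).map Complex.ofReal) (k, 0, x) (ℓ, p) * u (ℓ, p)
        = (w ℓ : ℂ) * ((Dmat n K E k x x : ℝ) : ℂ) * u (ℓ, 1, x)
          - (if k = ℓ then (w ℓ : ℂ) * u (ℓ, 1, x) else 0) := by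
    intro ℓ
    rw [Fintype.sum_prod_type, Fin.sum_univ_two]
    have e0 : ∀ y : Fin n,
        ((tildeB n K q w E).map Complex.ofReal) (k, 0, x) (ℓ, 0, y) = 0 := by
      intro y; simp [tildeB, Matrix.map_apply]
    have e1 : ∀ y : Fin n,
        ((tildeB n K q w E).map Complex.ofReal) (k, 0, x) (ℓ, 1, y)
          = (w ℓ : ℂ) * (((Dmat n K E k x y : ℝ) : ℂ)
              - (if k = ℓ ∧ x = y then 1 else 0)) := by
      intro y
      have h : tildeB n K q w E (k, 0, x) (ℓ, 1, y)
          = w ℓ * (Dmat n K E k x y - (if k = ℓ ∧ x = y then 1 else 0)) := by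
        simp [tildeB, (by decide : (1 : Fin 2) ≠ 0)]
      rw [Matrix.map_apply, h, Complex.ofReal_mul, Complex.ofReal_sub,
        apply_ite Complex.ofReal, Complex.ofReal_one, Complex.ofReal_zero]
    simp only [e0, e1, zero_mul, Finset.sum_const_zero, zero_add]
    have hD : ∀ y : Fin n, ((Dmat n K E k x y : ℝ) : ℂ)
        = if x = y then ((Dmat n K E k x x : ℝ) : ℂ) else 0 := by
      intro y
      by_cases h : x = y
      · subst h; simp
      · simp [Dmat, Matrix.diagonal, h]
    have hterm : ∀ y : Fin n,
        (w ℓ : ℂ) * (((Dmat n K E k x y : ℝ) : ℂ) - (if k = ℓ ∧ x = y then 1 else 0)) * u (ℓ, 1, y)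
          = (if x = y then (w ℓ : ℂ) * ((Dmat n K E k x x : ℝ) : ℂ) * u (ℓ, 1, y) else 0)
            - (if x = y then (if k = ℓ then (w ℓ : ℂ) * u (ℓ, 1, y) else 0) else 0) := by
      intro y
      rw [hD y]
      by_cases hxy : x = y <;> by_cases hkl : k = ℓ <;> simp [hxy, hkl] <;> ring
    rw [Finset.sum_congr rfl fun y _ => hterm y, Finset.sum_sub_distrib]
    congr 1
    · rw [Finset.sum_ite_eq Finset.univ x (fun y => (w ℓ : ℂ) * ((Dmat n K E k x x : ℝ) : ℂ) * u (ℓ, 1, y))]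
      simp
    · rw [Finset.sum_ite_eq Finset.univ x (fun y => if k = ℓ then (w ℓ : ℂ) * u (ℓ, 1, y) else 0)]
      simp
  rw [Fintype.sum_prod_type, Finset.sum_congr rfl fun ℓ _ => hinner ℓ, Finset.sum_sub_distrib]
  congr 1
  · rw [dC_eq, Finset.mul_sum]
    exact Finset.sum_congr rfl fun ℓ _ => by ring
  · rw [Finset.sum_ite_eq Finset.univ k (fun ℓ => (w ℓ : ℂ) * u (ℓ, 1, x))]
    simp

lemma mulVecT1 (q : Fin K → ℕ) (w : Fin K → ℝ) (u : Fin K × Fin 2 × Fin n → ℂ)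
    (k : Fin K) (x : Fin n) :
    ((tildeB n K q w E).map Complex.ofReal).mulVec u (k, 1, x)
      = NN E k (fun y => ∑ ℓ : Fin K, (w ℓ : ℂ) * u (ℓ, 1, y)) x
        - (w k : ℂ) * ((q k : ℂ) - 1) * u (k, 0, x)
        - (w k : ℂ) * ((q k : ℂ) - 2) * u (k, 1, x) := by
  show ∑ p : Fin K × Fin 2 × Fin n,
      ((tildeB n K q w E).map Complex.ofReal) (k, 1, x) p * u p = _
  have hinner : ∀ ℓ : Fin K,
      ∑ p : Fin 2 × Fin n, ((tildeB n K q w E).map Complex.ofReal) (k, 1, x) (ℓ, p) * u (ℓ, p)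
        = ((w ℓ : ℂ) * ∑ y : Fin n, ((Amat n K E k x y : ℝ) : ℂ) * u (ℓ, 1, y))
          - (if k = ℓ then (w ℓ : ℂ) * ((q ℓ : ℂ) - 1) * u (ℓ, 0, x) else 0)
          - (if k = ℓ then (w ℓ : ℂ) * ((q ℓ : ℂ) - 2) * u (ℓ, 1, x) else 0) := by
    intro ℓ
    rw [Fintype.sum_prod_type, Fin.sum_univ_two]
    have e0 : ∀ y : Fin n,
        ((tildeB n K q w E).map Complex.ofReal) (k, 1, x) (ℓ, 0, y)
          = -(((q ℓ : ℂ) - 1)) * (w ℓ : ℂ) * (if k = ℓ ∧ x = y then 1 else 0) := by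
      intro y
      have h : tildeB n K q w E (k, 1, x) (ℓ, 0, y)
          = w ℓ * (-(((q ℓ : ℝ) - 1)) * (if k = ℓ ∧ x = y then 1 else 0)) := by
        simp [tildeB, (by decide : (1 : Fin 2) ≠ 0)]
      rw [Matrix.map_apply, h]
      push_cast [apply_ite Complex.ofReal]
      ring_nf
    have e1 : ∀ y : Fin n,
        ((tildeB n K q w E).map Complex.ofReal) (k, 1, x) (ℓ, 1, y)
          = (w ℓ : ℂ) * (((Amat n K E k x y : ℝ) : ℂ)
              - ((q ℓ : ℂ) - 2) * (if k = ℓ ∧ x = y then 1 else 0)) := by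
      intro y
      have h : tildeB n K q w E (k, 1, x) (ℓ, 1, y)
          = w ℓ * (Amat n K E k x y - ((q ℓ : ℝ) - 2) * (if k = ℓ ∧ x = y then 1 else 0)) := by
        simp [tildeB, (by decide : (1 : Fin 2) ≠ 0)]
      rw [Matrix.map_apply, h]
      push_cast [apply_ite Complex.ofReal]
      ring_nf
    simp only [e0, e1]
    have part0 : ∑ y : Fin n,
        -(((q ℓ : ℂ) - 1)) * (w ℓ : ℂ) * (if k = ℓ ∧ x = y then 1 else 0) * u (ℓ, 0, y)
          = -(if k = ℓ then (w ℓ : ℂ) * ((q ℓ : ℂ) - 1) * u (ℓ, 0, x) else 0) := by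
      have hterm : ∀ y : Fin n,
          -(((q ℓ : ℂ) - 1)) * (w ℓ : ℂ) * (if k = ℓ ∧ x = y then 1 else 0) * u (ℓ, 0, y)
            = if x = y then
                (if k = ℓ then -((w ℓ : ℂ) * ((q ℓ : ℂ) - 1) * u (ℓ, 0, y)) else 0) else 0 := by
        intro y
        by_cases h1 : k = ℓ <;> by_cases h2 : x = y <;> simp [h1, h2] <;> ring
      rw [Finset.sum_congr rfl fun y _ => hterm y,
        Finset.sum_ite_eq Finset.univ x
          (fun y => if k = ℓ then -((w ℓ : ℂ) * ((q ℓ : ℂ) - 1) * u (ℓ, 0, y)) else 0)]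
      simp only [Finset.mem_univ, if_true]
      split <;> simp
    have part1 : ∑ y : Fin n,
        (w ℓ : ℂ) * (((Amat n K E k x y : ℝ) : ℂ)
            - ((q ℓ : ℂ) - 2) * (if k = ℓ ∧ x = y then 1 else 0)) * u (ℓ, 1, y)
          = ((w ℓ : ℂ) * ∑ y : Fin n, ((Amat n K E k x y : ℝ) : ℂ) * u (ℓ, 1, y))
            - (if k = ℓ then (w ℓ : ℂ) * ((q ℓ : ℂ) - 2) * u (ℓ, 1, x) else 0) := by
      have hterm : ∀ y : Fin n,
          (w ℓ : ℂ) * (((Amat n K E k x y : ℝ) : ℂ)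
              - ((q ℓ : ℂ) - 2) * (if k = ℓ ∧ x = y then 1 else 0)) * u (ℓ, 1, y)
            = (w ℓ : ℂ) * (((Amat n K E k x y : ℝ) : ℂ) * u (ℓ, 1, y))
              - (if x = y then
                  (if k = ℓ then (w ℓ : ℂ) * ((q ℓ : ℂ) - 2) * u (ℓ, 1, y) else 0) else 0) := by
        intro y
        by_cases h1 : k = ℓ <;> by_cases h2 : x = y <;> simp [h1, h2] <;> ring
      rw [Finset.sum_congr rfl fun y _ => hterm y, Finset.sum_sub_distrib, ← Finset.mul_sum,
        Finset.sum_ite_eq Finset.univ x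
          (fun y => if k = ℓ then (w ℓ : ℂ) * ((q ℓ : ℂ) - 2) * u (ℓ, 1, y) else 0)]
      simp only [Finset.mem_univ, if_true]
    rw [part0, part1]
    ring
  rw [Fintype.sum_prod_type, Finset.sum_congr rfl fun ℓ _ => hinner ℓ,
    Finset.sum_sub_distrib, Finset.sum_sub_distrib]
  rw [Finset.sum_ite_eq Finset.univ k (fun ℓ => (w ℓ : ℂ) * ((q ℓ : ℂ) - 1) * u (ℓ, 0, x)),
    Finset.sum_ite_eq Finset.univ k (fun ℓ => (w ℓ : ℂ) * ((q ℓ : ℂ) - 2) * u (ℓ, 1, x))]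
  simp only [Finset.mem_univ, if_true]
  congr 1
  congr 1
  rw [← NN_eq k x (fun y => ∑ ℓ : Fin K, (w ℓ : ℂ) * u (ℓ, 1, y))]
  simp only [Finset.mul_sum]
  rw [Finset.sum_comm]
  exact Finset.sum_congr rfl fun y _ => Finset.sum_congr rfl fun ℓ _ => by ring

lemma NN_lin (k : Fin K) (x : Fin n) (c : Fin K → ℂ) (g : Fin K → Fin n → ℂ) :
    NN E k (fun y => ∑ ℓ : Fin K, c ℓ * g ℓ y) x = ∑ ℓ : Fin K, c ℓ * NN E k (g ℓ) x := by
  simp only [NN]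
  have h1 : ∀ f : {e : Finset (Fin n) // e ∈ E k},
      (if x ∈ f.1 then ∑ y ∈ f.1.erase x, ∑ ℓ : Fin K, c ℓ * g ℓ y else 0)
        = ∑ ℓ : Fin K, c ℓ * (if x ∈ f.1 then ∑ y ∈ f.1.erase x, g ℓ y else 0) := by
    intro f
    split
    · rw [Finset.sum_comm]
      exact Finset.sum_congr rfl fun ℓ _ => (Finset.mul_sum _ _ _).symm
    · simp
  rw [Finset.sum_congr rfl fun f _ => h1 f, Finset.sum_comm]
  exact Finset.sum_congr rfl fun ℓ _ => (Finset.mul_sum _ _ _).symm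

lemma NN_zero (k : Fin K) (x : Fin n) (g : Fin n → ℂ) (hg : ∀ y, g y = 0) :
    NN E k g x = 0 := by
  refine Finset.sum_eq_zero fun f _ => ?_
  split
  · exact Finset.sum_eq_zero fun y _ => hg y
  · rfl

end Aux11

/-- For every `λ ∈ ℂ` with `λ ≠ w_k` and `λ ≠ -w_k(q_k-1)` for all `k`,
`λ` is an eigenvalue of `B` iff it is an eigenvalue of the reduced matrix `B̃`. -/
theorem statement11 (n K : ℕ) (hn : 1 ≤ n) (hK : 1 ≤ K)
    (q : Fin K → ℕ) (hq : ∀ k, 2 ≤ q k) (w : Fin K → ℝ)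
    (E : Fin K → Finset (Finset (Fin n)))
    (hcard : ∀ k, ∀ e ∈ E k, e.card = q k)
    (lam : ℂ)
    (h1 : ∀ k, lam ≠ (w k : ℂ))
    (h2 : ∀ k, lam ≠ -((w k : ℂ) * ((q k : ℂ) - 1))) :
    (∃ v : OEdge n K E → ℂ, v ≠ 0 ∧
        ((Bmat n K w E).map Complex.ofReal).mulVec v = lam • v) ↔
      (∃ u : Fin K × Fin 2 × Fin n → ℂ, u ≠ 0 ∧
        ((tildeB n K q w E).map Complex.ofReal).mulVec u = lam • u) := by
  have hq1 : ∀ k : Fin K, ((q k : ℂ) - 1) ≠ 0 := by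
    intro k
    have h : (q k : ℂ) ≠ 1 := by
      exact_mod_cast (by have := hq k; omega : q k ≠ 1)
    exact sub_ne_zero.mpr h
  have h2' : ∀ k : Fin K, lam + (w k : ℂ) * ((q k : ℂ) - 1) ≠ 0 := by
    intro k hcon
    exact h2 k (by linear_combination hcon)
  have hsub : ∀ k : Fin K, lam - (w k : ℂ) ≠ 0 := fun k => sub_ne_zero.mpr (h1 k)
  have hfin2 : (1 : Fin 2) ≠ 0 := by decide
  constructor
  · rintro ⟨v, hv0, hv⟩
    set U : Fin K × Fin 2 × Fin n → ℂ := fun p =>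
      if p.2.1 = 0 then
        ((q p.1 : ℂ) - 1)⁻¹ * (Aux11.tF v p.1 p.2.2 - ((q p.1 : ℂ) - 2) * Aux11.sF v p.1 p.2.2)
      else Aux11.sF v p.1 p.2.2 with hU
    have hu1 : ∀ (ℓ : Fin K) (y : Fin n), U (ℓ, 1, y) = Aux11.sF v ℓ y := by
      intro ℓ y; rw [hU]; exact if_neg hfin2
    have hu0 : ∀ (k : Fin K) (y : Fin n), U (k, 0, y)
        = ((q k : ℂ) - 1)⁻¹ * (Aux11.tF v k y - ((q k : ℂ) - 2) * Aux11.sF v k y) := by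
      intro k y; rw [hU]; exact if_pos rfl
    have hu0' : ∀ (k : Fin K) (y : Fin n), ((q k : ℂ) - 1) * U (k, 0, y)
        = Aux11.tF v k y - ((q k : ℂ) - 2) * Aux11.sF v k y := by
      intro k y
      rw [hu0, ← mul_assoc, mul_inv_cancel₀ (hq1 k), one_mul]
    refine ⟨U, ?_, ?_⟩
    · -- U ≠ 0
      intro hU0
      apply hv0
      have hs : ∀ (ℓ : Fin K) (y : Fin n), Aux11.sF v ℓ y = 0 := by
        intro ℓ y
        rw [← hu1 ℓ y, hU0]; rfl
      funext z
      obtain ⟨⟨x, σ⟩, hx⟩ := z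
      obtain ⟨k, f⟩ := σ
      -- the local function on the edge f
      have hstar : ∀ y ∈ f.1, (lam - (w k : ℂ)) * Aux11.Vx E v y ⟨k, f⟩
          = -(w k : ℂ) * ∑ z ∈ f.1, Aux11.Vx E v z ⟨k, f⟩ := by
        intro y hy
        have h := Aux11.star hv k f hy
        simp only [hs, mul_zero, Finset.sum_const_zero, zero_sub] at h
        rw [Finset.sum_erase_eq_sub hy] at h
        linear_combination h
      have hsig : ∑ z ∈ f.1, Aux11.Vx E v z ⟨k, f⟩ = 0 := by
        have hsum : ∑ y ∈ f.1, (lam - (w k : ℂ)) * Aux11.Vx E v y ⟨k, f⟩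
            = ∑ y ∈ f.1, -(w k : ℂ) * ∑ z ∈ f.1, Aux11.Vx E v z ⟨k, f⟩ :=
          Finset.sum_congr rfl hstar
        rw [← Finset.mul_sum, Finset.sum_const, hcard k f.1 f.2, nsmul_eq_mul] at hsum
        have hz : (lam + (w k : ℂ) * ((q k : ℂ) - 1))
            * ∑ z ∈ f.1, Aux11.Vx E v z ⟨k, f⟩ = 0 := by linear_combination hsum
        exact (mul_eq_zero.mp hz).resolve_left (h2' k)
      have h := hstar x hx
      rw [hsig, mul_zero] at h
      have hVx0 : Aux11.Vx E v x ⟨k, f⟩ = 0 :=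
        (mul_eq_zero.mp h).resolve_left (hsub k)
      rw [← Aux11.Vx_apply v ⟨(x, ⟨k, f⟩), hx⟩, hVx0]; rfl
    · -- eigen equation for U
      funext p
      obtain ⟨k, a, x⟩ := p
      have E1 := Aux11.eOne hv k x
      have E2 := Aux11.eTwo hv k (hcard k) x
      have hsplit : ∑ ℓ : Fin K, (w ℓ : ℂ) * (((q k : ℂ) - 1)
            * (Aux11.dC E k x * Aux11.sF v ℓ x)
            + ((q k : ℂ) - 2) * Aux11.NN E k (Aux11.sF v ℓ) x)
          = ((q k : ℂ) - 1) * Aux11.dC E k x * (∑ ℓ : Fin K, (w ℓ : ℂ) * Aux11.sF v ℓ x)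
            + ((q k : ℂ) - 2) * ∑ ℓ : Fin K, (w ℓ : ℂ) * Aux11.NN E k (Aux11.sF v ℓ) x := by
        simp only [mul_add, Finset.sum_add_distrib, Finset.mul_sum]
        congr 1 <;> exact Finset.sum_congr rfl fun ℓ _ => by ring
      rw [hsplit] at E2
      have ha : a = 0 ∨ a = 1 := by
        have : ∀ b : Fin 2, b = 0 ∨ b = 1 := by decide
        exact this a
      rcases ha with ha | ha <;> subst ha
      · rw [Aux11.mulVecT0 q w U k x, Pi.smul_apply, smul_eq_mul]
        simp only [hu1]
        refine mul_left_cancel₀ (hq1 k) ?_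
        linear_combination (-lam) * hu0' k x - E2 + ((q k : ℂ) - 2) * E1
      · rw [Aux11.mulVecT1 q w U k x, Pi.smul_apply, smul_eq_mul]
        simp only [hu1]
        rw [Aux11.NN_lin k x (fun ℓ => ((w ℓ : ℝ) : ℂ)) (fun ℓ => Aux11.sF v ℓ)]
        linear_combination -E1 - (w k : ℂ) * hu0' k x
  · rintro ⟨u, hune, hu⟩
    have R1 : ∀ (k : Fin K) (x : Fin n),
        Aux11.dC E k x * (∑ ℓ : Fin K, (w ℓ : ℂ) * u (ℓ, 1, x)) - (w k : ℂ) * u (k, 1, x)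
          = lam * u (k, 0, x) := by
      intro k x
      have h := congrFun hu (k, 0, x)
      rw [Aux11.mulVecT0 q w u k x, Pi.smul_apply, smul_eq_mul] at h
      exact h
    have R2 : ∀ (k : Fin K) (x : Fin n),
        Aux11.NN E k (fun y => ∑ ℓ : Fin K, (w ℓ : ℂ) * u (ℓ, 1, y)) x
          - (w k : ℂ) * ((q k : ℂ) - 1) * u (k, 0, x)
          - (w k : ℂ) * ((q k : ℂ) - 2) * u (k, 1, x)
          = lam * u (k, 1, x) := by
      intro k x
      have h := congrFun hu (k, 1, x)
      rw [Aux11.mulVecT1 q w u k x, Pi.smul_apply, smul_eq_mul] at h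
      exact h
    have hc : ∀ k : Fin K, (lam - (w k : ℂ)) * (lam + (w k : ℂ) * ((q k : ℂ) - 1)) ≠ 0 :=
      fun k => mul_ne_zero (hsub k) (h2' k)
    set P : Fin n → ℂ := fun y => ∑ ℓ : Fin K, (w ℓ : ℂ) * u (ℓ, 1, y) with hP
    set V : OEdge n K E → ℂ := fun z =>
      ((lam - (w z.1.2.1 : ℂ)) * (lam + (w z.1.2.1 : ℂ) * ((q z.1.2.1 : ℂ) - 1)))⁻¹ *
        (lam * (∑ y ∈ z.1.2.2.1.erase z.1.1, P y)
          - (w z.1.2.1 : ℂ) * ((q z.1.2.1 : ℂ) - 1) * P z.1.1) with hV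
    have hVx : ∀ (ℓ : Fin K) (f : {e : Finset (Fin n) // e ∈ E ℓ}) (y : Fin n),
        Aux11.Vx E V y ⟨ℓ, f⟩
          = if y ∈ f.1 then
              ((lam - (w ℓ : ℂ)) * (lam + (w ℓ : ℂ) * ((q ℓ : ℂ) - 1)))⁻¹ *
                (lam * (∑ z ∈ f.1.erase y, P z) - (w ℓ : ℂ) * ((q ℓ : ℂ) - 1) * P y)
            else 0 := by
      intro ℓ f y
      by_cases h : y ∈ f.1
      · rw [Aux11.Vx, dif_pos h, if_pos h]
      · rw [Aux11.Vx, dif_neg h, if_neg h]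
    have hsu : ∀ (ℓ : Fin K) (y : Fin n), Aux11.sF V ℓ y = u (ℓ, 1, y) := by
      intro ℓ y
      have hform : Aux11.sF V ℓ y
          = ((lam - (w ℓ : ℂ)) * (lam + (w ℓ : ℂ) * ((q ℓ : ℂ) - 1)))⁻¹ *
              (lam * Aux11.NN E ℓ P y
                - (w ℓ : ℂ) * ((q ℓ : ℂ) - 1) * (Aux11.dC E ℓ y * P y)) := by
        simp only [Aux11.sF, hVx]
        have hsp : ∀ f : {e : Finset (Fin n) // e ∈ E ℓ},
            (if y ∈ f.1 then
              ((lam - (w ℓ : ℂ)) * (lam + (w ℓ : ℂ) * ((q ℓ : ℂ) - 1)))⁻¹ *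
                (lam * (∑ z ∈ f.1.erase y, P z) - (w ℓ : ℂ) * ((q ℓ : ℂ) - 1) * P y)
              else 0)
            = ((lam - (w ℓ : ℂ)) * (lam + (w ℓ : ℂ) * ((q ℓ : ℂ) - 1)))⁻¹ * lam *
                (if y ∈ f.1 then ∑ z ∈ f.1.erase y, P z else 0)
              - ((lam - (w ℓ : ℂ)) * (lam + (w ℓ : ℂ) * ((q ℓ : ℂ) - 1)))⁻¹ *
                  ((w ℓ : ℂ) * ((q ℓ : ℂ) - 1) * P y) *
                (if y ∈ f.1 then 1 else 0) := by
          intro f; split <;> ring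
        rw [Finset.sum_congr rfl fun f _ => hsp f, Finset.sum_sub_distrib,
          ← Finset.mul_sum, ← Finset.mul_sum]
        rw [Aux11.NN, Aux11.dC]
        ring
      refine mul_left_cancel₀ (hc ℓ) ?_
      rw [hform, ← mul_assoc, mul_inv_cancel₀ (hc ℓ), one_mul]
      have hr1 := R1 ℓ y
      have hr2 := R2 ℓ y
      have hPy : P y = ∑ m : Fin K, (w m : ℂ) * u (m, 1, y) := by rw [hP]
      rw [← hPy] at hr1
      linear_combination lam * hr2 - (w ℓ : ℂ) * ((q ℓ : ℂ) - 1) * hr1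
    have heig : ((Bmat n K w E).map Complex.ofReal).mulVec V = lam • V := by
      funext z
      rw [Aux11.mulVecB w V z, Pi.smul_apply, smul_eq_mul]
      obtain ⟨⟨x, σ⟩, hx⟩ := z
      obtain ⟨k, f⟩ := σ
      have hca : ((lam - (w k : ℂ)) * (lam + (w k : ℂ) * ((q k : ℂ) - 1))) *
          ((lam - (w k : ℂ)) * (lam + (w k : ℂ) * ((q k : ℂ) - 1)))⁻¹ = 1 :=
        mul_inv_cancel₀ (hc k)
      have hterm1 : ∑ ℓ : Fin K, (w ℓ : ℂ) * ∑ y ∈ f.1.erase x, Aux11.sF V ℓ y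
          = ∑ y ∈ f.1.erase x, P y := by
        simp only [hsu, Finset.mul_sum]
        rw [Finset.sum_comm]
      have hterm2 : ∑ y ∈ f.1.erase x, Aux11.Vx E V y ⟨k, f⟩
          = ((lam - (w k : ℂ)) * (lam + (w k : ℂ) * ((q k : ℂ) - 1)))⁻¹ *
              (lam * (((q k : ℂ) - 1) * P x + ((q k : ℂ) - 2) * ∑ y ∈ f.1.erase x, P y)
                - (w k : ℂ) * ((q k : ℂ) - 1) * ∑ y ∈ f.1.erase x, P y) := by
        rw [Finset.sum_congr rfl fun y hy => by
          rw [hVx k f y, if_pos (Finset.mem_of_mem_erase hy)]]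
        have hsp : ∀ y : Fin n,
            ((lam - (w k : ℂ)) * (lam + (w k : ℂ) * ((q k : ℂ) - 1)))⁻¹ *
              (lam * (∑ z ∈ f.1.erase y, P z) - (w k : ℂ) * ((q k : ℂ) - 1) * P y)
            = (((lam - (w k : ℂ)) * (lam + (w k : ℂ) * ((q k : ℂ) - 1)))⁻¹ * lam) *
                (∑ z ∈ f.1.erase y, P z)
              - (((lam - (w k : ℂ)) * (lam + (w k : ℂ) * ((q k : ℂ) - 1)))⁻¹ *
                  ((w k : ℂ) * ((q k : ℂ) - 1))) * P y := fun y => by ring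
        rw [Finset.sum_congr rfl fun y _ => hsp y, Finset.sum_sub_distrib,
          ← Finset.mul_sum, ← Finset.mul_sum,
          Aux11.dd f.1 x hx P]
        rw [hcard k f.1 f.2]
        ring
      have hVz : V ⟨(x, ⟨k, f⟩), hx⟩
          = ((lam - (w k : ℂ)) * (lam + (w k : ℂ) * ((q k : ℂ) - 1)))⁻¹ *
              (lam * (∑ y ∈ f.1.erase x, P y) - (w k : ℂ) * ((q k : ℂ) - 1) * P x) := by
        rw [hV]
      rw [hterm1, hterm2, hVz]
      linear_combination (-(∑ y ∈ f.1.erase x, P y)) * hca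
    refine ⟨V, ?_, heig⟩
    intro hV0
    apply hune
    have hu1z : ∀ (ℓ : Fin K) (y : Fin n), u (ℓ, 1, y) = 0 := by
      intro ℓ y
      rw [← hsu ℓ y]
      exact Finset.sum_eq_zero fun f _ => Aux11.Vx_zero V hV0 y ⟨ℓ, f⟩
    have hPz : ∀ y : Fin n, P y = 0 := by
      intro y
      rw [hP]
      exact Finset.sum_eq_zero fun ℓ _ => by rw [hu1z, mul_zero]
    have hu0z : ∀ (k : Fin K) (x : Fin n), u (k, 0, x) = 0 := by
      intro k x
      have r1 := R1 k x
      have r2 := R2 k x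
      have hNN : Aux11.NN E k P x = 0 := Aux11.NN_zero k x P hPz
      have hz : (lam - (w k : ℂ)) * (((q k : ℂ) - 1) * u (k, 0, x)) = 0 := by
        simp only [hu1z, hPz, mul_zero, sub_zero, Finset.sum_const_zero] at r1 r2
        rw [hNN] at r2
        linear_combination r2 - ((q k : ℂ) - 1) * r1
      have h' := (mul_eq_zero.mp hz).resolve_left (hsub k)
      exact (mul_eq_zero.mp h').resolve_left (hq1 k)
    funext p
    obtain ⟨k, a, x⟩ := p
    rcases (by decide : ∀ b : Fin 2, b = 0 ∨ b = 1) a with ha | ha <;> subst ha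
    · exact hu0z k x
    · exact hu1z k x
end

section
/- Let v ∈ ℝ^{H⃗} and λ ∈ ℝ satisfy B v = λ v, and suppose λ ≠ w^(k) and λ ≠ −w^(k)(q^(k)−1) for all k ∈ {1,…,K}. For each k set v_k^← = (q^(k)−1)^{−1} · S_k (J_k − (q^(k)−2) I_k) v (this equals S_k J_k^{−1} v, where J_k^{−1} denotes the inverse of J_k on the E_k block) and v_k^→ = S_k v, and let ṽ = (v_1^←, v_1^→, …, v_K^←, v_K^→) ∈ ℝ^{2Kn}. Then B̃ ṽ = λ ṽ; in particular, if ṽ ≠ 0 then ṽ is an eigenvector of the reduced non-backtracking matrix B̃ with eigenvalue λ. -/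
open Matrix Finset

namespace S12
variable {n K : ℕ} {E : Fin K → Finset (Finset (Fin n))}

abbrev T (n K : ℕ) (E : Fin K → Finset (Finset (Fin n))) : Type :=
  Σ k : Fin K, {e : Finset (Fin n) // e ∈ E k}

noncomputable def P (v : OEdge n K E → ℝ) (s : T n K E) (x : Fin n) : ℝ :=
  ∑ y ∈ s.2.1.attach, if y.1 = x then v ⟨(y.1, s), y.2⟩ else 0

noncomputable def Q (v : OEdge n K E → ℝ) (s : T n K E) (x : Fin n) : ℝ :=
  ∑ y ∈ s.2.1.attach, if y.1 = x then 0 else v ⟨(y.1, s), y.2⟩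

noncomputable def Usum (f : Fin n → ℝ) (s : T n K E) (x : Fin n) : ℝ :=
  ∑ z ∈ s.2.1.attach, if z.1 = x then 0 else f z.1

noncomputable def uu (w : Fin K → ℝ) (v : OEdge n K E → ℝ) (x : Fin n) : ℝ :=
  ∑ xe : OEdge n K E, if xe.1.1 = x then w xe.1.2.1 * v xe else 0

def oeEquiv : (Σ s : T n K E, {y : Fin n // y ∈ s.2.1}) ≃ OEdge n K E where
  toFun p := ⟨(p.2.1, p.1), p.2.2⟩
  invFun xe := ⟨xe.1.2, ⟨xe.1.1, xe.2⟩⟩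
  left_inv p := by rcases p with ⟨s, ⟨y, hy⟩⟩; rfl
  right_inv xe := by rcases xe with ⟨⟨x, s⟩, hx⟩; rfl

lemma sum_oedge (f : OEdge n K E → ℝ) :
    ∑ xe : OEdge n K E, f xe
      = ∑ s : T n K E, ∑ y ∈ s.2.1.attach, f ⟨(y.1, s), y.2⟩ := by
  rw [← Equiv.sum_comp (oeEquiv (n := n) (K := K) (E := E)) f]
  rw [← Finset.univ_sigma_univ, Finset.sum_sigma]
  exact Finset.sum_congr rfl fun s _ => by
    rw [Finset.univ_eq_attach]; rfl

lemma collapse1 (s : T n K E) {x : Fin n} (hx : x ∈ s.2.1) (g : {a // a ∈ s.2.1} → ℝ) :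
    (∑ z ∈ s.2.1.attach, if z.1 = x then g z else 0) = g ⟨x, hx⟩ := by
  have h : ∀ z : {a // a ∈ s.2.1}, (z.1 = x) = (z = ⟨x, hx⟩) := fun z => by
    simp [Subtype.ext_iff]
  simp_rw [h]
  rw [Finset.sum_ite_eq' s.2.1.attach (⟨x, hx⟩ : {a // a ∈ s.2.1}) g]
  simp

lemma collapse0 (s : T n K E) {x : Fin n} (hx : x ∉ s.2.1) (g : {a // a ∈ s.2.1} → ℝ) :
    (∑ z ∈ s.2.1.attach, if z.1 = x then g z else 0) = 0 := by
  refine Finset.sum_eq_zero fun z _ => ?_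
  rw [if_neg]; rintro rfl; exact hx z.2

lemma Pval (v : OEdge n K E → ℝ) (s : T n K E) {x : Fin n} (hx : x ∈ s.2.1) :
    P v s x = v ⟨(x, s), hx⟩ := collapse1 s hx _

lemma Pzero (v : OEdge n K E → ℝ) (s : T n K E) {x : Fin n} (hx : x ∉ s.2.1) :
    P v s x = 0 := collapse0 s hx _

lemma count_card {e : Finset (Fin n)} {x z : Fin n} (hx : x ∈ e) (hz : z ∈ e) :
    (e.filter fun a => ¬a = x ∧ ¬z = a).card = if z = x then e.card - 1 else e.card - 2 := by
  by_cases h : z = x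
  · subst h
    rw [if_pos rfl, show (e.filter fun a => ¬a = z ∧ ¬z = a) = e.erase z by
      ext a; simp only [Finset.mem_filter, Finset.mem_erase, Ne, eq_comm (a := z)]; tauto]
    exact Finset.card_erase_of_mem hz
  · rw [if_neg h, show (e.filter fun a => ¬a = x ∧ ¬z = a) = (e.erase x).erase z by
      ext a; simp only [Finset.mem_filter, Finset.mem_erase, Ne, eq_comm (a := z)]; tauto]
    rw [Finset.card_erase_of_mem (Finset.mem_erase.2 ⟨h, hz⟩),
        Finset.card_erase_of_mem hx]
    omega

lemma DC (s : T n K E) {x : Fin n} (hx : x ∈ s.2.1) (hc : 2 ≤ s.2.1.card)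
    (g : {a // a ∈ s.2.1} → ℝ) :
    (∑ y ∈ s.2.1.attach, if y.1 = x then 0
        else ∑ z ∈ s.2.1.attach, if z.1 = y.1 then 0 else g z)
    = ((s.2.1.card : ℝ) - 1) * (∑ z ∈ s.2.1.attach, if z.1 = x then g z else 0)
      + ((s.2.1.card : ℝ) - 2) * (∑ z ∈ s.2.1.attach, if z.1 = x then 0 else g z) := by
  have step1 : (∑ y ∈ s.2.1.attach, if y.1 = x then 0
        else ∑ z ∈ s.2.1.attach, if z.1 = y.1 then 0 else g z)
      = ∑ z ∈ s.2.1.attach, ∑ y ∈ s.2.1.attach,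
          (if ¬y.1 = x ∧ ¬z.1 = y.1 then g z else 0) := by
    rw [Finset.sum_comm]
    refine Finset.sum_congr rfl fun y _ => ?_
    by_cases h : y.1 = x
    · simp [h]
    · rw [if_neg h]
      refine Finset.sum_congr rfl fun z _ => ?_
      by_cases h2 : z.1 = y.1 <;> simp [h, h2]
  rw [step1]
  have step2 : ∀ z : {a // a ∈ s.2.1},
      (∑ y ∈ s.2.1.attach, if ¬y.1 = x ∧ ¬z.1 = y.1 then g z else 0)
        = (if z.1 = x then ((s.2.1.card - 1 : ℕ) : ℝ) else ((s.2.1.card - 2 : ℕ) : ℝ)) * g z := by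
    intro z
    rw [Finset.sum_attach s.2.1 (fun a => if ¬a = x ∧ ¬z.1 = a then g z else 0),
        ← Finset.sum_filter, Finset.sum_const, nsmul_eq_mul, count_card hx z.2]
    by_cases h : z.1 = x <;> simp [h]
  rw [Finset.sum_congr rfl (fun z _ => step2 z)]
  have c1 : ((s.2.1.card - 1 : ℕ) : ℝ) = (s.2.1.card : ℝ) - 1 := by
    rw [Nat.cast_sub (by omega)]; norm_num
  have c2 : ((s.2.1.card - 2 : ℕ) : ℝ) = (s.2.1.card : ℝ) - 2 := by
    rw [Nat.cast_sub (by omega)]; norm_num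
  rw [Finset.mul_sum, Finset.mul_sum, ← Finset.sum_add_distrib]
  refine Finset.sum_congr rfl fun z _ => ?_
  by_cases h : z.1 = x <;> simp [h, c1, c2]

end S12

namespace S12
variable {n K : ℕ} {E : Fin K → Finset (Finset (Fin n))}

lemma mulVec_apply {α β : Type*} [Fintype β] (M : Matrix α β ℝ) (v : β → ℝ) (x : α) :
    M.mulVec v x = ∑ j, M x j * v j := rfl

lemma uu_eq (w : Fin K → ℝ) (v : OEdge n K E → ℝ) (x : Fin n) :
    uu w v x = ∑ ℓ, w ℓ * (Smat n K E ℓ).mulVec v x := by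
  unfold uu
  simp_rw [mulVec_apply, Smat, Finset.mul_sum]
  rw [Finset.sum_comm]
  refine Finset.sum_congr rfl fun xe _ => ?_
  by_cases hx : x = xe.1.1
  · have : ∀ ℓ : Fin K, w ℓ * ((if x = xe.1.1 ∧ xe.1.2.1 = ℓ then (1:ℝ) else 0) * v xe)
        = if xe.1.2.1 = ℓ then w ℓ * v xe else 0 := by
      intro ℓ; by_cases h : xe.1.2.1 = ℓ <;> simp [h, hx]
    rw [Finset.sum_congr rfl fun ℓ _ => this ℓ, Finset.sum_ite_eq]
    simp [hx.symm]
  · have hx' : ¬ xe.1.1 = x := fun h => hx h.symm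
    simp [hx, hx']

lemma partA (w : Fin K → ℝ) (v : OEdge n K E → ℝ) (s : S12.T n K E) (x : Fin n) :
    (∑ yf : OEdge n K E, if yf.1.1 ∈ s.2.1 ∧ ¬yf.1.1 = x then w yf.1.2.1 * v yf else 0)
      = Usum (uu w v) s x := by
  unfold Usum uu
  have step1 : ∀ z : {a // a ∈ s.2.1},
      (if z.1 = x then 0 else ∑ xe : OEdge n K E, if xe.1.1 = z.1 then w xe.1.2.1 * v xe else 0)
      = ∑ xe : OEdge n K E, (if z.1 = x then 0 else if xe.1.1 = z.1 then w xe.1.2.1 * v xe else 0) := by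
    intro z; by_cases h : z.1 = x <;> simp [h]
  rw [Finset.sum_congr rfl fun z _ => step1 z, Finset.sum_comm]
  refine Finset.sum_congr rfl fun yf _ => ?_
  have step2 : ∀ z : {a // a ∈ s.2.1},
      (if z.1 = x then 0 else if yf.1.1 = z.1 then w yf.1.2.1 * v yf else 0)
      = (if z.1 = yf.1.1 then (if ¬yf.1.1 = x then w yf.1.2.1 * v yf else 0) else 0) := by
    intro z
    by_cases h2 : z.1 = yf.1.1
    · rw [if_pos h2]
      by_cases h1 : z.1 = x
      · rw [if_pos h1, if_neg (not_not_intro (h2.symm.trans h1))]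
      · rw [if_neg h1, if_pos h2.symm, if_pos (fun hc => h1 (h2.trans hc))]
    · rw [if_neg h2]
      by_cases h1 : z.1 = x
      · rw [if_pos h1]
      · rw [if_neg h1, if_neg (fun hc : yf.1.1 = z.1 => h2 hc.symm)]
  rw [Finset.sum_congr rfl fun z _ => step2 z]
  by_cases hm : yf.1.1 ∈ s.2.1
  · rw [collapse1 s hm]
    by_cases h : yf.1.1 = x
    · rw [if_neg (fun hc => hc.2 h), if_neg (not_not_intro h)]
    · rw [if_pos ⟨hm, h⟩, if_pos h]
  · rw [collapse0 s hm, if_neg (fun hc => hm hc.1)]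

lemma partB (w : Fin K → ℝ) (v : OEdge n K E → ℝ) (s : S12.T n K E) (x : Fin n) :
    (∑ yf : OEdge n K E,
        if yf.1.2 = s ∧ yf.1.1 ∈ s.2.1 ∧ ¬yf.1.1 = x then w yf.1.2.1 * v yf else 0)
      = w s.1 * Q v s x := by
  rw [sum_oedge (fun yf => if yf.1.2 = s ∧ yf.1.1 ∈ s.2.1 ∧ ¬yf.1.1 = x
      then w yf.1.2.1 * v yf else 0)]
  have step1 : ∀ t : S12.T n K E, (∑ y ∈ t.2.1.attach,
      if t = s ∧ y.1 ∈ s.2.1 ∧ ¬y.1 = x then w t.1 * v ⟨(y.1, t), y.2⟩ else 0)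
      = if t = s then (∑ y ∈ t.2.1.attach,
          if y.1 ∈ s.2.1 ∧ ¬y.1 = x then w t.1 * v ⟨(y.1, t), y.2⟩ else 0) else 0 := by
    intro t; by_cases h : t = s <;> simp [h]
  rw [Finset.sum_congr rfl fun t _ => step1 t, Finset.sum_ite_eq' Finset.univ s]
  simp only [Finset.mem_univ, if_pos]
  unfold Q
  rw [Finset.mul_sum]
  refine Finset.sum_congr rfl fun y _ => ?_
  have hy : y.1 ∈ s.2.1 := y.2
  by_cases h : y.1 = x
  · rw [if_neg (fun hc => hc.2 h), if_pos h, mul_zero]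
  · rw [if_pos ⟨hy, h⟩, if_neg h]

lemma E1 {w : Fin K → ℝ} {v : OEdge n K E → ℝ} {lam : ℝ}
    (hv : (Bmat n K w E).mulVec v = lam • v) (xe : OEdge n K E) :
    Usum (uu w v) xe.1.2 xe.1.1 - w xe.1.2.1 * Q v xe.1.2 xe.1.1 = lam * v xe := by
  have h := congrFun hv xe
  rw [mulVec_apply] at h
  simp only [Pi.smul_apply, smul_eq_mul] at h
  rw [← h]
  have split : ∀ yf : OEdge n K E, Bmat n K w E xe yf * v yf
      = (if yf.1.1 ∈ xe.1.2.2.1 ∧ ¬yf.1.1 = xe.1.1 then w yf.1.2.1 * v yf else 0)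
        - (if yf.1.2 = xe.1.2 ∧ yf.1.1 ∈ xe.1.2.2.1 ∧ ¬yf.1.1 = xe.1.1
            then w yf.1.2.1 * v yf else 0) := by
    intro yf; unfold Bmat
    by_cases c1 : yf.1.1 ∈ xe.1.2.2.1 <;> by_cases c2 : yf.1.1 = xe.1.1 <;>
      by_cases c3 : yf.1.2 = xe.1.2 <;> simp [c1, c2, c3]
  rw [Finset.sum_congr rfl fun yf _ => split yf, Finset.sum_sub_distrib]
  rw [partA w v xe.1.2 xe.1.1, partB w v xe.1.2 xe.1.1]

end S12

namespace S12
variable {n K : ℕ} {E : Fin K → Finset (Finset (Fin n))}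

lemma DC_U (f : Fin n → ℝ) (s : S12.T n K E) {x : Fin n} (hx : x ∈ s.2.1)
    (hc : 2 ≤ s.2.1.card) :
    (∑ y ∈ s.2.1.attach, if y.1 = x then 0 else Usum f s y.1)
      = ((s.2.1.card : ℝ) - 1) * f x + ((s.2.1.card : ℝ) - 2) * Usum f s x := by
  unfold Usum
  rw [DC s hx hc (fun z => f z.1), collapse1 s hx (fun z => f z.1)]

lemma DC_Q (v : OEdge n K E → ℝ) (s : S12.T n K E) {x : Fin n} (hx : x ∈ s.2.1)
    (hc : 2 ≤ s.2.1.card) :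
    (∑ y ∈ s.2.1.attach, if y.1 = x then 0 else Q v s y.1)
      = ((s.2.1.card : ℝ) - 1) * P v s x + ((s.2.1.card : ℝ) - 2) * Q v s x := by
  unfold Q P
  exact DC s hx hc (fun z => v ⟨(z.1, s), z.2⟩)

lemma E2 {w : Fin K → ℝ} {v : OEdge n K E → ℝ} {lam : ℝ}
    (hv : (Bmat n K w E).mulVec v = lam • v)
    (s : S12.T n K E) {x : Fin n} (hx : x ∈ s.2.1) (hc : 2 ≤ s.2.1.card) :
    lam * (Q v s x - ((s.2.1.card : ℝ) - 2) * P v s x)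
      = ((s.2.1.card : ℝ) - 1) * (uu w v x - w s.1 * P v s x) := by
  have hP : lam * P v s x = Usum (uu w v) s x - w s.1 * Q v s x := by
    rw [Pval v s hx]
    exact (E1 hv ⟨(x, s), hx⟩).symm
  have hQ : lam * Q v s x
      = (((s.2.1.card : ℝ) - 1) * uu w v x + ((s.2.1.card : ℝ) - 2) * Usum (uu w v) s x)
        - w s.1 * (((s.2.1.card : ℝ) - 1) * P v s x + ((s.2.1.card : ℝ) - 2) * Q v s x) := by
    have e1 : lam * Q v s x = ∑ y ∈ s.2.1.attach,
        (if y.1 = x then 0 else (Usum (uu w v) s y.1 - w s.1 * Q v s y.1)) := by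
      unfold Q
      rw [Finset.mul_sum]
      refine Finset.sum_congr rfl fun y _ => ?_
      by_cases h : y.1 = x
      · rw [if_pos h, if_pos h, mul_zero]
      · rw [if_neg h, if_neg h]
        exact (E1 hv ⟨(y.1, s), y.2⟩).symm
    have e2 : ∀ y : {a // a ∈ s.2.1},
        (if y.1 = x then 0 else (Usum (uu w v) s y.1 - w s.1 * Q v s y.1))
        = (if y.1 = x then 0 else Usum (uu w v) s y.1)
          - w s.1 * (if y.1 = x then 0 else Q v s y.1) := by
      intro y; by_cases h : y.1 = x <;> simp [h]
    rw [e1, Finset.sum_congr rfl fun y _ => e2 y, Finset.sum_sub_distrib, ← Finset.mul_sum,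
        DC_U (uu w v) s hx hc, DC_Q v s hx hc]
  linear_combination hQ - ((s.2.1.card : ℝ) - 2) * hP

lemma card_layer (k : Fin K) (p : Finset (Fin n) → Prop) [DecidablePred p] :
    ((((E k).filter p).card : ℕ) : ℝ)
      = ∑ s : S12.T n K E, if s.1 = k ∧ p s.2.1 then 1 else 0 := by
  rw [← Finset.univ_sigma_univ, Finset.sum_sigma]
  have step : ∀ k' : Fin K,
      (∑ e : {e : Finset (Fin n) // e ∈ E k'}, if k' = k ∧ p e.1 then (1:ℝ) else 0)
      = if k' = k then ((((E k).filter p).card : ℕ) : ℝ) else 0 := by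
    intro k'
    by_cases h : k' = k
    · subst h
      rw [if_pos rfl]
      simp only [true_and]
      rw [Finset.univ_eq_attach, Finset.sum_attach (E k') (fun e => if p e then (1:ℝ) else 0),
        Finset.sum_boole]
    · rw [if_neg h]
      exact Finset.sum_eq_zero fun e _ => if_neg (fun hc => h hc.1)
  rw [Finset.sum_congr rfl fun k' _ => step k', Finset.sum_ite_eq' Finset.univ k,
    if_pos (Finset.mem_univ k)]

lemma LAU (w : Fin K → ℝ) (v : OEdge n K E → ℝ) (k : Fin K) (x : Fin n) :
    (∑ y : Fin n, Amat n K E k x y * uu w v y)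
      = ∑ s : S12.T n K E, if s.1 = k ∧ x ∈ s.2.1 then Usum (uu w v) s x else 0 := by
  have e1 : ∀ y, Amat n K E k x y * uu w v y
      = ∑ s : S12.T n K E,
          if s.1 = k ∧ (x ∈ s.2.1 ∧ y ∈ s.2.1 ∧ x ≠ y) then uu w v y else 0 := by
    intro y
    rw [show Amat n K E k x y
        = ∑ s : S12.T n K E, if s.1 = k ∧ (x ∈ s.2.1 ∧ y ∈ s.2.1 ∧ x ≠ y) then (1:ℝ) else 0
      from card_layer k (fun e => x ∈ e ∧ y ∈ e ∧ x ≠ y), Finset.sum_mul]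
    refine Finset.sum_congr rfl fun s _ => ?_
    by_cases h : s.1 = k ∧ (x ∈ s.2.1 ∧ y ∈ s.2.1 ∧ x ≠ y)
    · rw [if_pos h, if_pos h, one_mul]
    · rw [if_neg h, if_neg h, zero_mul]
  rw [Finset.sum_congr rfl fun y _ => e1 y, Finset.sum_comm]
  refine Finset.sum_congr rfl fun s _ => ?_
  by_cases hk : s.1 = k
  · by_cases hx : x ∈ s.2.1
    · rw [if_pos ⟨hk, hx⟩]
      have e2 : ∀ y : Fin n,
          (if s.1 = k ∧ (x ∈ s.2.1 ∧ y ∈ s.2.1 ∧ x ≠ y) then uu w v y else 0)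
          = (if y ∈ s.2.1 then (if y = x then 0 else uu w v y) else 0) := by
        intro y
        by_cases hy : y ∈ s.2.1
        · by_cases hxy : y = x
          · rw [if_pos hy, if_pos hxy, if_neg (fun hc => hc.2.2.2 hxy.symm)]
          · rw [if_pos hy, if_neg hxy, if_pos ⟨hk, hx, hy, fun hc => hxy hc.symm⟩]
        · rw [if_neg hy, if_neg (fun hc => hy hc.2.2.1)]
      rw [Finset.sum_congr rfl fun y _ => e2 y,
        Finset.sum_ite_mem Finset.univ s.2.1 (fun y => if y = x then 0 else uu w v y),
        Finset.univ_inter]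
      unfold Usum
      rw [Finset.sum_attach s.2.1 (fun a => if a = x then 0 else uu w v a)]
    · rw [if_neg (fun hc => hx hc.2)]
      exact Finset.sum_eq_zero fun y _ => if_neg (fun hc => hx hc.2.1)
  · rw [if_neg (fun hc => hk hc.1)]
    exact Finset.sum_eq_zero fun y _ => if_neg (fun hc => hk hc.1)

lemma L_vr (v : OEdge n K E → ℝ) (k : Fin K) (x : Fin n) :
    (Smat n K E k).mulVec v x
      = ∑ s : S12.T n K E, if s.1 = k ∧ x ∈ s.2.1 then P v s x else 0 := by
  rw [mulVec_apply]
  have e1 : ∀ ye : OEdge n K E, Smat n K E k x ye * v ye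
      = (if x = ye.1.1 ∧ ye.1.2.1 = k then v ye else 0) := by
    intro ye; unfold Smat
    by_cases h : x = ye.1.1 ∧ ye.1.2.1 = k
    · rw [if_pos h, if_pos h, one_mul]
    · rw [if_neg h, if_neg h, zero_mul]
  rw [Finset.sum_congr rfl fun ye _ => e1 ye,
      sum_oedge (fun ye => if x = ye.1.1 ∧ ye.1.2.1 = k then v ye else 0)]
  refine Finset.sum_congr rfl fun s _ => ?_
  by_cases hk : s.1 = k
  · have e2 : ∀ y : {a // a ∈ s.2.1},
        (if x = y.1 ∧ s.1 = k then v ⟨(y.1, s), y.2⟩ else 0)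
        = (if y.1 = x then v ⟨(y.1, s), y.2⟩ else 0) := by
      intro y; by_cases h : y.1 = x
      · rw [if_pos ⟨h.symm, hk⟩, if_pos h]
      · rw [if_neg (fun hc => h hc.1.symm), if_neg h]
    rw [Finset.sum_congr rfl fun y _ => e2 y]
    by_cases hx : x ∈ s.2.1
    · rw [if_pos ⟨hk, hx⟩]; rfl
    · rw [if_neg (fun hc => hx hc.2)]
      exact collapse0 s hx _
  · rw [if_neg (fun hc => hk hc.1)]
    exact Finset.sum_eq_zero fun y _ => if_neg (fun hc => hk hc.2)

lemma L_N (v : OEdge n K E → ℝ) (k : Fin K) (c : ℝ) (ze : OEdge n K E)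
    (hk : ze.1.2.1 = k) :
    ((Jlayer n K E k - c • Ilayer n K E k).mulVec v) ze
      = Q v ze.1.2 ze.1.1 - c * v ze := by
  rw [mulVec_apply]
  have e1 : ∀ yf, (Jlayer n K E k - c • Ilayer n K E k) ze yf * v yf
      = (if ze.1.2 = yf.1.2 ∧ ¬ze.1.1 = yf.1.1 then v yf else 0)
        - c * (if ze = yf then v yf else 0) := by
    intro yf
    simp only [Matrix.sub_apply, Matrix.smul_apply, smul_eq_mul]
    unfold Jlayer Ilayer
    by_cases c3 : ze = yf
    · subst c3
      rw [if_neg (show ¬(ze.1.2 = ze.1.2 ∧ ze.1.1 ≠ ze.1.1 ∧ ze.1.2.1 = k) from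
            fun hc => hc.2.1 rfl),
          if_pos (show ze = ze ∧ ze.1.2.1 = k from ⟨rfl, hk⟩),
          if_neg (show ¬(ze.1.2 = ze.1.2 ∧ ¬ze.1.1 = ze.1.1) from fun hc => hc.2 rfl),
          if_pos (show ze = ze from rfl)]
      ring
    · rw [if_neg (show ¬(ze = yf ∧ ze.1.2.1 = k) from fun hc => c3 hc.1),
          if_neg c3]
      by_cases cA : ze.1.2 = yf.1.2 ∧ ¬ze.1.1 = yf.1.1
      · rw [if_pos (show ze.1.2 = yf.1.2 ∧ ze.1.1 ≠ yf.1.1 ∧ ze.1.2.1 = k from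
            ⟨cA.1, cA.2, hk⟩), if_pos cA]
        ring
      · rw [if_neg (show ¬(ze.1.2 = yf.1.2 ∧ ze.1.1 ≠ yf.1.1 ∧ ze.1.2.1 = k) from
            fun hc => cA ⟨hc.1, hc.2.1⟩), if_neg cA]
        ring
  rw [Finset.sum_congr rfl fun yf _ => e1 yf, Finset.sum_sub_distrib, ← Finset.mul_sum]
  congr 1
  · rw [sum_oedge (fun yf => if ze.1.2 = yf.1.2 ∧ ¬ze.1.1 = yf.1.1 then v yf else 0)]
    have e2 : ∀ t : S12.T n K E,
        (∑ y ∈ t.2.1.attach, if ze.1.2 = t ∧ ¬ze.1.1 = y.1 then v ⟨(y.1, t), y.2⟩ else 0)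
        = if t = ze.1.2
            then (∑ y ∈ t.2.1.attach, if ¬ze.1.1 = y.1 then v ⟨(y.1, t), y.2⟩ else 0) else 0 := by
      intro t
      by_cases h : t = ze.1.2
      · subst h
        rw [if_pos rfl]
        exact Finset.sum_congr rfl fun y _ => by rw [if_congr (and_iff_right rfl) rfl rfl]
      · rw [if_neg h]
        exact Finset.sum_eq_zero fun y _ => if_neg (fun hc => h hc.1.symm)
    rw [Finset.sum_congr rfl fun t _ => e2 t, Finset.sum_ite_eq' Finset.univ ze.1.2,
      if_pos (Finset.mem_univ _)]
    unfold Q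
    refine Finset.sum_congr rfl fun y _ => ?_
    by_cases h : y.1 = ze.1.1
    · rw [if_neg (fun hc => hc h.symm), if_pos h]
    · rw [if_pos (fun hc => h hc.symm), if_neg h]
  · rw [Finset.sum_ite_eq Finset.univ ze v, if_pos (Finset.mem_univ _)]

lemma L_vl (v : OEdge n K E → ℝ) (k : Fin K) (x : Fin n) (c : ℝ) :
    (Smat n K E k * (Jlayer n K E k - c • Ilayer n K E k)).mulVec v x
      = ∑ s : S12.T n K E, if s.1 = k ∧ x ∈ s.2.1 then Q v s x - c * P v s x else 0 := by
  rw [← Matrix.mulVec_mulVec, mulVec_apply]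
  have e1 : ∀ ze : OEdge n K E,
      Smat n K E k x ze * ((Jlayer n K E k - c • Ilayer n K E k).mulVec v) ze
      = (if x = ze.1.1 ∧ ze.1.2.1 = k then Q v ze.1.2 ze.1.1 - c * v ze else 0) := by
    intro ze; unfold Smat
    by_cases h : x = ze.1.1 ∧ ze.1.2.1 = k
    · rw [if_pos h, if_pos h, one_mul, L_N v k c ze h.2]
    · rw [if_neg h, if_neg h, zero_mul]
  rw [Finset.sum_congr rfl fun ze _ => e1 ze,
      sum_oedge (fun ze => if x = ze.1.1 ∧ ze.1.2.1 = k
        then Q v ze.1.2 ze.1.1 - c * v ze else 0)]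
  refine Finset.sum_congr rfl fun s _ => ?_
  by_cases hk : s.1 = k
  · have e2 : ∀ y : {a // a ∈ s.2.1},
        (if x = y.1 ∧ s.1 = k then Q v s y.1 - c * v ⟨(y.1, s), y.2⟩ else 0)
        = (if y.1 = x then Q v s x - c * v ⟨(y.1, s), y.2⟩ else 0) := by
      intro y
      by_cases h : y.1 = x
      · rw [if_pos ⟨h.symm, hk⟩, if_pos h, show Q v s y.1 = Q v s x by rw [h]]
      · rw [if_neg (fun hc => h hc.1.symm), if_neg h]
    rw [Finset.sum_congr rfl fun y _ => e2 y]
    by_cases hx : x ∈ s.2.1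
    · rw [if_pos ⟨hk, hx⟩, collapse1 s hx (fun y => Q v s x - c * v ⟨(y.1, s), y.2⟩),
        Pval v s hx]
    · rw [if_neg (fun hc => hx hc.2), collapse0 s hx]
  · rw [if_neg (fun hc => hk hc.1)]
    exact Finset.sum_eq_zero fun y _ => if_neg (fun hc => hk hc.2)

lemma Main1 {w : Fin K → ℝ} {v : OEdge n K E → ℝ} {lam : ℝ}
    (hv : (Bmat n K w E).mulVec v = lam • v) (q : Fin K → ℕ) (hq : ∀ k, 2 ≤ q k)
    (hcard : ∀ k, ∀ e ∈ E k, e.card = q k) (k : Fin K) (x : Fin n) :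
    lam * (∑ s : S12.T n K E,
        if s.1 = k ∧ x ∈ s.2.1 then Q v s x - ((q k : ℝ) - 2) * P v s x else 0)
      = ((q k : ℝ) - 1) *
        ((∑ s : S12.T n K E, if s.1 = k ∧ x ∈ s.2.1 then (1:ℝ) else 0) * uu w v x
          - w k * (∑ s : S12.T n K E, if s.1 = k ∧ x ∈ s.2.1 then P v s x else 0)) := by
  rw [Finset.mul_sum]
  have e1 : ∀ s : S12.T n K E,
      lam * (if s.1 = k ∧ x ∈ s.2.1 then Q v s x - ((q k : ℝ) - 2) * P v s x else 0)
      = ((q k : ℝ) - 1) * ((if s.1 = k ∧ x ∈ s.2.1 then (1:ℝ) else 0) * uu w v x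
          - w k * (if s.1 = k ∧ x ∈ s.2.1 then P v s x else 0)) := by
    intro s
    by_cases h : s.1 = k ∧ x ∈ s.2.1
    · rw [if_pos h, if_pos h, if_pos h, one_mul]
      have hc : s.2.1.card = q k := by rw [← h.1]; exact hcard s.1 s.2.1 s.2.2
      have hc2 : 2 ≤ s.2.1.card := by rw [hc]; exact hq k
      have he := E2 (w := w) hv s h.2 hc2
      rw [hc, h.1] at he
      exact he
    · rw [if_neg h, if_neg h, if_neg h, mul_zero, zero_mul, mul_zero, sub_zero, mul_zero]
  rw [Finset.sum_congr rfl fun s _ => e1 s, ← Finset.mul_sum]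
  congr 1
  rw [Finset.sum_sub_distrib, ← Finset.sum_mul, ← Finset.mul_sum]

lemma Main2 {w : Fin K → ℝ} {v : OEdge n K E → ℝ} {lam : ℝ}
    (hv : (Bmat n K w E).mulVec v = lam • v) (q : Fin K → ℕ)
    (k : Fin K) (x : Fin n) :
    lam * (∑ s : S12.T n K E, if s.1 = k ∧ x ∈ s.2.1 then P v s x else 0)
      = (∑ s : S12.T n K E, if s.1 = k ∧ x ∈ s.2.1 then Usum (uu w v) s x else 0)
        - w k * (∑ s : S12.T n K E,
            if s.1 = k ∧ x ∈ s.2.1 then Q v s x - ((q k : ℝ) - 2) * P v s x else 0)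
        - w k * ((q k : ℝ) - 2) * (∑ s : S12.T n K E,
            if s.1 = k ∧ x ∈ s.2.1 then P v s x else 0) := by
  have e1 : ∀ s : S12.T n K E,
      lam * (if s.1 = k ∧ x ∈ s.2.1 then P v s x else 0)
      = (if s.1 = k ∧ x ∈ s.2.1 then Usum (uu w v) s x else 0)
        - w k * (if s.1 = k ∧ x ∈ s.2.1 then Q v s x - ((q k : ℝ) - 2) * P v s x else 0)
        - w k * ((q k : ℝ) - 2) * (if s.1 = k ∧ x ∈ s.2.1 then P v s x else 0) := by
    intro s
    by_cases h : s.1 = k ∧ x ∈ s.2.1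
    · simp only [if_pos h]
      have hP : lam * P v s x = Usum (uu w v) s x - w s.1 * Q v s x := by
        rw [Pval v s h.2]
        exact (E1 hv ⟨(x, s), h.2⟩).symm
      rw [hP, h.1]; ring
    · simp only [if_neg h]; ring
  rw [Finset.mul_sum, Finset.sum_congr rfl fun s _ => e1 s, Finset.sum_sub_distrib,
    Finset.sum_sub_distrib, ← Finset.mul_sum, ← Finset.mul_sum]

end S12

/-- If `B v = λ v` with `λ ∉ {w_k, -w_k(q_k-1)}`, then the vector
`ṽ = (v_1^←, v_1^→, …, v_K^←, v_K^→)`, with `v_k^← = (q_k-1)⁻¹ S_k (J_k - (q_k-2)I_k) v`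
and `v_k^→ = S_k v`, satisfies `B̃ ṽ = λ ṽ`; in particular if `ṽ ≠ 0` it is an
eigenvector of `B̃` with eigenvalue `λ`. -/
theorem statement12 (n K : ℕ) (hn : 1 ≤ n) (hK : 1 ≤ K)
    (q : Fin K → ℕ) (hq : ∀ k, 2 ≤ q k) (w : Fin K → ℝ)
    (E : Fin K → Finset (Finset (Fin n)))
    (hcard : ∀ k, ∀ e ∈ E k, e.card = q k)
    (v : OEdge n K E → ℝ) (lam : ℝ)
    (hv : (Bmat n K w E).mulVec v = lam • v)
    (h1 : ∀ k, lam ≠ w k)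
    (h2 : ∀ k, lam ≠ -(w k * ((q k : ℝ) - 1)))
    (vleft vright : Fin K → Fin n → ℝ)
    (hvleft : ∀ k, vleft k = (((q k : ℝ) - 1))⁻¹ •
      (Smat n K E k *
        (Jlayer n K E k - ((q k : ℝ) - 2) • Ilayer n K E k)).mulVec v)
    (hvright : ∀ k, vright k = (Smat n K E k).mulVec v)
    (tv : Fin K × Fin 2 × Fin n → ℝ)
    (htv : ∀ pt : Fin K × Fin 2 × Fin n,
      tv pt = if pt.2.1 = 0 then vleft pt.1 pt.2.2 else vright pt.1 pt.2.2) :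
    (tildeB n K q w E).mulVec tv = lam • tv := by
  classical
  have hq1 : ∀ k : Fin K, ((q k : ℝ) - 1) ≠ 0 := fun k => by
    have h2' : (2:ℝ) ≤ (q k : ℝ) := by exact_mod_cast hq k
    intro h; linarith
  have htv0 : ∀ (ℓ : Fin K) (y : Fin n), tv (ℓ, 0, y) = vleft ℓ y := fun ℓ y => by
    rw [htv (ℓ, 0, y)]; simp
  have htv1 : ∀ (ℓ : Fin K) (y : Fin n), tv (ℓ, 1, y) = vright ℓ y := fun ℓ y => by
    rw [htv (ℓ, 1, y)]; simp
  have hVR : ∀ (ℓ : Fin K) (y : Fin n), vright ℓ y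
      = ∑ s : S12.T n K E, if s.1 = ℓ ∧ y ∈ s.2.1 then S12.P v s y else 0 := fun ℓ y => by
    rw [hvright ℓ]; exact S12.L_vr v ℓ y
  have hVL : ∀ (ℓ : Fin K) (y : Fin n), vleft ℓ y
      = ((q ℓ : ℝ) - 1)⁻¹ * ∑ s : S12.T n K E,
          if s.1 = ℓ ∧ y ∈ s.2.1 then S12.Q v s y - ((q ℓ : ℝ) - 2) * S12.P v s y else 0 :=
    fun ℓ y => by
      rw [hvleft ℓ]
      simp only [Pi.smul_apply, smul_eq_mul]
      rw [S12.L_vl v ℓ y ((q ℓ : ℝ) - 2)]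
  have huu : ∀ y : Fin n, (∑ ℓ, w ℓ * vright ℓ y) = S12.uu w v y := fun y => by
    rw [S12.uu_eq w v y]
    exact Finset.sum_congr rfl fun ℓ _ => by rw [hvright ℓ]
  funext pt
  obtain ⟨k, a, x⟩ := pt
  rw [S12.mulVec_apply, Fintype.sum_prod_type]
  simp_rw [Fintype.sum_prod_type, Fin.sum_univ_two]
  simp only [Pi.smul_apply, smul_eq_mul]
  have ha : a = 0 ∨ a = 1 := by omega
  rcases ha with rfl | rfl
  · -- a = 0
    have row0 : ∀ ℓ : Fin K,
        (∑ y : Fin n, tildeB n K q w E (k, 0, x) (ℓ, 0, y) * tv (ℓ, 0, y)) = 0 := fun ℓ =>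
      Finset.sum_eq_zero fun y _ => by simp [tildeB]
    have row1 : ∀ ℓ : Fin K,
        (∑ y : Fin n, tildeB n K q w E (k, 0, x) (ℓ, 1, y) * tv (ℓ, 1, y))
          = ((((E k).filter fun e => x ∈ e).card : ℝ) * (w ℓ * vright ℓ x))
            - (if k = ℓ then w ℓ * vright ℓ x else 0) := by
      intro ℓ
      have e : ∀ y : Fin n, tildeB n K q w E (k, 0, x) (ℓ, 1, y) * tv (ℓ, 1, y)
          = (if x = y then ((((E k).filter fun e => x ∈ e).card : ℝ) * (w ℓ * vright ℓ y)
              - (if k = ℓ then w ℓ * vright ℓ y else 0)) else 0) := by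
        intro y
        rw [htv1 ℓ y]
        by_cases hxy : x = y
        · subst hxy
          by_cases hkl : k = ℓ <;>
            simp [tildeB, Dmat, Matrix.diagonal_apply, hkl] <;> ring
        · by_cases hkl : k = ℓ <;>
            simp [tildeB, Dmat, Matrix.diagonal_apply, hxy, hkl]
      rw [Finset.sum_congr rfl fun y _ => e y, Finset.sum_ite_eq Finset.univ x,
        if_pos (Finset.mem_univ x)]
    rw [Finset.sum_congr rfl fun ℓ _ => by rw [row0 ℓ, row1 ℓ, zero_add]]
    rw [Finset.sum_sub_distrib, Finset.sum_ite_eq Finset.univ k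
      (fun ℓ => w ℓ * vright ℓ x), if_pos (Finset.mem_univ k), ← Finset.mul_sum, huu x,
      htv0 k x, hVR k x]
    have hlvl : lam * vleft k x
        = (∑ s : S12.T n K E, if s.1 = k ∧ x ∈ s.2.1 then (1:ℝ) else 0) * S12.uu w v x
          - w k * (∑ s : S12.T n K E, if s.1 = k ∧ x ∈ s.2.1 then S12.P v s x else 0) := by
      rw [hVL k x, mul_left_comm, S12.Main1 hv q hq hcard k x,
        inv_mul_cancel_left₀ (hq1 k)]
    rw [hlvl, S12.card_layer k (fun e => x ∈ e)]
  · -- a = 1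
    have row0 : ∀ ℓ : Fin K,
        (∑ y : Fin n, tildeB n K q w E (k, 1, x) (ℓ, 0, y) * tv (ℓ, 0, y))
          = -(if k = ℓ then w ℓ * (((q ℓ : ℝ) - 1) * vleft ℓ x) else 0) := by
      intro ℓ
      have e : ∀ y : Fin n, tildeB n K q w E (k, 1, x) (ℓ, 0, y) * tv (ℓ, 0, y)
          = (if x = y then -(if k = ℓ then w ℓ * (((q ℓ : ℝ) - 1) * vleft ℓ y) else 0)
              else 0) := by
        intro y
        rw [htv0 ℓ y]
        by_cases hxy : x = y
        · subst hxy
          by_cases hkl : k = ℓ <;> simp [tildeB, hkl] <;> ring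
        · by_cases hkl : k = ℓ <;> simp [tildeB, hxy, hkl]
      rw [Finset.sum_congr rfl fun y _ => e y, Finset.sum_ite_eq Finset.univ x,
        if_pos (Finset.mem_univ x)]
    have row1 : ∀ ℓ : Fin K,
        (∑ y : Fin n, tildeB n K q w E (k, 1, x) (ℓ, 1, y) * tv (ℓ, 1, y))
          = (∑ y : Fin n, Amat n K E k x y * (w ℓ * vright ℓ y))
            - (if k = ℓ then w ℓ * (((q ℓ : ℝ) - 2) * vright ℓ x) else 0) := by
      intro ℓ
      have e : ∀ y : Fin n, tildeB n K q w E (k, 1, x) (ℓ, 1, y) * tv (ℓ, 1, y)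
          = Amat n K E k x y * (w ℓ * vright ℓ y)
            - (if x = y then (if k = ℓ then w ℓ * (((q ℓ : ℝ) - 2) * vright ℓ y) else 0)
                else 0) := by
        intro y
        rw [htv1 ℓ y]
        by_cases hxy : x = y <;> by_cases hkl : k = ℓ <;>
          simp [tildeB, hxy, hkl] <;> ring
      rw [Finset.sum_congr rfl fun y _ => e y, Finset.sum_sub_distrib,
        Finset.sum_ite_eq Finset.univ x, if_pos (Finset.mem_univ x)]
    rw [Finset.sum_congr rfl fun ℓ _ => by rw [row0 ℓ, row1 ℓ]]
    rw [Finset.sum_add_distrib, Finset.sum_neg_distrib, Finset.sum_ite_eq Finset.univ k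
      (fun ℓ => w ℓ * (((q ℓ : ℝ) - 1) * vleft ℓ x)), if_pos (Finset.mem_univ k),
      Finset.sum_sub_distrib, Finset.sum_ite_eq Finset.univ k
      (fun ℓ => w ℓ * (((q ℓ : ℝ) - 2) * vright ℓ x)), if_pos (Finset.mem_univ k),
      Finset.sum_comm]
    have hswap : ∀ y : Fin n, (∑ ℓ, Amat n K E k x y * (w ℓ * vright ℓ y))
        = Amat n K E k x y * S12.uu w v y := fun y => by
      rw [← Finset.mul_sum, huu y]
    rw [Finset.sum_congr rfl fun y _ => hswap y, S12.LAU w v k x, htv1 k x, hVR k x]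
    have hvl2 : ((q k : ℝ) - 1) * vleft k x
        = ∑ s : S12.T n K E,
            if s.1 = k ∧ x ∈ s.2.1 then S12.Q v s x - ((q k : ℝ) - 2) * S12.P v s x else 0 := by
      rw [hVL k x]; exact mul_inv_cancel_left₀ (hq1 k) _
    rw [hvl2]
    have m2 := S12.Main2 (w := w) hv q k x
    linear_combination -m2
end

section
/- Let v ∈ ℝ^{H⃗} and λ ∈ ℝ satisfy B v = λ v, and suppose λ ≠ w^(k) and λ ≠ −w^(k)(q^(k)−1) for all k ∈ {1,…,K}. Let y = ∑_{k=1}^K w^(k) S_k v ∈ ℝ^n. Then the Bethe–Hessian matrix annihilates y: H(λ) y = 0, where H(λ) = I_n − ∑_{k=1}^K (w^(k)λ/Δ_k(λ))·A_k + ∑_{k=1}^K ((w^(k))²(q^(k)−1)/Δ_k(λ))·D_k and Δ_k(λ) = (λ − w^(k))(λ + w^(k)(q^(k)−1)). -/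
open Matrix Finset

/-- Decomposition equiv. -/
def oedgeEquiv (n K : ℕ) (E : Fin K → Finset (Finset (Fin n))) :
    (Σ ε : Σ k : Fin K, {e : Finset (Fin n) // e ∈ E k}, {z : Fin n // z ∈ ε.2.1}) ≃
      OEdge n K E where
  toFun p := ⟨(p.2.1, p.1), p.2.2⟩
  invFun xe := ⟨xe.1.2, ⟨xe.1.1, xe.2⟩⟩
  left_inv p := rfl
  right_inv xe := rfl

lemma sum_oedge (n K : ℕ) (E : Fin K → Finset (Finset (Fin n))) (f : OEdge n K E → ℝ) :
    ∑ xe : OEdge n K E, f xe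
      = ∑ ε : Σ k : Fin K, {e : Finset (Fin n) // e ∈ E k},
          ∑ z : {z : Fin n // z ∈ ε.2.1}, f ⟨(z.1, ε), z.2⟩ := by
  rw [← Equiv.sum_comp (oedgeEquiv n K E) f, ← Finset.univ_sigma_univ, Finset.sum_sigma]
  rfl

lemma sum_subtype_ite (n : ℕ) (e : Finset (Fin n)) (x : Fin n) (hx : x ∈ e)
    (f : {z : Fin n // z ∈ e} → ℝ) :
    ∑ z : {z : Fin n // z ∈ e}, (if (z : Fin n) = x then f z else 0) = f ⟨x, hx⟩ := by
  rw [Finset.sum_eq_single (⟨x, hx⟩ : {z : Fin n // z ∈ e})]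
  · simp
  · intro b _ hb
    rw [if_neg]
    simpa [Subtype.ext_iff] using hb
  · simp

lemma sum_subtype_ite_const (n : ℕ) (e : Finset (Fin n)) (x : Fin n) (c : ℝ) :
    ∑ z : {z : Fin n // z ∈ e}, (if (z : Fin n) = x then c else 0)
      = if x ∈ e then c else 0 := by
  by_cases hx : x ∈ e
  · rw [if_pos hx, sum_subtype_ite n e x hx (fun _ => c)]
  · rw [if_neg hx, Finset.sum_eq_zero]
    intro z _
    rw [if_neg]
    rintro rfl
    exact hx z.2

/-- If `B v = λ v` with `λ ∉ {w_k, -w_k(q_k-1)}`, the aggregated vector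
`y = ∑_k w_k S_k v` satisfies `H(λ) y = 0`, where `H(λ)` is the Bethe–Hessian matrix. -/
theorem statement13 (n K : ℕ) (hn : 1 ≤ n) (hK : 1 ≤ K)
    (q : Fin K → ℕ) (hq : ∀ k, 2 ≤ q k) (w : Fin K → ℝ)
    (E : Fin K → Finset (Finset (Fin n)))
    (hcard : ∀ k, ∀ e ∈ E k, e.card = q k)
    (v : OEdge n K E → ℝ) (lam : ℝ)
    (hv : (Bmat n K w E).mulVec v = lam • v)
    (h1 : ∀ k, lam ≠ w k)
    (h2 : ∀ k, lam ≠ -(w k * ((q k : ℝ) - 1)))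
    (y : Fin n → ℝ) (hy : y = ∑ k, w k • (Smat n K E k).mulVec v) :
    ((1 : Matrix (Fin n) (Fin n) ℝ)
      - ∑ k, (w k * lam /
          ((lam - w k) * (lam + w k * ((q k : ℝ) - 1)))) • Amat n K E k
      + ∑ k, ((w k) ^ 2 * ((q k : ℝ) - 1) /
          ((lam - w k) * (lam + w k * ((q k : ℝ) - 1)))) • Dmat n K E k).mulVec y = 0 := by
  classical
  -- abbreviations
  set G : (Σ k : Fin K, {e : Finset (Fin n) // e ∈ E k}) → ℝ :=
    fun ε => ∑ z ∈ ε.2.1, y z with hG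
  set σ : (Σ k : Fin K, {e : Finset (Fin n) // e ∈ E k}) → ℝ :=
    fun ε => ∑ z : {z : Fin n // z ∈ ε.2.1}, v ⟨(z.1, ε), z.2⟩ with hσ
  -- Step A: y as a sum over oriented edges
  have hA : ∀ x : Fin n, y x
      = ∑ ε : Σ k : Fin K, {e : Finset (Fin n) // e ∈ E k},
          ∑ z : {z : Fin n // z ∈ ε.2.1},
            (if (z : Fin n) = x then w ε.1 * v ⟨(z.1, ε), z.2⟩ else 0) := by
    intro x
    have step1 : y x = ∑ xe : OEdge n K E,
        (if xe.1.1 = x then w xe.1.2.1 * v xe else 0) := by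
      rw [hy]
      simp only [Finset.sum_apply, Pi.smul_apply, smul_eq_mul, Matrix.mulVec,
        dotProduct, Smat, mul_ite, ite_mul, one_mul, zero_mul, mul_zero,
        Finset.mul_sum]
      rw [Finset.sum_comm]
      refine Finset.sum_congr rfl fun xe _ => ?_
      by_cases hx : x = xe.1.1
      · rw [if_pos hx.symm]
        simp only [hx, true_and]
        rw [Finset.sum_ite_eq Finset.univ xe.1.2.1 (fun k => w k * v xe)]
        simp
      · rw [if_neg fun h => hx h.symm, Finset.sum_eq_zero]
        intro k _
        exact if_neg fun h => hx h.1
    rw [step1, sum_oedge n K E (fun xe => if xe.1.1 = x then w xe.1.2.1 * v xe else 0)]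
  -- Step B: pointwise eigen-equation rewritten
  have hB : ∀ xe : OEdge n K E, lam * v xe
      = (G xe.1.2 - y xe.1.1) - w xe.1.2.1 * (σ xe.1.2 - v xe) := by
    intro xe
    have h0 := congrFun hv xe
    simp only [Matrix.mulVec, dotProduct, Bmat, Pi.smul_apply, smul_eq_mul,
      ite_mul, zero_mul] at h0
    rw [sum_oedge n K E (fun yf =>
      if yf.1.1 ∈ xe.1.2.2.1 ∧ yf.1.1 ≠ xe.1.1 ∧ yf.1.2 ≠ xe.1.2
      then w yf.1.2.1 * v yf else 0)] at h0
    have hmem : xe.1.1 ∈ xe.1.2.2.1 := xe.2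
    have split : ∀ (ε : Σ k : Fin K, {e : Finset (Fin n) // e ∈ E k})
        (z : {z : Fin n // z ∈ ε.2.1}),
        (if (z : Fin n) ∈ xe.1.2.2.1 ∧ (z : Fin n) ≠ xe.1.1 ∧ ε ≠ xe.1.2
          then w ε.1 * v ⟨(z.1, ε), z.2⟩ else 0)
        = (if (z : Fin n) ∈ xe.1.2.2.1 ∧ (z : Fin n) ≠ xe.1.1
            then w ε.1 * v ⟨(z.1, ε), z.2⟩ else 0)
          - (if ε = xe.1.2 then
              (if (z : Fin n) ∈ xe.1.2.2.1 ∧ (z : Fin n) ≠ xe.1.1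
                then w ε.1 * v ⟨(z.1, ε), z.2⟩ else 0) else 0) := by
      intro ε z
      by_cases hc : (z : Fin n) ∈ xe.1.2.2.1 ∧ (z : Fin n) ≠ xe.1.1 <;>
        by_cases he : ε = xe.1.2 <;> simp [hc, he]
    rw [Finset.sum_congr rfl (fun ε _ => Finset.sum_congr rfl (fun z _ => split ε z))] at h0
    simp only [Finset.sum_sub_distrib] at h0
    -- part 1
    have hy_e : ∑ z0 ∈ xe.1.2.2.1, y z0
        = ∑ ε : Σ k : Fin K, {e : Finset (Fin n) // e ∈ E k},
            ∑ z : {z : Fin n // z ∈ ε.2.1},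
              (if (z : Fin n) ∈ xe.1.2.2.1 then w ε.1 * v ⟨(z.1, ε), z.2⟩ else 0) := by
      calc ∑ z0 ∈ xe.1.2.2.1, y z0
          = ∑ z0 ∈ xe.1.2.2.1, ∑ ε : Σ k : Fin K, {e : Finset (Fin n) // e ∈ E k},
              ∑ z : {z : Fin n // z ∈ ε.2.1},
                (if (z : Fin n) = z0 then w ε.1 * v ⟨(z.1, ε), z.2⟩ else 0) :=
            Finset.sum_congr rfl fun z0 _ => hA z0
        _ = ∑ ε : Σ k : Fin K, {e : Finset (Fin n) // e ∈ E k},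
              ∑ z0 ∈ xe.1.2.2.1, ∑ z : {z : Fin n // z ∈ ε.2.1},
                (if (z : Fin n) = z0 then w ε.1 * v ⟨(z.1, ε), z.2⟩ else 0) :=
            Finset.sum_comm
        _ = ∑ ε : Σ k : Fin K, {e : Finset (Fin n) // e ∈ E k},
              ∑ z : {z : Fin n // z ∈ ε.2.1}, ∑ z0 ∈ xe.1.2.2.1,
                (if (z : Fin n) = z0 then w ε.1 * v ⟨(z.1, ε), z.2⟩ else 0) :=
            Finset.sum_congr rfl fun ε _ => Finset.sum_comm
        _ = _ := by
            refine Finset.sum_congr rfl fun ε _ => Finset.sum_congr rfl fun z _ => ?_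
            rw [Finset.sum_ite_eq xe.1.2.2.1 (z : Fin n)
              (fun _ => w ε.1 * v ⟨(z.1, ε), z.2⟩)]
    have part1 : ∑ ε : Σ k : Fin K, {e : Finset (Fin n) // e ∈ E k},
        ∑ z : {z : Fin n // z ∈ ε.2.1},
          (if (z : Fin n) ∈ xe.1.2.2.1 ∧ (z : Fin n) ≠ xe.1.1
            then w ε.1 * v ⟨(z.1, ε), z.2⟩ else 0)
        = G xe.1.2 - y xe.1.1 := by
      have hpt : ∀ (ε : Σ k : Fin K, {e : Finset (Fin n) // e ∈ E k})
          (z : {z : Fin n // z ∈ ε.2.1}),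
          (if (z : Fin n) ∈ xe.1.2.2.1 ∧ (z : Fin n) ≠ xe.1.1
            then w ε.1 * v ⟨(z.1, ε), z.2⟩ else 0)
          = (if (z : Fin n) ∈ xe.1.2.2.1 then w ε.1 * v ⟨(z.1, ε), z.2⟩ else 0)
            - (if (z : Fin n) = xe.1.1 then w ε.1 * v ⟨(z.1, ε), z.2⟩ else 0) := by
        intro ε z
        by_cases hzx : (z : Fin n) = xe.1.1
        · simp [hzx, hmem]
        · by_cases hze : (z : Fin n) ∈ xe.1.2.2.1 <;> simp [hzx, hze]
      rw [Finset.sum_congr rfl (fun ε _ => Finset.sum_congr rfl (fun z _ => hpt ε z))]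
      simp only [Finset.sum_sub_distrib]
      rw [← hy_e, ← hA xe.1.1]
    -- part 2
    have part2 : ∑ ε : Σ k : Fin K, {e : Finset (Fin n) // e ∈ E k},
        ∑ z : {z : Fin n // z ∈ ε.2.1},
          (if ε = xe.1.2 then
            (if (z : Fin n) ∈ xe.1.2.2.1 ∧ (z : Fin n) ≠ xe.1.1
              then w ε.1 * v ⟨(z.1, ε), z.2⟩ else 0) else 0)
        = w xe.1.2.1 * (σ xe.1.2 - v xe) := by
      rw [Finset.sum_eq_single xe.1.2]
      · have hpt : ∀ z : {z : Fin n // z ∈ xe.1.2.2.1},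
            (if xe.1.2 = xe.1.2 then
              (if (z : Fin n) ∈ xe.1.2.2.1 ∧ (z : Fin n) ≠ xe.1.1
                then w xe.1.2.1 * v ⟨(z.1, xe.1.2), z.2⟩ else 0) else 0)
            = w xe.1.2.1 * v ⟨(z.1, xe.1.2), z.2⟩
              - (if (z : Fin n) = xe.1.1
                  then w xe.1.2.1 * v ⟨(z.1, xe.1.2), z.2⟩ else 0) := by
          intro z
          by_cases hzx : (z : Fin n) = xe.1.1 <;> simp [hzx, z.2]
        rw [Finset.sum_congr rfl (fun z _ => hpt z)]
        simp only [Finset.sum_sub_distrib]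
        rw [sum_subtype_ite n xe.1.2.2.1 xe.1.1 hmem
          (fun z => w xe.1.2.1 * v ⟨(z.1, xe.1.2), z.2⟩)]
        rw [mul_sub, Finset.mul_sum]
      · intro ε _ hne
        exact Finset.sum_eq_zero fun z _ => if_neg hne
      · simp
    rw [part1, part2] at h0
    linarith [h0]
  -- Step C
  have hC : ∀ ε : Σ k : Fin K, {e : Finset (Fin n) // e ∈ E k},
      (lam + w ε.1 * ((q ε.1 : ℝ) - 1)) * σ ε = ((q ε.1 : ℝ) - 1) * G ε := by
    intro ε
    have hcardu : ((Finset.univ : Finset {z : Fin n // z ∈ ε.2.1}).card : ℝ)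
        = (q ε.1 : ℝ) := by
      rw [Finset.card_univ, Fintype.card_coe]
      exact_mod_cast congrArg (Nat.cast : ℕ → ℝ) (hcard ε.1 ε.2.1 ε.2.2)
    have hycoe : ∑ z : {z : Fin n // z ∈ ε.2.1}, y (z : Fin n) = G ε :=
      Finset.sum_coe_sort ε.2.1 y
    have hvs : ∑ z : {z : Fin n // z ∈ ε.2.1}, v ⟨(z.1, ε), z.2⟩ = σ ε := rfl
    have hsum : ∑ z : {z : Fin n // z ∈ ε.2.1}, (lam * v ⟨(z.1, ε), z.2⟩)
        = ∑ z : {z : Fin n // z ∈ ε.2.1},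
            ((G ε - y (z : Fin n)) - w ε.1 * (σ ε - v ⟨(z.1, ε), z.2⟩)) :=
      Finset.sum_congr rfl fun z _ => hB ⟨(z.1, ε), z.2⟩
    rw [← Finset.mul_sum, hvs] at hsum
    have hrhs : ∑ z : {z : Fin n // z ∈ ε.2.1},
        ((G ε - y (z : Fin n)) - w ε.1 * (σ ε - v ⟨(z.1, ε), z.2⟩))
        = ((q ε.1 : ℝ) * G ε - G ε) - w ε.1 * ((q ε.1 : ℝ) * σ ε - σ ε) := by
      rw [Finset.sum_sub_distrib, Finset.sum_sub_distrib, hycoe, ← Finset.mul_sum,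
        Finset.sum_sub_distrib, hvs, Finset.sum_const, Finset.sum_const,
        nsmul_eq_mul, nsmul_eq_mul, hcardu]
    rw [hrhs] at hsum
    linear_combination hsum
  -- Step D
  have hD : ∀ xe : OEdge n K E,
      ((lam - w xe.1.2.1) * (lam + w xe.1.2.1 * ((q xe.1.2.1 : ℝ) - 1))) * v xe
        = lam * G xe.1.2 - (lam + w xe.1.2.1 * ((q xe.1.2.1 : ℝ) - 1)) * y xe.1.1 := by
    intro xe
    linear_combination (lam + w xe.1.2.1 * ((q xe.1.2.1 : ℝ) - 1)) * hB xe
      - w xe.1.2.1 * hC xe.1.2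
  -- degree
  have hdeg : ∀ (k : Fin K) (x : Fin n),
      ∑ ε : Σ k : Fin K, {e : Finset (Fin n) // e ∈ E k},
          (if ε.1 = k ∧ x ∈ ε.2.1 then (1:ℝ) else 0)
        = (((E k).filter (fun e => x ∈ e)).card : ℝ) := by
    intro k x
    rw [← Finset.univ_sigma_univ, Finset.sum_sigma]
    rw [Finset.sum_eq_single k]
    · have : ∀ e : {e : Finset (Fin n) // e ∈ E k},
          (if (⟨k, e⟩ : Σ k : Fin K, {e : Finset (Fin n) // e ∈ E k}).1 = k
              ∧ x ∈ (⟨k, e⟩ : Σ k : Fin K, {e : Finset (Fin n) // e ∈ E k}).2.1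
            then (1:ℝ) else 0)
          = (if x ∈ (e : Finset (Fin n)) then (1:ℝ) else 0) := by
        intro e; simp
      rw [Finset.sum_congr rfl (fun e _ => this e)]
      rw [Finset.sum_coe_sort (E k) (fun e => if x ∈ e then (1:ℝ) else 0)]
      rw [Finset.sum_boole]
    · intro j _ hj
      exact Finset.sum_eq_zero fun e _ => if_neg fun h => hj h.1
    · simp
  have hGe : ∀ (k : Fin K) (x : Fin n),
      ∑ ε : Σ k : Fin K, {e : Finset (Fin n) // e ∈ E k},
          (if ε.1 = k ∧ x ∈ ε.2.1 then G ε else 0)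
        = (((E k).filter (fun e => x ∈ e)).card : ℝ) * y x
          + (Amat n K E k).mulVec y x := by
    intro k x
    have hright : (Amat n K E k).mulVec y x
        = ∑ e ∈ E k, (if x ∈ e then ((∑ z ∈ e, y z) - y x) else 0) := by
      simp only [Matrix.mulVec, dotProduct, Amat, Finset.card_filter]
      push_cast
      simp only [Finset.sum_mul, ite_mul, one_mul, zero_mul]
      rw [Finset.sum_comm]
      refine Finset.sum_congr rfl fun e _ => ?_
      by_cases hx : x ∈ e
      · rw [if_pos hx]
        have hpt : ∀ z0 : Fin n,
            (if x ∈ e ∧ z0 ∈ e ∧ x ≠ z0 then y z0 else 0)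
            = (if z0 ∈ e then y z0 else 0) - (if z0 = x then (if x ∈ e then y x else 0) else 0) := by
          intro z0
          by_cases hz0 : z0 = x
          · simp [hz0, hx]
          · by_cases hz0e : z0 ∈ e <;> simp [hz0, hz0e, hx, (Ne.symm hz0 : x ≠ z0)]
        rw [Finset.sum_congr rfl (fun z0 _ => hpt z0)]
        simp only [Finset.sum_sub_distrib]
        rw [Finset.sum_ite_eq' Finset.univ x (fun _ => if x ∈ e then y x else 0)]
        simp [hx, Finset.sum_ite_mem, Finset.univ_inter]
      · rw [if_neg hx, Finset.sum_eq_zero]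
        intro z0 _
        exact if_neg fun h => hx h.1
    have hleft : ∑ ε : Σ k : Fin K, {e : Finset (Fin n) // e ∈ E k},
        (if ε.1 = k ∧ x ∈ ε.2.1 then G ε else 0)
        = ∑ e ∈ E k, (if x ∈ e then (∑ z ∈ e, y z) else 0) := by
      rw [← Finset.univ_sigma_univ, Finset.sum_sigma]
      rw [Finset.sum_eq_single k]
      · have : ∀ e : {e : Finset (Fin n) // e ∈ E k},
            (if (⟨k, e⟩ : Σ k : Fin K, {e : Finset (Fin n) // e ∈ E k}).1 = k
                ∧ x ∈ (⟨k, e⟩ : Σ k : Fin K, {e : Finset (Fin n) // e ∈ E k}).2.1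
              then G ⟨k, e⟩ else 0)
            = (if x ∈ (e : Finset (Fin n)) then (∑ z ∈ (e : Finset (Fin n)), y z) else 0) := by
          intro e; simp [hG]
        rw [Finset.sum_congr rfl (fun e _ => this e)]
        exact Finset.sum_coe_sort (E k) (fun e => if x ∈ e then (∑ z ∈ e, y z) else 0)
      · intro j _ hj
        exact Finset.sum_eq_zero fun e _ => if_neg fun h => hj h.1
      · simp
    rw [hleft, hright]
    have hcnt : (((E k).filter (fun e => x ∈ e)).card : ℝ) * y x
        = ∑ e ∈ E k, (if x ∈ e then y x else 0) := by
      rw [Finset.card_filter]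
      push_cast
      rw [Finset.sum_mul]
      refine Finset.sum_congr rfl fun e _ => ?_
      by_cases hx : x ∈ e <;> simp [hx]
    rw [hcnt, ← Finset.sum_add_distrib]
    refine Finset.sum_congr rfl fun e _ => ?_
    by_cases hx : x ∈ e <;> simp [hx]
  -- Step E
  have hE : ∀ (k : Fin K) (x : Fin n),
      ((lam - w k) * (lam + w k * ((q k : ℝ) - 1))) * ((Smat n K E k).mulVec v x)
        = lam * ((Amat n K E k).mulVec y x)
          - w k * ((q k : ℝ) - 1) * ((((E k).filter (fun e => x ∈ e)).card : ℝ) * y x) := by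
    intro k x
    have hSv : (Smat n K E k).mulVec v x
        = ∑ xe : OEdge n K E, (if x = xe.1.1 ∧ xe.1.2.1 = k then v xe else 0) := by
      simp only [Matrix.mulVec, dotProduct, Smat, ite_mul, one_mul, zero_mul]
    rw [hSv, Finset.mul_sum]
    have hpt : ∀ xe : OEdge n K E,
        ((lam - w k) * (lam + w k * ((q k : ℝ) - 1)))
            * (if x = xe.1.1 ∧ xe.1.2.1 = k then v xe else 0)
        = (if x = xe.1.1 ∧ xe.1.2.1 = k then
            lam * G xe.1.2 - (lam + w k * ((q k : ℝ) - 1)) * y xe.1.1 else 0) := by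
      intro xe
      by_cases h : x = xe.1.1 ∧ xe.1.2.1 = k
      · rw [if_pos h, if_pos h, ← h.2]
        exact hD xe
      · simp [h]
    rw [Finset.sum_congr rfl (fun xe _ => hpt xe)]
    rw [sum_oedge n K E (fun xe => if x = xe.1.1 ∧ xe.1.2.1 = k then
      lam * G xe.1.2 - (lam + w k * ((q k : ℝ) - 1)) * y xe.1.1 else 0)]
    have hinner : ∀ ε : Σ k : Fin K, {e : Finset (Fin n) // e ∈ E k},
        ∑ z : {z : Fin n // z ∈ ε.2.1},
          (if x = (z : Fin n) ∧ ε.1 = k then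
            lam * G ε - (lam + w k * ((q k : ℝ) - 1)) * y (z : Fin n) else 0)
        = (if ε.1 = k ∧ x ∈ ε.2.1 then
            lam * G ε - (lam + w k * ((q k : ℝ) - 1)) * y x else 0) := by
      intro ε
      have : ∀ z : {z : Fin n // z ∈ ε.2.1},
          (if x = (z : Fin n) ∧ ε.1 = k then
            lam * G ε - (lam + w k * ((q k : ℝ) - 1)) * y (z : Fin n) else 0)
          = (if ε.1 = k then (if (z : Fin n) = x then
              lam * G ε - (lam + w k * ((q k : ℝ) - 1)) * y x else 0) else 0) := by
        intro z
        by_cases hz : (z : Fin n) = x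
        · by_cases hk : ε.1 = k <;> simp [hz, hk]
        · by_cases hk : ε.1 = k <;> simp [hz, hk, (Ne.symm hz : x ≠ (z : Fin n))]
      rw [Finset.sum_congr rfl (fun z _ => this z)]
      by_cases hk : ε.1 = k
      · simp only [hk, if_true, true_and]
        exact sum_subtype_ite_const n ε.2.1 x _
      · simp [hk]
    rw [Finset.sum_congr rfl (fun ε _ => hinner ε)]
    have hsplit : ∀ ε : Σ k : Fin K, {e : Finset (Fin n) // e ∈ E k},
        (if ε.1 = k ∧ x ∈ ε.2.1 then
          lam * G ε - (lam + w k * ((q k : ℝ) - 1)) * y x else 0)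
        = lam * (if ε.1 = k ∧ x ∈ ε.2.1 then G ε else 0)
          - ((lam + w k * ((q k : ℝ) - 1)) * y x)
              * (if ε.1 = k ∧ x ∈ ε.2.1 then (1:ℝ) else 0) := by
      intro ε
      by_cases h : ε.1 = k ∧ x ∈ ε.2.1 <;> simp [h] <;> ring
    rw [Finset.sum_congr rfl (fun ε _ => hsplit ε)]
    simp only [Finset.sum_sub_distrib]
    rw [← Finset.mul_sum, ← Finset.mul_sum, hdeg k x, hGe k x]
    ring
  have hΔ : ∀ k : Fin K, (lam - w k) * (lam + w k * ((q k : ℝ) - 1)) ≠ 0 := by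
    intro k
    refine mul_ne_zero (sub_ne_zero.2 (h1 k)) ?_
    intro h
    exact h2 k (by linarith)
  have key : ∀ (k : Fin K) (x : Fin n),
      w k * ((Smat n K E k).mulVec v x)
        = (w k * lam / ((lam - w k) * (lam + w k * ((q k : ℝ) - 1))))
            * ((Amat n K E k).mulVec y x)
          - ((w k) ^ 2 * ((q k : ℝ) - 1) / ((lam - w k) * (lam + w k * ((q k : ℝ) - 1))))
            * ((((E k).filter (fun e => x ∈ e)).card : ℝ) * y x) := by
    intro k x
    rw [div_mul_eq_mul_div, div_mul_eq_mul_div, div_sub_div_same,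
      eq_div_iff (hΔ k)]
    linear_combination w k * hE k x
  -- final assembly
  funext x
  have hyx : y x = ∑ k, w k * ((Smat n K E k).mulVec v x) := by
    rw [hy]
    simp [Finset.sum_apply]
  simp only [Matrix.add_mulVec, Matrix.sub_mulVec, Matrix.one_mulVec, Pi.add_apply,
    Pi.sub_apply, Pi.zero_apply]
  have hsmv : ∀ (M : Fin K → Matrix (Fin n) (Fin n) ℝ) (c : Fin K → ℝ),
      (∑ k, c k • M k).mulVec y x = ∑ k, c k * ((M k).mulVec y x) := by
    intro M c
    simp only [Matrix.mulVec, dotProduct, Finset.sum_apply, Matrix.sum_apply,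
      Matrix.smul_apply, smul_eq_mul, Finset.sum_mul, Finset.mul_sum]
    rw [Finset.sum_comm]
    simp [mul_assoc]
  rw [hsmv, hsmv, hyx]
  rw [Finset.sum_congr rfl (fun k _ => key k x)]
  have hDd : ∀ k : Fin K, (Dmat n K E k).mulVec y x
      = (((E k).filter (fun e => x ∈ e)).card : ℝ) * y x := by
    intro k
    simp [Dmat, Matrix.mulVec_diagonal]
  rw [Finset.sum_congr rfl (fun k _ =>
    congrArg (fun t => ((w k) ^ 2 * ((q k : ℝ) - 1) /
      ((lam - w k) * (lam + w k * ((q k : ℝ) - 1)))) * t) (hDd k))]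
  rw [Finset.sum_sub_distrib]
  ring
end

section
/- For every integer t ≥ 0, the symmetric r0×r0 matrix C^(t) with entries C^(t)_{ij} = (∑_{s=0}^{t} τ_{ij}^s)·δ_{ij} + τ_{ij}·(∑_{s=0}^{t−1} τ_{ij}^s)·(φ_iᵀ Π Q_{(q−2)w²/θ} φ_j) for i,j ∈ {1,…,r0}, where Q_{(q−2)w²/θ} = ∑_{k=1}^K ((q^(k)−2) w_k² / θ)(q^(k)−1) Q^(k), satisfies I_{r0} ⪯ C^(t) ⪯ (1 + τ_{r0}(q_max−1)/(1−τ_{r0}))·I_{r0} in the Loewner order. -/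
open Matrix Finset

lemma sum_perm_reindex {n m : ℕ} (σ : Equiv.Perm (Fin n)) (F : (Fin n → Fin m) → ℝ) :
    ∑ g : Fin n → Fin m, F (g ∘ σ) = ∑ g : Fin n → Fin m, F g :=
  Fintype.sum_equiv (Equiv.arrowCongr σ.symm (Equiv.refl (Fin m))) _ _ (fun _ => rfl)

lemma exists_perm_two {n : ℕ} (a0 a1 a b : Fin n) (h01 : a0 ≠ a1) (hab : a ≠ b) :
    ∃ σ : Equiv.Perm (Fin n), σ a0 = a ∧ σ a1 = b := by
  have hca0 : Equiv.swap a0 a b ≠ a0 := by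
    intro h
    apply hab
    have := congrArg (Equiv.swap a0 a) h
    simpa [Equiv.swap_apply_self, Equiv.swap_apply_left] using this.symm
  refine ⟨(Equiv.swap a1 (Equiv.swap a0 a b)).trans (Equiv.swap a0 a), ?_, ?_⟩
  · rw [Equiv.trans_apply, Equiv.swap_apply_of_ne_of_ne h01 hca0.symm, Equiv.swap_apply_left]
  · rw [Equiv.trans_apply, Equiv.swap_apply_left, Equiv.swap_apply_self]

/-- The covariance matrix `C^(t)` with entries
`C^(t)_{ij} = (∑_{s≤t} τ_{ij}^s) δ_{ij} + τ_{ij} (∑_{s<t} τ_{ij}^s) φ_iᵀ Π Q_{(q-2)w²/θ} φ_j`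
satisfies `I ⪯ C^(t) ⪯ (1 + τ_{r0}(q_max - 1)/(1 - τ_{r0})) I` in the Loewner order. -/
theorem statement14
    (r K : ℕ) (hr : 1 ≤ r) (hK : 1 ≤ K)
    (π : Fin r → ℝ) (hπpos : ∀ i, 0 < π i) (hπsum : ∑ i, π i = 1)
    (q : Fin K → ℕ) (hq : ∀ k, 2 ≤ q k)
    (p : (k : Fin K) → (Fin (q k) → Fin r) → ℝ)
    (hp_nonneg : ∀ k g, 0 ≤ p k g)
    (hp_symm : ∀ k (g : Fin (q k) → Fin r) (s : Equiv.Perm (Fin (q k))), p k (g ∘ s) = p k g)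
    (d : Fin K → ℝ)
    (hdeg : ∀ k, ∀ i : Fin r,
      (∑ g : Fin (q k) → Fin r,
        if g ⟨0, by have := hq k; omega⟩ = i then
          p k g * ∏ ℓ ∈ Finset.univ.erase (⟨0, by have := hq k; omega⟩ : Fin (q k)), π (g ℓ)
        else 0) = d k)
    (D : (k : Fin K) → Matrix (Fin r) (Fin r) ℝ)
    (hD : ∀ k, ∀ i j, D k i j =
      ∑ g : Fin (q k) → Fin r,
        if g ⟨0, by have := hq k; omega⟩ = i ∧ g ⟨1, by have := hq k; omega⟩ = j then
          p k g *
            ∏ ℓ ∈ (Finset.univ.erase (⟨0, by have := hq k; omega⟩ : Fin (q k))).erase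
                (⟨1, by have := hq k; omega⟩ : Fin (q k)),
              π (g ℓ)
        else 0)
    (Q : (k : Fin K) → Matrix (Fin r) (Fin r) ℝ)
    (hQ : ∀ k, Q k = D k * Matrix.diagonal π)
    (w : Fin K → ℝ)
    (Dw : Matrix (Fin r) (Fin r) ℝ)
    (hDw : Dw = ∑ k, (w k * ((q k : ℝ) - 1)) • D k)
    (QQ : Matrix (Fin r) (Fin r) ℝ) (hQQ : QQ = Dw * Matrix.diagonal π)
    (θ : ℝ) (hθdef : θ = ∑ k, (w k) ^ 2 * ((q k : ℝ) - 1) * d k) (hθpos : 0 < θ)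
    (μ : Fin r → ℝ) (φ : Fin r → Fin r → ℝ)
    (heig : ∀ i, QQ.mulVec (φ i) = μ i • φ i)
    (horth : ∀ i j, (∑ a, π a * φ i a * φ j a) = if i = j then (1 : ℝ) else 0)
    (hord : ∀ i j : Fin r, i ≤ j → |μ j| ≤ |μ i|)
    (r0 : ℕ) (hr0 : 1 ≤ r0) (hr0r : r0 ≤ r)
    (hKS : ∀ i : Fin r, (i : ℕ) < r0 → μ i ≠ 0 ∧ θ / (μ i) ^ 2 < 1)
    (t : ℕ)
    (C : Matrix (Fin r0) (Fin r0) ℝ)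
    (hC : ∀ i j : Fin r0, C i j =
      (∑ s ∈ Finset.range (t + 1),
          (θ / (μ (Fin.castLE hr0r i) * μ (Fin.castLE hr0r j))) ^ s) *
        (if i = j then (1 : ℝ) else 0) +
      (θ / (μ (Fin.castLE hr0r i) * μ (Fin.castLE hr0r j))) *
        (∑ s ∈ Finset.range t,
          (θ / (μ (Fin.castLE hr0r i) * μ (Fin.castLE hr0r j))) ^ s) *
        (∑ a, π a * φ (Fin.castLE hr0r i) a *
          ((∑ k, (((q k : ℝ) - 2) * (w k) ^ 2 / θ * ((q k : ℝ) - 1)) • Q k).mulVec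
            (φ (Fin.castLE hr0r j))) a)) :
    (C - 1).PosSemidef ∧
    ((1 + (θ / (μ (Fin.castLE hr0r ⟨r0 - 1, by omega⟩)) ^ 2) *
          (((Finset.univ.sup q : ℕ) : ℝ) - 1) /
          (1 - θ / (μ (Fin.castLE hr0r ⟨r0 - 1, by omega⟩)) ^ 2)) •
        (1 : Matrix (Fin r0) (Fin r0) ℝ) - C).PosSemidef := by
  classical
  -- abbreviations
  set J : Fin r0 → Fin r := Fin.castLE hr0r with hJ
  set z0 : (k : Fin K) → Fin (q k) := fun k => ⟨0, by have := hq k; omega⟩ with hz0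
  set z1 : (k : Fin K) → Fin (q k) := fun k => ⟨1, by have := hq k; omega⟩ with hz1
  set W : (k : Fin K) → (Fin (q k) → Fin r) → ℝ := fun k g => p k g * ∏ ℓ, π (g ℓ) with hW
  set ip : (Fin r → ℝ) → (Fin r → ℝ) → ℝ := fun u v => ∑ a, π a * u a * v a with hip
  set c : Fin K → ℝ := fun k => ((q k : ℝ) - 2) * (w k) ^ 2 / θ * ((q k : ℝ) - 1) with hc
  set Ak : Fin K → (Fin r → ℝ) → (Fin r → ℝ) → ℝ :=
    fun k u v => u ⬝ᵥ ((Matrix.diagonal π * Q k) *ᵥ v) with hAk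
  have hz01 : ∀ k, z0 k ≠ z1 k := by
    intro k h
    rw [hz0, hz1] at h
    simpa [Fin.ext_iff] using h
  have hq1 : ∀ k, (0:ℝ) < (q k : ℝ) - 1 := by
    intro k
    have h2 : (2:ℝ) ≤ (q k : ℝ) := by exact_mod_cast hq k
    linarith
  have hq2 : ∀ k, (0:ℝ) ≤ (q k : ℝ) - 2 := by
    intro k
    have h2 : (2:ℝ) ≤ (q k : ℝ) := by exact_mod_cast hq k
    linarith
  have hWnn : ∀ k g, 0 ≤ W k g := by
    intro k g
    exact mul_nonneg (hp_nonneg k g) (Finset.prod_nonneg fun ℓ _ => (hπpos (g ℓ)).le)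
  have hipnn : ∀ z, 0 ≤ ip z z := by
    intro z
    refine Finset.sum_nonneg fun a _ => ?_
    have : π a * z a * z a = π a * (z a)^2 := by ring
    rw [this]
    exact mul_nonneg (hπpos a).le (sq_nonneg _)
  -- explicit form of Ak
  have hAk_explicit : ∀ k u v, Ak k u v = ∑ i, ∑ j, π i * u i * (D k i j * (π j * v j)) := by
    intro k u v
    simp only [hAk, hQ, dotProduct, Matrix.mulVec, dotProduct, ← Matrix.mul_assoc,
      Matrix.diagonal_mul, Matrix.mul_diagonal]
    refine Finset.sum_congr rfl fun i _ => ?_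
    rw [Finset.mul_sum]
    refine Finset.sum_congr rfl fun j _ => ?_
    ring
  -- reindexing sums over tensors by permutations
  have hreindex : ∀ k (σ : Equiv.Perm (Fin (q k))) (f : (Fin (q k) → Fin r) → ℝ),
      ∑ g : Fin (q k) → Fin r, W k g * f (g ∘ σ) = ∑ g : Fin (q k) → Fin r, W k g * f g := by
    intro k σ f
    rw [← sum_perm_reindex σ (fun g => W k g * f g)]
    refine Finset.sum_congr rfl fun g _ => ?_
    simp only [hW]
    rw [hp_symm k g σ]
    congr 2
    exact (Equiv.prod_comp σ (fun ℓ => π (g ℓ))).symm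
  -- diagonal moment
  have hdiag0 : ∀ k (u v : Fin r → ℝ),
      ∑ g : Fin (q k) → Fin r, W k g * (u (g (z0 k)) * v (g (z0 k))) = d k * ip u v := by
    intro k u v
    have step : ∀ g : Fin (q k) → Fin r, W k g * (u (g (z0 k)) * v (g (z0 k)))
        = ∑ a, if g (z0 k) = a then
            (p k g * ∏ ℓ ∈ Finset.univ.erase (z0 k), π (g ℓ)) * (π a * u a * v a) else 0 := by
      intro g
      rw [Finset.sum_ite_eq, if_pos (Finset.mem_univ _)]
      simp only [hW]
      rw [show (∏ ℓ : Fin (q k), π (g ℓ))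
          = π (g (z0 k)) * ∏ ℓ ∈ Finset.univ.erase (z0 k), π (g ℓ) from
        (Finset.mul_prod_erase Finset.univ _ (Finset.mem_univ _)).symm]
      ring
    calc ∑ g : Fin (q k) → Fin r, W k g * (u (g (z0 k)) * v (g (z0 k)))
        = ∑ g : Fin (q k) → Fin r, ∑ a, if g (z0 k) = a then
            (p k g * ∏ ℓ ∈ Finset.univ.erase (z0 k), π (g ℓ)) * (π a * u a * v a) else 0 :=
          Finset.sum_congr rfl fun g _ => step g
      _ = ∑ a, ∑ g : Fin (q k) → Fin r, if g (z0 k) = a then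
            (p k g * ∏ ℓ ∈ Finset.univ.erase (z0 k), π (g ℓ)) * (π a * u a * v a) else 0 :=
          Finset.sum_comm
      _ = ∑ a, (∑ g : Fin (q k) → Fin r, if g (z0 k) = a then
            p k g * ∏ ℓ ∈ Finset.univ.erase (z0 k), π (g ℓ) else 0) * (π a * u a * v a) := by
          refine Finset.sum_congr rfl fun a _ => ?_
          rw [Finset.sum_mul]
          simp only [ite_mul, zero_mul]
      _ = ∑ a, d k * (π a * u a * v a) := by
          refine Finset.sum_congr rfl fun a _ => ?_
          rw [hdeg k a]
      _ = d k * ip u v := by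
          rw [hip, Finset.mul_sum]
  have hdiag : ∀ k (a : Fin (q k)) (u v : Fin r → ℝ),
      ∑ g : Fin (q k) → Fin r, W k g * (u (g a) * v (g a)) = d k * ip u v := by
    intro k a u v
    have h := hreindex k (Equiv.swap (z0 k) a) (fun g => u (g (z0 k)) * v (g (z0 k)))
    rw [← hdiag0 k u v, ← h]
    refine Finset.sum_congr rfl fun g _ => ?_
    simp [Function.comp, Equiv.swap_apply_left]
  -- pair moment
  have hpair01 : ∀ k (u v : Fin r → ℝ),
      ∑ g : Fin (q k) → Fin r, W k g * (u (g (z0 k)) * v (g (z1 k))) = Ak k u v := by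
    intro k u v
    have step : ∀ g : Fin (q k) → Fin r, W k g * (u (g (z0 k)) * v (g (z1 k)))
        = ∑ i, ∑ j, if g (z0 k) = i ∧ g (z1 k) = j then
            (p k g * ∏ ℓ ∈ (Finset.univ.erase (z0 k)).erase (z1 k), π (g ℓ))
              * (π i * u i * (π j * v j)) else 0 := by
      intro g
      simp only [ite_and, Finset.sum_ite_irrel, Finset.sum_ite_eq, Finset.mem_univ, if_true,
        Finset.sum_const_zero]
      simp only [hW]
      rw [show (∏ ℓ : Fin (q k), π (g ℓ))
          = π (g (z0 k)) * ∏ ℓ ∈ Finset.univ.erase (z0 k), π (g ℓ) from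
        (Finset.mul_prod_erase Finset.univ _ (Finset.mem_univ _)).symm]
      rw [show (∏ ℓ ∈ Finset.univ.erase (z0 k), π (g ℓ))
          = π (g (z1 k)) * ∏ ℓ ∈ (Finset.univ.erase (z0 k)).erase (z1 k), π (g ℓ) from
        (Finset.mul_prod_erase _ _ (Finset.mem_erase.mpr ⟨(hz01 k).symm, Finset.mem_univ _⟩)).symm]
      ring
    calc ∑ g : Fin (q k) → Fin r, W k g * (u (g (z0 k)) * v (g (z1 k)))
        = ∑ g : Fin (q k) → Fin r, ∑ i, ∑ j, if g (z0 k) = i ∧ g (z1 k) = j then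
            (p k g * ∏ ℓ ∈ (Finset.univ.erase (z0 k)).erase (z1 k), π (g ℓ))
              * (π i * u i * (π j * v j)) else 0 := Finset.sum_congr rfl fun g _ => step g
      _ = ∑ i, ∑ j, ∑ g : Fin (q k) → Fin r, if g (z0 k) = i ∧ g (z1 k) = j then
            (p k g * ∏ ℓ ∈ (Finset.univ.erase (z0 k)).erase (z1 k), π (g ℓ))
              * (π i * u i * (π j * v j)) else 0 := by
          rw [Finset.sum_comm]
          exact Finset.sum_congr rfl fun i _ => Finset.sum_comm
      _ = ∑ i, ∑ j, D k i j * (π i * u i * (π j * v j)) := by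
          refine Finset.sum_congr rfl fun i _ => Finset.sum_congr rfl fun j _ => ?_
          rw [hD k i j, Finset.sum_mul]
          simp only [ite_mul, zero_mul]
          rfl
      _ = Ak k u v := by
          rw [hAk_explicit]
          exact Finset.sum_congr rfl fun i _ => Finset.sum_congr rfl fun j _ => by ring
  have hpair : ∀ k (a b : Fin (q k)), a ≠ b → ∀ (u v : Fin r → ℝ),
      ∑ g : Fin (q k) → Fin r, W k g * (u (g a) * v (g b)) = Ak k u v := by
    intro k a b hab u v
    obtain ⟨σ, hσ0, hσ1⟩ := exists_perm_two (z0 k) (z1 k) a b (hz01 k) hab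
    have h := hreindex k σ (fun g => u (g (z0 k)) * v (g (z1 k)))
    rw [← hpair01 k u v, ← h]
    refine Finset.sum_congr rfl fun g _ => ?_
    simp [Function.comp, hσ0, hσ1]
  have hAk_symm : ∀ k u v, Ak k u v = Ak k v u := by
    intro k u v
    rw [← hpair k (z0 k) (z1 k) (hz01 k) u v, ← hpair k (z1 k) (z0 k) (Ne.symm (hz01 k)) v u]
    exact Finset.sum_congr rfl fun g _ => by ring
  have hd_nonneg : ∀ k, 0 ≤ d k := by
    intro k
    rw [← hdeg k ⟨0, by omega⟩]
    refine Finset.sum_nonneg fun g _ => ?_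
    split
    · exact mul_nonneg (hp_nonneg k g) (Finset.prod_nonneg fun ℓ _ => (hπpos (g ℓ)).le)
    · exact le_refl _
  -- scalar quadratic inequalities
  have hA_le : ∀ k z, Ak k z z ≤ d k * ip z z := by
    intro k z
    have h0 : 0 ≤ ∑ g : Fin (q k) → Fin r, W k g * (z (g (z0 k)) - z (g (z1 k)))^2 :=
      Finset.sum_nonneg fun g _ => mul_nonneg (hWnn k g) (sq_nonneg _)
    have hexp : ∑ g : Fin (q k) → Fin r, W k g * (z (g (z0 k)) - z (g (z1 k)))^2
        = ((∑ g : Fin (q k) → Fin r, W k g * (z (g (z0 k)) * z (g (z0 k))))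
          + (∑ g : Fin (q k) → Fin r, W k g * (z (g (z1 k)) * z (g (z1 k)))))
          - ((∑ g : Fin (q k) → Fin r, W k g * (z (g (z0 k)) * z (g (z1 k))))
          + (∑ g : Fin (q k) → Fin r, W k g * (z (g (z1 k)) * z (g (z0 k))))) := by
      rw [← Finset.sum_add_distrib, ← Finset.sum_add_distrib, ← Finset.sum_sub_distrib]
      exact Finset.sum_congr rfl fun g _ => by ring
    rw [hexp, hdiag k _ z z, hdiag k _ z z, hpair k _ _ (hz01 k) z z,
      hpair k _ _ (Ne.symm (hz01 k)) z z] at h0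
    linarith
  have hA_ge : ∀ k z, 0 ≤ d k * ip z z + ((q k : ℝ) - 1) * Ak k z z := by
    intro k z
    have h0 : 0 ≤ ∑ g : Fin (q k) → Fin r, W k g * (∑ a, z (g a))^2 :=
      Finset.sum_nonneg fun g _ => mul_nonneg (hWnn k g) (sq_nonneg _)
    have hexp : ∑ g : Fin (q k) → Fin r, W k g * (∑ a, z (g a))^2
        = ∑ a, ∑ b, ∑ g : Fin (q k) → Fin r, W k g * (z (g a) * z (g b)) := by
      have step : ∀ g : Fin (q k) → Fin r, W k g * (∑ a, z (g a))^2
          = ∑ a, ∑ b, W k g * (z (g a) * z (g b)) := by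
        intro g
        rw [sq, Finset.sum_mul_sum]
        simp only [Finset.mul_sum]
      rw [Finset.sum_congr rfl fun g _ => step g, Finset.sum_comm]
      exact Finset.sum_congr rfl fun a _ => Finset.sum_comm
    have hval : ∀ a b : Fin (q k), (∑ g : Fin (q k) → Fin r, W k g * (z (g a) * z (g b)))
        = if a = b then d k * ip z z else Ak k z z := by
      intro a b
      by_cases h : a = b
      · subst h
        simp [hdiag k a z z]
      · simp only [h, if_false]
        exact hpair k a b h z z
    have hcount : ∀ a : Fin (q k),
        (∑ b, if a = b then d k * ip z z else Ak k z z)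
          = Ak k z z * (q k : ℝ) + (d k * ip z z - Ak k z z) := by
      intro a
      have : ∀ b : Fin (q k), (if a = b then d k * ip z z else Ak k z z)
          = Ak k z z + (if a = b then d k * ip z z - Ak k z z else 0) := by
        intro b
        by_cases h : a = b <;> simp [h]
      rw [Finset.sum_congr rfl fun b _ => this b, Finset.sum_add_distrib,
        Finset.sum_const, Finset.sum_ite_eq, if_pos (Finset.mem_univ a),
        Finset.card_univ, Fintype.card_fin, nsmul_eq_mul]
      ring
    rw [hexp, Finset.sum_congr rfl fun a _ => Finset.sum_congr rfl fun b _ => hval a b,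
      Finset.sum_congr rfl fun a _ => hcount a, Finset.sum_const, Finset.card_univ,
      Fintype.card_fin, nsmul_eq_mul] at h0
    have hq0 : (0:ℝ) < (q k : ℝ) := by have := hq1 k; linarith
    nlinarith [h0, hq0]
  -- form bounds
  have qmaxk : ∀ k, ((q k : ℝ) - 1) ≤ ((Finset.univ.sup q : ℕ) : ℝ) - 1 := by
    intro k
    have : q k ≤ Finset.univ.sup q := Finset.le_sup (Finset.mem_univ k)
    have : (q k : ℝ) ≤ ((Finset.univ.sup q : ℕ) : ℝ) := by exact_mod_cast this
    linarith
  have hθform : ∀ z : Fin r → ℝ, θ * (ip z z + ∑ k, c k * Ak k z z)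
      = ∑ k, ((w k)^2 * ((q k : ℝ) - 1))
          * (d k * ip z z + ((q k : ℝ) - 2) * Ak k z z) := by
    intro z
    have h1 : θ * ip z z = ∑ k, (w k)^2 * ((q k : ℝ) - 1) * d k * ip z z := by
      rw [hθdef, Finset.sum_mul]
    have h2 : ∀ k, θ * (c k * Ak k z z)
        = ((q k : ℝ) - 2) * (w k)^2 * ((q k : ℝ) - 1) * Ak k z z := by
      intro k
      simp only [hc]
      field_simp
    have h2sum : θ * (∑ k, c k * Ak k z z)
        = ∑ k, ((q k : ℝ) - 2) * (w k)^2 * ((q k : ℝ) - 1) * Ak k z z := by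
      rw [Finset.mul_sum]
      exact Finset.sum_congr rfl fun k _ => h2 k
    rw [mul_add, h1, h2sum, ← Finset.sum_add_distrib]
    exact Finset.sum_congr rfl fun k _ => by ring
  have hterm_lb : ∀ k z, 0 ≤ d k * ip z z + ((q k : ℝ) - 2) * Ak k z z := by
    intro k z
    nlinarith [mul_nonneg (hq2 k) (hA_ge k z), mul_nonneg (hd_nonneg k) (hipnn z), hq1 k]
  have form_lb : ∀ z : Fin r → ℝ, 0 ≤ ip z z + ∑ k, c k * Ak k z z := by
    intro z
    have h0 : 0 ≤ θ * (ip z z + ∑ k, c k * Ak k z z) := by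
      rw [hθform z]
      exact Finset.sum_nonneg fun k _ => mul_nonneg
        (mul_nonneg (sq_nonneg _) (hq1 k).le) (hterm_lb k z)
    exact (mul_nonneg_iff_of_pos_left hθpos).mp h0
  have form_ub : ∀ z : Fin r → ℝ,
      ip z z + ∑ k, c k * Ak k z z ≤ (((Finset.univ.sup q : ℕ) : ℝ) - 1) * ip z z := by
    intro z
    set QM : ℝ := ((Finset.univ.sup q : ℕ) : ℝ) with hQM
    have hub : θ * (ip z z + ∑ k, c k * Ak k z z) ≤ θ * ((QM - 1) * ip z z) := by
      rw [hθform z]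
      have hrhs : θ * ((QM - 1) * ip z z)
          = ∑ k, (QM - 1) * ((w k)^2 * ((q k : ℝ) - 1) * d k * ip z z) := by
        rw [hθdef, Finset.sum_mul]
        exact Finset.sum_congr rfl fun k _ => by ring
      rw [hrhs]
      refine Finset.sum_le_sum fun k _ => ?_
      have hAle := hA_le k z
      have hdn : 0 ≤ d k * ip z z := mul_nonneg (hd_nonneg k) (hipnn z)
      have hqm := qmaxk k
      nlinarith [sq_nonneg (w k), hq1 k, hq2 k,
        mul_nonneg (mul_nonneg (sq_nonneg (w k)) (hq2 k)) (sub_nonneg.mpr hAle),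
        mul_nonneg (mul_nonneg (sq_nonneg (w k)) (hq1 k).le)
          (mul_nonneg (hq1 k).le hdn),
        mul_nonneg (mul_nonneg (sq_nonneg (w k)) (mul_nonneg (hq1 k).le hdn))
          (sub_nonneg.mpr hqm)]
    exact le_of_mul_le_mul_left (by linarith [hub]) hθpos
  -- matrix abbreviations
  set Φm : Matrix (Fin r) (Fin r0) ℝ := Matrix.of (fun a i => φ (J i) a) with hΦm
  set Qc : Matrix (Fin r) (Fin r) ℝ := ∑ k, c k • Q k with hQc
  set G : Matrix (Fin r) (Fin r) ℝ := Matrix.diagonal π * Qc with hG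
  set Mid : Matrix (Fin r0) (Fin r0) ℝ := 1 + Φmᵀ * G * Φm with hMid
  set e : Fin r0 → ℝ := fun i => Real.sqrt θ / μ (J i) with he
  set Em : ℕ → Matrix (Fin r0) (Fin r0) ℝ := fun s => Matrix.diagonal (fun i => (e i)^s) with hEm
  have hip_dot : ∀ u v : Fin r → ℝ, ip u v = u ⬝ᵥ (Matrix.diagonal π *ᵥ v) := by
    intro u v
    rw [hip]
    simp only [dotProduct, Matrix.mulVec_diagonal]
    exact Finset.sum_congr rfl fun a _ => by ring
  have swap3 : ∀ {β γ : Type} [Fintype β] [Fintype γ] (F : Fin r → β → γ → ℝ),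
      (∑ a, ∑ j : β, ∑ k : γ, F a j k) = ∑ k : γ, ∑ a, ∑ j : β, F a j k := by
    intro β γ _ _ F
    calc (∑ a, ∑ j : β, ∑ k : γ, F a j k) = ∑ a, ∑ k : γ, ∑ j : β, F a j k :=
          Finset.sum_congr rfl fun a _ => Finset.sum_comm
      _ = ∑ k : γ, ∑ a, ∑ j : β, F a j k := Finset.sum_comm
  have hGform : ∀ u v : Fin r → ℝ, u ⬝ᵥ (G *ᵥ v) = ∑ k, c k * Ak k u v := by
    intro u v
    simp only [hG, hQc, hAk, dotProduct, Matrix.mulVec, dotProduct, Matrix.diagonal_mul,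
      Matrix.sum_apply, Matrix.smul_apply, smul_eq_mul]
    simp only [Finset.mul_sum, Finset.sum_mul]
    refine Eq.trans (swap3 _) ?_
    exact Finset.sum_congr rfl fun k _ => Finset.sum_congr rfl fun a _ =>
      Finset.sum_congr rfl fun j _ => by ring
  have hBentry : ∀ (B : Matrix (Fin r) (Fin r) ℝ) (i j : Fin r0),
      (Φmᵀ * B * Φm) i j = (φ (J i)) ⬝ᵥ (B *ᵥ (φ (J j))) := by
    intro B i j
    simp only [Matrix.mul_apply, Matrix.transpose_apply, dotProduct, Matrix.mulVec, dotProduct,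
      hΦm, Matrix.of_apply]
    simp only [Finset.sum_mul, Finset.mul_sum]
    rw [Finset.sum_comm]
    exact Finset.sum_congr rfl fun a _ => Finset.sum_congr rfl fun b _ => by ring
  have hΦorth : Φmᵀ * Matrix.diagonal π * Φm = 1 := by
    ext i j
    rw [hBentry (Matrix.diagonal π) i j]
    have : (φ (J i)) ⬝ᵥ (Matrix.diagonal π *ᵥ (φ (J j))) = ∑ a, π a * φ (J i) a * φ (J j) a := by
      simp only [dotProduct, Matrix.mulVec_diagonal]
      exact Finset.sum_congr rfl fun a _ => by ring
    rw [this, horth (J i) (J j), Matrix.one_apply]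
    simp [hJ, Fin.castLE_inj]
  have htrans : ∀ (B : Matrix (Fin r) (Fin r) ℝ) (y : Fin r0 → ℝ),
      y ⬝ᵥ ((Φmᵀ * B * Φm) *ᵥ y) = (Φm *ᵥ y) ⬝ᵥ (B *ᵥ (Φm *ᵥ y)) := by
    intro B y
    rw [show Φmᵀ * B * Φm = Φmᵀ * (B * Φm) from Matrix.mul_assoc _ _ _,
      ← Matrix.mulVec_mulVec, Matrix.dotProduct_mulVec y Φmᵀ, Matrix.vecMul_transpose,
      ← Matrix.mulVec_mulVec]
  have hyz : ∀ y : Fin r0 → ℝ, y ⬝ᵥ y = ip (Φm *ᵥ y) (Φm *ᵥ y) := by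
    intro y
    calc y ⬝ᵥ y = y ⬝ᵥ ((Φmᵀ * Matrix.diagonal π * Φm) *ᵥ y) := by
          rw [hΦorth, Matrix.one_mulVec]
      _ = (Φm *ᵥ y) ⬝ᵥ (Matrix.diagonal π *ᵥ (Φm *ᵥ y)) := htrans _ y
      _ = ip (Φm *ᵥ y) (Φm *ᵥ y) := (hip_dot _ _).symm
  have hMidform : ∀ y : Fin r0 → ℝ, y ⬝ᵥ (Mid *ᵥ y)
      = ip (Φm *ᵥ y) (Φm *ᵥ y) + ∑ k, c k * Ak k (Φm *ᵥ y) (Φm *ᵥ y) := by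
    intro y
    rw [hMid, Matrix.add_mulVec, dotProduct_add, Matrix.one_mulVec, htrans G y, hGform,
      hyz y]
  have hMidform_lb : ∀ y : Fin r0 → ℝ, 0 ≤ y ⬝ᵥ (Mid *ᵥ y) := by
    intro y
    rw [hMidform y]
    exact form_lb _
  have hQM1 : (1:ℝ) ≤ ((Finset.univ.sup q : ℕ) : ℝ) - 1 := by
    have := qmaxk ⟨0, hK⟩
    have h2 : (2:ℝ) ≤ ((q ⟨0, hK⟩ : ℕ) : ℝ) := by exact_mod_cast hq ⟨0, hK⟩
    linarith
  have hMidform_ub : ∀ y : Fin r0 → ℝ,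
      y ⬝ᵥ (Mid *ᵥ y) ≤ (((Finset.univ.sup q : ℕ) : ℝ) - 1) * (y ⬝ᵥ y) := by
    intro y
    rw [hMidform y, hyz y]
    exact form_ub _
  have hMterm : ∀ u v : Fin r → ℝ,
      (∑ a, π a * u a * (Qc *ᵥ v) a) = ∑ k, c k * Ak k u v := by
    intro u v
    rw [← hGform u v, hG, ← Matrix.mulVec_mulVec]
    simp only [dotProduct, Matrix.mulVec_diagonal]
    exact Finset.sum_congr rfl fun a _ => by ring
  have hee : ∀ i j : Fin r0, e i * e j = θ / (μ (J i) * μ (J j)) := by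
    intro i j
    rw [he]
    simp only
    rw [div_mul_div_comm, Real.mul_self_sqrt hθpos.le]
  have hMidEntry : ∀ i j : Fin r0, Mid i j
      = (if i = j then (1:ℝ) else 0) + ∑ k, c k * Ak k (φ (J i)) (φ (J j)) := by
    intro i j
    rw [hMid, Matrix.add_apply, Matrix.one_apply, hBentry G i j]
    congr 1
    rw [← hGform]
  have hCdecomp : C = 1 + ∑ s ∈ Finset.range t, Em (s+1) * Mid * Em (s+1) := by
    ext i j
    rw [hC i j, Matrix.add_apply, Matrix.sum_apply]
    have hentry : ∀ s : ℕ, (Em (s+1) * Mid * Em (s+1)) i j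
        = (θ / (μ (J i) * μ (J j)))^(s+1)
            * ((if i = j then (1:ℝ) else 0) + ∑ k, c k * Ak k (φ (J i)) (φ (J j))) := by
      intro s
      rw [hEm]
      simp only
      rw [Matrix.mul_diagonal, Matrix.diagonal_mul, hMidEntry i j, ← hee i j]
      ring
    rw [Finset.sum_congr rfl fun s _ => hentry s]
    have hMt : (∑ a, π a * φ (J i) a * (Qc *ᵥ (φ (J j))) a)
        = ∑ k, c k * Ak k (φ (J i)) (φ (J j)) := hMterm _ _
    rw [hMt]
    rw [Finset.sum_range_succ' (fun s => (θ / (μ (J i) * μ (J j)))^s) t, pow_zero,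
      Matrix.one_apply]
    have hτsum : θ / (μ (J i) * μ (J j)) * (∑ s ∈ Finset.range t, (θ/(μ (J i) * μ (J j)))^s)
        = ∑ s ∈ Finset.range t, (θ/(μ (J i)*μ (J j)))^(s+1) := by
      rw [Finset.mul_sum]
      exact Finset.sum_congr rfl fun s _ => (pow_succ' _ _).symm
    rw [hτsum, add_mul, one_mul, Finset.sum_mul, Finset.sum_mul,
      Finset.sum_congr rfl (fun s (_ : s ∈ Finset.range t) =>
        mul_add ((θ/(μ (J i)*μ (J j)))^(s+1)) (if i = j then (1:ℝ) else 0)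
          (∑ k, c k * Ak k (φ (J i)) (φ (J j)))),
      Finset.sum_add_distrib]
    ring
  -- dot products against sums of matrices
  have hdotsum : ∀ (A : ℕ → Matrix (Fin r0) (Fin r0) ℝ) (x : Fin r0 → ℝ),
      x ⬝ᵥ ((∑ s ∈ Finset.range t, A s) *ᵥ x) = ∑ s ∈ Finset.range t, x ⬝ᵥ (A s *ᵥ x) := by
    intro A x
    simp only [dotProduct, Matrix.mulVec, dotProduct, Matrix.sum_apply]
    simp only [Finset.mul_sum, Finset.sum_mul]
    calc ∑ i, ∑ j, ∑ s ∈ Finset.range t, x i * (A s i j * x j)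
        = ∑ i, ∑ s ∈ Finset.range t, ∑ j, x i * (A s i j * x j) :=
          Finset.sum_congr rfl fun i _ => Finset.sum_comm
      _ = ∑ s ∈ Finset.range t, ∑ i, ∑ j, x i * (A s i j * x j) := Finset.sum_comm
  have hsub : C - 1 = ∑ s ∈ Finset.range t, Em (s+1) * Mid * Em (s+1) := by
    rw [hCdecomp, add_sub_cancel_left]
  have hEmx : ∀ (s : ℕ) (x : Fin r0 → ℝ), Em s *ᵥ x = fun i => (e i)^s * x i := by
    intro s x
    funext i
    rw [hEm]
    simp [Matrix.mulVec_diagonal]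
  have hform_s : ∀ (s : ℕ) (x : Fin r0 → ℝ),
      x ⬝ᵥ ((Em s * Mid * Em s) *ᵥ x) = (Em s *ᵥ x) ⬝ᵥ (Mid *ᵥ (Em s *ᵥ x)) := by
    intro s x
    have hvm : x ᵥ* Em s = Em s *ᵥ x := by
      rw [hEm]
      funext i
      simp [Matrix.vecMul_diagonal, Matrix.mulVec_diagonal, mul_comm]
    rw [Matrix.mul_assoc, ← Matrix.mulVec_mulVec, Matrix.dotProduct_mulVec x (Em s), hvm,
      ← Matrix.mulVec_mulVec]
  -- symmetry of C
  have hMs : ∀ i j : Fin r0, (∑ a, π a * φ (J i) a * (Qc *ᵥ φ (J j)) a)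
      = (∑ a, π a * φ (J j) a * (Qc *ᵥ φ (J i)) a) := by
    intro i j
    rw [hMterm, hMterm]
    exact Finset.sum_congr rfl fun k _ => by rw [hAk_symm]
  have hCsymm : ∀ i j, C i j = C j i := by
    intro i j
    rw [hC i j, hC j i, hMs i j, mul_comm (μ (J i)) (μ (J j)),
      show ((if i = j then (1:ℝ) else 0) = if j = i then (1:ℝ) else 0) from by simp [eq_comm]]
  have hCH : (C - 1).IsHermitian := by
    ext i j
    simp only [Matrix.conjTranspose_apply, Matrix.sub_apply, Matrix.one_apply, star_trivial]
    rw [hCsymm j i]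
    congr 1
    simp [eq_comm]
  -- tau facts
  have hτ_pos : ∀ i : Fin r0, (0:ℝ) ≤ θ / (μ (J i))^2 :=
    fun i => div_nonneg hθpos.le (sq_nonneg _)
  set l : Fin r0 := ⟨r0 - 1, by omega⟩ with hl
  set τm : ℝ := θ / (μ (J l))^2 with hτm
  have hKSl := hKS (J l) (by rw [hJ]; simp [Fin.castLE])
  have hμl2 : (0:ℝ) < (μ (J l))^2 :=
    lt_of_le_of_ne (sq_nonneg _) (Ne.symm (pow_ne_zero 2 hKSl.1))
  have hτm_pos : 0 < τm := div_pos hθpos hμl2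
  have hτm_lt1 : τm < 1 := hKSl.2
  have h1τ : 0 < 1 - τm := by linarith
  have hτ_le_all : ∀ i : Fin r0, θ / (μ (J i))^2 ≤ τm := by
    intro i
    have hle : J i ≤ J l := by
      rw [hJ]
      simp only [Fin.le_def, Fin.coe_castLE, Fin.val_mk]
      have := i.isLt
      show (i : ℕ) ≤ r0 - 1
      omega
    have habs := hord (J i) (J l) hle
    have hsq : (μ (J l))^2 ≤ (μ (J i))^2 := by
      have h2 := pow_le_pow_left₀ (abs_nonneg (μ (J l))) habs 2
      rwa [sq_abs, sq_abs] at h2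
    rw [hτm]
    exact div_le_div_of_nonneg_left hθpos.le hμl2 hsq
  have hgeom : ∑ s ∈ Finset.range t, τm^(s+1) ≤ τm / (1 - τm) := by
    have hS : (∑ s ∈ Finset.range t, τm^s) * (1 - τm) = 1 - τm^t := by
      have h := geom_sum_mul τm t
      linear_combination -h
    have hS_le : (∑ s ∈ Finset.range t, τm^s) ≤ 1 / (1 - τm) := by
      rw [le_div_iff₀ h1τ]
      have hpw : (0:ℝ) ≤ τm^t := pow_nonneg hτm_pos.le t
      linarith
    calc ∑ s ∈ Finset.range t, τm^(s+1) = τm * ∑ s ∈ Finset.range t, τm^s := by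
          rw [Finset.mul_sum]
          exact Finset.sum_congr rfl fun s _ => pow_succ' _ _
      _ ≤ τm * (1/(1-τm)) := mul_le_mul_of_nonneg_left hS_le hτm_pos.le
      _ = τm / (1-τm) := by ring
  -- conclusion
  constructor
  · refine Matrix.PosSemidef.of_dotProduct_mulVec_nonneg hCH fun x => ?_
    simp only [star_trivial]
    rw [hsub, hdotsum (fun s => Em (s+1) * Mid * Em (s+1)) x]
    exact Finset.sum_nonneg fun s _ => by rw [hform_s]; exact hMidform_lb _
  · set QM : ℝ := ((Finset.univ.sup q : ℕ) : ℝ) with hQMdef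
    have hQMnn : (0:ℝ) ≤ QM - 1 := by linarith [hQM1]
    have hherm : ((1 + τm * (QM - 1) / (1 - τm)) • (1 : Matrix (Fin r0) (Fin r0) ℝ)
        - C).IsHermitian := by
      ext i j
      simp only [Matrix.conjTranspose_apply, Matrix.sub_apply, Matrix.smul_apply,
        Matrix.one_apply, star_trivial, smul_eq_mul]
      rw [hCsymm j i]
      congr 2
      simp [eq_comm]
    refine Matrix.PosSemidef.of_dotProduct_mulVec_nonneg hherm fun x => ?_
    simp only [star_trivial]
    have hxx : (0:ℝ) ≤ x ⬝ᵥ x := Finset.sum_nonneg fun i _ => mul_self_nonneg (x i)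
    have h1 : x ⬝ᵥ (((1 + τm * (QM - 1) / (1 - τm)) • (1 : Matrix (Fin r0) (Fin r0) ℝ)
        - C) *ᵥ x) = (1 + τm * (QM - 1) / (1 - τm)) * (x ⬝ᵥ x) - x ⬝ᵥ (C *ᵥ x) := by
      rw [Matrix.sub_mulVec, dotProduct_sub, Matrix.smul_mulVec, Matrix.one_mulVec,
        dotProduct_smul, smul_eq_mul]
    have h2 : x ⬝ᵥ (C *ᵥ x) = x ⬝ᵥ x
        + ∑ s ∈ Finset.range t, x ⬝ᵥ ((Em (s+1) * Mid * Em (s+1)) *ᵥ x) := by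
      rw [hCdecomp, Matrix.add_mulVec, dotProduct_add, Matrix.one_mulVec, hdotsum]
    have h3 : ∀ s : ℕ, x ⬝ᵥ ((Em (s+1) * Mid * Em (s+1)) *ᵥ x)
        ≤ (QM - 1) * (τm^(s+1) * (x ⬝ᵥ x)) := by
      intro s
      rw [hform_s]
      refine le_trans (hMidform_ub _) (mul_le_mul_of_nonneg_left ?_ hQMnn)
      rw [hEmx]
      simp only [dotProduct]
      rw [Finset.mul_sum]
      refine Finset.sum_le_sum fun i _ => ?_
      have h4 : ((e i)^(s+1) * x i) * ((e i)^(s+1) * x i)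
          = ((e i)^2)^(s+1) * (x i * x i) := by ring
      have h5 : (e i)^2 = θ / (μ (J i))^2 := by
        rw [he]
        simp only
        rw [div_pow, Real.sq_sqrt hθpos.le]
      rw [h4, h5]
      have h6 : (θ/(μ (J i))^2)^(s+1) ≤ τm^(s+1) :=
        pow_le_pow_left₀ (hτ_pos i) (hτ_le_all i) (s+1)
      exact mul_le_mul_of_nonneg_right h6 (mul_self_nonneg (x i))
    have hsum_le : ∑ s ∈ Finset.range t, x ⬝ᵥ ((Em (s+1) * Mid * Em (s+1)) *ᵥ x)
        ≤ (QM - 1) * ((τm / (1 - τm)) * (x ⬝ᵥ x)) := by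
      calc ∑ s ∈ Finset.range t, x ⬝ᵥ ((Em (s+1) * Mid * Em (s+1)) *ᵥ x)
          ≤ ∑ s ∈ Finset.range t, (QM - 1) * (τm^(s+1) * (x ⬝ᵥ x)) :=
            Finset.sum_le_sum fun s _ => h3 s
        _ = (QM - 1) * ((∑ s ∈ Finset.range t, τm^(s+1)) * (x ⬝ᵥ x)) := by
            rw [← Finset.mul_sum, ← Finset.sum_mul]
        _ ≤ (QM - 1) * ((τm / (1 - τm)) * (x ⬝ᵥ x)) :=
            mul_le_mul_of_nonneg_left (mul_le_mul_of_nonneg_right hgeom hxx) hQMnn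
    rw [h1, h2]
    have hexp : (1 + τm * (QM - 1) / (1 - τm)) * (x ⬝ᵥ x)
        = x ⬝ᵥ x + (QM - 1) * ((τm / (1 - τm)) * (x ⬝ᵥ x)) := by ring
    rw [hexp]
    linarith
end
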